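/- arXiv:1810.07375 — 12 statements merged into one kernel-verified Lean document; each statement's English description precedes it below -/
import Mathlib

section
/- Let E be a commutative ring, C a small E-linear monoidal category in which every object admits a left dual, and σ : C → C an E-linear strong monoidal endofunctor. Then there exist an E-linear category T and an E-linear σ-twisted trace functor tr : C → T such that for every E-linear category D, precomposition with tr induces an equivalence of categories between the category of E-linear functors T → D (with natural transformations as morphisms) and the category of E-linear σ-twisted trace functors C → D (whose morphisms are natural transformations η : F → F' satisfying η_{Y⊗σX} ∘ α_{X,Y} = α'_{X,Y} ∘ η_{X⊗Y} for all X, Y). Moreover, if C is additive then T can be chosen to be additive. -/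
open CategoryTheory MonoidalCategory CategoryTheory.Limits

universe w u u₂ v₂

/-- A `σ`-twisted trace functor: a functor `F : C ⥤ D` together with isomorphisms
`α X Y : F (X ⊗ Y) ≅ F (Y ⊗ σ X)`, natural in both variables, satisfying the
rotation coherence condition. -/
structure TwistedTraceFunctor {C : Type*} [Category C] [MonoidalCategory C]
    (σ : C ⥤ C) [σ.Monoidal] (D : Type*) [Category D] where
  F : C ⥤ D
  α : ∀ X Y : C, F.obj (X ⊗ Y) ≅ F.obj (Y ⊗ σ.obj X)
  naturality : ∀ {X X' Y Y' : C} (f : X ⟶ X') (g : Y ⟶ Y'),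
      F.map (f ⊗ₘ g) ≫ (α X' Y').hom = (α X Y).hom ≫ F.map (g ⊗ₘ σ.map f)
  coherence : ∀ X Y Z : C,
      (α (X ⊗ Y) Z).hom ≫ F.map (Z ◁ (Functor.Monoidal.μIso σ X Y).inv) ≫
          F.map (α_ Z (σ.obj X) (σ.obj Y)).inv
        = F.map (α_ X Y Z).hom ≫ (α X (Y ⊗ Z)).hom ≫
            F.map (α_ Y Z (σ.obj X)).hom ≫ (α Y (Z ⊗ σ.obj X)).hom

section

variable {C : Type*} [Category C] [MonoidalCategory C] {σ : C ⥤ C} [σ.Monoidal]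
  {D : Type*} [Category D]

/-- A morphism of `σ`-twisted trace functors: a natural transformation `η : F ⟶ F'`
satisfying `η_{Y ⊗ σX} ∘ α_{X,Y} = α'_{X,Y} ∘ η_{X ⊗ Y}`. -/
@[ext]
structure TraceHom (P Q : TwistedTraceFunctor σ D) where
  η : P.F ⟶ Q.F
  compat : ∀ X Y : C,
    η.app (X ⊗ Y) ≫ (Q.α X Y).hom = (P.α X Y).hom ≫ η.app (Y ⊗ σ.obj X)

/-- The category of `σ`-twisted trace functors `C → D`. -/
instance : Category (TwistedTraceFunctor σ D) where
  Hom := TraceHom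
  id P := ⟨𝟙 P.F, fun X Y => by simp⟩
  comp f g := ⟨f.η ≫ g.η, fun X Y => by
    simp only [NatTrans.comp_app, Category.assoc]
    rw [g.compat, ← Category.assoc, f.compat, Category.assoc]⟩
  id_comp f := TraceHom.ext (by simp)
  comp_id f := TraceHom.ext (by simp)
  assoc f g h := TraceHom.ext (by simp)

/-- Composition of a twisted trace functor with a plain functor. -/
def TwistedTraceFunctor.comp {T : Type*} [Category T] (P : TwistedTraceFunctor σ T)
    (G : T ⥤ D) : TwistedTraceFunctor σ D where
  F := P.F ⋙ G
  α X Y := G.mapIso (P.α X Y)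
  naturality {X X' Y Y'} f g := by
    dsimp
    rw [← G.map_comp, ← G.map_comp, P.naturality]
  coherence X Y Z := by
    simp only [Functor.comp_map, Functor.mapIso_hom, ← Functor.map_comp]
    congr 1
    rw [Functor.map_comp, P.coherence]

end

/-- An `E`-linear functor: an additive functor which is `E`-linear on hom modules. -/
def IsLinearFunctor (E : Type*) [Semiring E] {C D : Type*} [Category C] [Category D]
    [Preadditive C] [Preadditive D] [CategoryTheory.Linear E C]
    [CategoryTheory.Linear E D] (F : C ⥤ D) : Prop :=
  ∃ h : F.Additive, @Functor.Linear E _ C D _ _ _ _ _ _ F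

/-- A bundled `E`-linear category. -/
structure LinearCatBundle (E : Type w) [Semiring E] : Type (max w (u + 1)) where
  carrier : Type u
  [cat : Category.{u} carrier]
  [preadd : Preadditive carrier]
  [lin : CategoryTheory.Linear E carrier]

attribute [instance] LinearCatBundle.cat LinearCatBundle.preadd LinearCatBundle.lin

section

variable (E : Type w) [Semiring E]
  {C : Type u} [SmallCategory C] [MonoidalCategory C] (σ : C ⥤ C) [σ.Monoidal]
  [Preadditive C] [CategoryTheory.Linear E C]
  {T : Type*} [Category T] [Preadditive T] [CategoryTheory.Linear E T]
  (D : Type u₂) [Category.{v₂} D] [Preadditive D] [CategoryTheory.Linear E D]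

/-- Precomposition with a twisted trace functor `tr : C → T`, as a functor from
the category of `E`-linear functors `T ⥤ D` to the category of `E`-linear
`σ`-twisted trace functors `C → D`. -/
def precompFunctor (tr : TwistedTraceFunctor σ T) (hadd : tr.F.Additive)
    (hlin : @Functor.Linear E _ C T _ _ _ _ _ _ tr.F) :
    ObjectProperty.FullSubcategory (fun G : T ⥤ D => IsLinearFunctor E G) ⥤
      ObjectProperty.FullSubcategory (fun Q : TwistedTraceFunctor σ D => IsLinearFunctor E Q.F) where
  obj G := ⟨tr.comp G.obj, by
    obtain ⟨ha, hl⟩ := G.property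
    haveI := hadd; haveI := hlin; haveI := ha; haveI := hl
    exact ⟨(inferInstance : (tr.F ⋙ G.obj).Additive),
      (inferInstance : (tr.F ⋙ G.obj).Linear E)⟩⟩
  map {G G'} η :=
    ⟨{ η := Functor.whiskerLeft tr.F η.hom
       compat := fun X Y => (η.hom.naturality (tr.α X Y).hom).symm }⟩
  map_id G := rfl
  map_comp f g := rfl

end





namespace TwTrAux
set_option linter.unusedSectionVars false

variable {C : Type u} [SmallCategory C] [MonoidalCategory C]

/-- Generating arrows for the twisted trace category. -/
inductive Gen (σ : C ⥤ C) : C → C → Type u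
  | of : ∀ {X Y : C}, (X ⟶ Y) → Gen σ X Y
  | ar : ∀ (A B : C), Gen σ (A ⊗ B) (B ⊗ σ.obj A)
  | arinv : ∀ (A B : C), Gen σ (B ⊗ σ.obj A) (A ⊗ B)

/-- Words (paths) of generating arrows. -/
inductive Word (σ : C ⥤ C) : C → C → Type u
  | nil : ∀ {X}, Word σ X X
  | cons : ∀ {X Y Z}, Gen σ X Y → Word σ Y Z → Word σ X Z

namespace Word

variable {σ : C ⥤ C}

/-- Concatenation of words. -/
def comp : ∀ {X Y Z : C}, Word σ X Y → Word σ Y Z → Word σ X Z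
  | _, _, _, nil, w => w
  | _, _, _, cons g w', w => cons g (w'.comp w)

@[simp] lemma nil_comp {X Y : C} (w : Word σ X Y) : (nil).comp w = w := rfl

@[simp] lemma cons_comp {X Y Z W : C} (g : Gen σ X Y) (w : Word σ Y Z) (v : Word σ Z W) :
    (cons g w).comp v = cons g (w.comp v) := rfl

@[simp] lemma comp_nil : ∀ {X Y : C} (w : Word σ X Y), w.comp nil = w
  | _, _, nil => rfl
  | _, _, cons g w => by rw [cons_comp, comp_nil]

lemma comp_assoc : ∀ {X Y Z W : C} (u : Word σ X Y) (v : Word σ Y Z) (t : Word σ Z W),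
    (u.comp v).comp t = u.comp (v.comp t)
  | _, _, _, _, nil, v, t => rfl
  | _, _, _, _, cons g u, v, t => by simp [comp_assoc u v t]

end Word

variable (σ : C ⥤ C) (E : Type w) [CommRing E]

/-- The free `E`-module on words from `X` to `Y`. -/
abbrev FHom (X Y : C) : Type max u w := Word σ X Y →₀ E

variable {σ E}

/-- The basis element corresponding to a word. -/
noncomputable def wd {X Y : C} (p : Word σ X Y) : FHom σ E X Y := Finsupp.single p 1

/-- The basis element corresponding to a generator. -/
noncomputable def gw {X Y : C} (g : Gen σ X Y) : FHom σ E X Y := wd (Word.cons g Word.nil)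

/-- The identity element. -/
noncomputable def fid (X : C) : FHom σ E X X := wd Word.nil

lemma lift_single {M : Type*} [AddCommMonoid M] [Module E M] {X : Type*} (f : X → M)
    (a : X) (e : E) : Finsupp.lift M E X f (Finsupp.single a e) = e • f a := by
  simp [Finsupp.lift_apply, Finsupp.sum_single_index]

/-- Composition, as a bilinear map. -/
noncomputable def fcomp {X Y Z : C} : FHom σ E X Y →ₗ[E] FHom σ E Y Z →ₗ[E] FHom σ E X Z :=
  Finsupp.lift _ E _ (fun p => Finsupp.lift _ E _ (fun q => Finsupp.single (p.comp q) (1 : E)))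

lemma fcomp_single {X Y Z : C} (p : Word σ X Y) (q : Word σ Y Z) (a b : E) :
    fcomp (Finsupp.single p a) (Finsupp.single q b)
      = Finsupp.single (p.comp q) (a * b) := by
  rw [fcomp, lift_single, LinearMap.smul_apply, lift_single]
  rw [smul_smul, Finsupp.smul_single, smul_eq_mul, mul_one]

lemma fcomp_wd {X Y Z : C} (p : Word σ X Y) (q : Word σ Y Z) :
    fcomp (wd p) (wd q) = (wd (p.comp q) : FHom σ E X Z) := by
  rw [wd, wd, fcomp_single, one_mul, wd]

lemma fcomp_assoc {X Y Z W : C} (f : FHom σ E X Y) (g : FHom σ E Y Z) (h : FHom σ E Z W) :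
    fcomp (fcomp f g) h = fcomp f (fcomp g h) := by
  induction f using Finsupp.induction_linear with
  | zero => simp
  | add f₁ f₂ h₁ h₂ => simp [map_add, LinearMap.add_apply, h₁, h₂]
  | single p a =>
    induction g using Finsupp.induction_linear with
    | zero => simp
    | add g₁ g₂ h₁ h₂ => simp [map_add, LinearMap.add_apply, h₁, h₂]
    | single q b =>
      induction h using Finsupp.induction_linear with
      | zero => simp
      | add h₁ h₂ hh₁ hh₂ => simp [map_add, hh₁, hh₂]
      | single r c =>
        rw [fcomp_single, fcomp_single, fcomp_single, fcomp_single, Word.comp_assoc, mul_assoc]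

@[simp] lemma fid_comp {X Y : C} (f : FHom σ E X Y) : fcomp (fid X) f = f := by
  induction f using Finsupp.induction_linear with
  | zero => simp
  | add f₁ f₂ h₁ h₂ => simp [h₁, h₂]
  | single p a => rw [fid, wd, fcomp_single, one_mul, Word.nil_comp]

@[simp] lemma comp_fid {X Y : C} (f : FHom σ E X Y) : fcomp f (fid Y) = f := by
  induction f using Finsupp.induction_linear with
  | zero => simp
  | add f₁ f₂ h₁ h₂ => simp [h₁, h₂]
  | single p a => rw [fid, wd, fcomp_single, mul_one, Word.comp_nil]


section Rel

variable {C : Type u} [SmallCategory C] [MonoidalCategory C]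
variable {σ : C ⥤ C} [σ.Monoidal] {E : Type w} [CommRing E]
variable [Preadditive C] [CategoryTheory.Linear E C]

/-- The basic relations defining the twisted trace category. -/
inductive BR : ∀ {X Y : C}, FHom σ E X Y → Prop
  | comp {X Y Z : C} (f : X ⟶ Y) (g : Y ⟶ Z) :
      BR (gw (Gen.of (f ≫ g)) - fcomp (gw (Gen.of f)) (gw (Gen.of g)))
  | id (X : C) : BR (gw (Gen.of (𝟙 X)) - fid X)
  | add {X Y : C} (f g : X ⟶ Y) :
      BR (gw (Gen.of (f + g)) - gw (Gen.of f) - gw (Gen.of g))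
  | smul {X Y : C} (e : E) (f : X ⟶ Y) :
      BR (gw (Gen.of (e • f)) - e • gw (Gen.of f))
  | cancel (A B : C) :
      BR (fcomp (gw (Gen.ar A B)) (gw (Gen.arinv A B)) - fid (tensorObj A B))
  | cancel' (A B : C) :
      BR (fcomp (gw (Gen.arinv A B)) (gw (Gen.ar A B)) - fid (tensorObj B (σ.obj A)))
  | nat {X X' Y Y' : C} (f : X ⟶ X') (g : Y ⟶ Y') :
      BR (fcomp (gw (Gen.of (tensorHom f g))) (gw (Gen.ar X' Y'))
        - fcomp (gw (Gen.ar X Y)) (gw (Gen.of (tensorHom g (σ.map f)))))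
  | coh (X Y Z : C) :
      BR (fcomp (fcomp (gw (Gen.ar (X ⊗ Y) Z))
            (gw (Gen.of (Z ◁ (Functor.Monoidal.μIso σ X Y).inv))))
            (gw (Gen.of (α_ Z (σ.obj X) (σ.obj Y)).inv))
        - fcomp (fcomp (fcomp (gw (Gen.of (α_ X Y Z).hom)) (gw (Gen.ar X (Y ⊗ Z))))
            (gw (Gen.of (α_ Y Z (σ.obj X)).hom))) (gw (Gen.ar Y (Z ⊗ σ.obj X))))

variable (σ E)

/-- The two-sided ideal generated by the basic relations. -/
noncomputable def S (X Y : C) : Submodule E (FHom σ E X Y) :=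
  Submodule.span E {x | ∃ (A B : C) (h : FHom σ E X A) (r : FHom σ E A B)
    (k : FHom σ E B Y), BR r ∧ x = fcomp (fcomp h r) k}

variable {σ E}

lemma mem_S_of_BR {X Y : C} {r : FHom σ E X Y} (hr : BR r) : r ∈ S σ E X Y :=
  Submodule.subset_span ⟨X, Y, fid X, r, fid Y, hr, by simp⟩

lemma fcomp_mem_S_left {X Y Z : C} (f : FHom σ E X Y) {s : FHom σ E Y Z}
    (hs : s ∈ S σ E Y Z) : fcomp f s ∈ S σ E X Z := by
  induction hs using Submodule.span_induction with
  | mem x hx =>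
    obtain ⟨A, B, h, r, k, hr, rfl⟩ := hx
    exact Submodule.subset_span ⟨A, B, fcomp f h, r, k, hr, by rw [← fcomp_assoc, ← fcomp_assoc]⟩
  | zero => simp
  | add x y _ _ hx hy => rw [map_add]; exact Submodule.add_mem _ hx hy
  | smul e x _ hx => rw [map_smul]; exact Submodule.smul_mem _ _ hx

lemma fcomp_mem_S_right {X Y Z : C} {s : FHom σ E X Y} (hs : s ∈ S σ E X Y)
    (k : FHom σ E Y Z) : fcomp s k ∈ S σ E X Z := by
  induction hs using Submodule.span_induction with
  | mem x hx =>
    obtain ⟨A, B, h, r, k', hr, rfl⟩ := hx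
    exact Submodule.subset_span ⟨A, B, h, r, fcomp k' k, hr, by
      rw [fcomp_assoc (fcomp h r) k' k]⟩
  | zero => simp [LinearMap.map_zero₂]
  | add x y _ _ hx hy =>
    rw [LinearMap.map_add₂]; exact Submodule.add_mem _ hx hy
  | smul e x _ hx =>
    rw [LinearMap.map_smul₂]; exact Submodule.smul_mem _ _ hx

variable (σ E)

/-- Hom modules of the twisted trace category: quotients of the free modules. -/
abbrev THom (X Y : C) : Type max u w := FHom σ E X Y ⧸ S σ E X Y

variable {σ E}

/-- Class of an element. -/
noncomputable abbrev tmk {X Y : C} (f : FHom σ E X Y) : THom σ E X Y :=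
  Submodule.Quotient.mk f

/-- Descended composition, in the second variable. -/
noncomputable def tcomp₁ {X Y Z : C} (f : FHom σ E X Y) :
    THom σ E Y Z →ₗ[E] THom σ E X Z :=
  Submodule.liftQ _ ((S σ E X Z).mkQ.comp (fcomp f)) (by
    intro s hs
    simp only [LinearMap.mem_ker, LinearMap.comp_apply, Submodule.mkQ_apply,
      Submodule.Quotient.mk_eq_zero]
    exact fcomp_mem_S_left f hs)

@[simp] lemma tcomp₁_mk {X Y Z : C} (f : FHom σ E X Y) (g : FHom σ E Y Z) :
    tcomp₁ f (tmk g) = tmk (fcomp f g) := rfl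

/-- Descended composition as a bilinear map on quotients. -/
noncomputable def tcomp {X Y Z : C} :
    THom σ E X Y →ₗ[E] THom σ E Y Z →ₗ[E] THom σ E X Z :=
  Submodule.liftQ _
    { toFun := fun f => tcomp₁ f
      map_add' := by
        intro f g
        apply Submodule.linearMap_qext
        ext h
        simp [tcomp₁, LinearMap.map_add₂]
      map_smul' := by
        intro e f
        apply Submodule.linearMap_qext
        ext h
        simp [tcomp₁, LinearMap.map_smul₂] }
    (by
      intro s hs
      simp only [LinearMap.mem_ker]
      apply Submodule.linearMap_qext
      ext h
      simp only [LinearMap.comp_apply, LinearMap.coe_mk, AddHom.coe_mk, Submodule.mkQ_apply,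
        tcomp₁_mk, LinearMap.zero_comp, LinearMap.zero_apply,
        Submodule.Quotient.mk_eq_zero]
      exact fcomp_mem_S_right hs _)

@[simp] lemma tcomp_mk {X Y Z : C} (f : FHom σ E X Y) (g : FHom σ E Y Z) :
    tcomp (tmk f) (tmk g) = tmk (fcomp f g) := rfl

end Rel


section Cat

variable {C : Type u} [SmallCategory C] [MonoidalCategory C]
variable (σ : C ⥤ C) [σ.Monoidal] (E : Type w) [CommRing E]
variable [Preadditive C] [CategoryTheory.Linear E C]

/-- The (large-hom) twisted trace category: a type synonym for `C`. -/
def BigCat (_σ : C ⥤ C) (_E : Type w) : Type u := C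

/-- Interpret an object of `C` in `BigCat`. -/
def toBig (X : C) : BigCat σ E := X
/-- Interpret an object of `BigCat` in `C`. -/
def fromBig (X : BigCat σ E) : C := X

noncomputable instance : Category.{max u w} (BigCat σ E) where
  Hom X Y := THom σ E (fromBig σ E X) (fromBig σ E Y)
  id X := tmk (fid (fromBig σ E X))
  comp f g := tcomp f g
  id_comp f := by
    obtain ⟨f, rfl⟩ := Submodule.Quotient.mk_surjective _ f
    show tcomp (tmk _) (tmk f) = tmk f
    rw [tcomp_mk, fid_comp]
  comp_id f := by
    obtain ⟨f, rfl⟩ := Submodule.Quotient.mk_surjective _ f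
    show tcomp (tmk f) (tmk _) = tmk f
    rw [tcomp_mk, comp_fid]
  assoc f g h := by
    obtain ⟨f, rfl⟩ := Submodule.Quotient.mk_surjective _ f
    obtain ⟨g, rfl⟩ := Submodule.Quotient.mk_surjective _ g
    obtain ⟨h, rfl⟩ := Submodule.Quotient.mk_surjective _ h
    show tcomp (tcomp (tmk f) (tmk g)) (tmk h) = tcomp (tmk f) (tcomp (tmk g) (tmk h))
    rw [tcomp_mk, tcomp_mk, tcomp_mk, tcomp_mk, fcomp_assoc]

lemma big_comp {X Y Z : C} (f : FHom σ E X Y) (g : FHom σ E Y Z) :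
    CategoryStruct.comp (X := toBig σ E X) (Y := toBig σ E Y) (Z := toBig σ E Z)
      (tmk f) (tmk g) = tmk (fcomp f g) := rfl

lemma big_id (X : C) :
    (𝟙 (toBig σ E X)) = (tmk (fid X) : toBig σ E X ⟶ toBig σ E X) := rfl

noncomputable instance (X Y : BigCat σ E) : AddCommGroup (X ⟶ Y) :=
  inferInstanceAs (AddCommGroup (THom σ E (fromBig σ E X) (fromBig σ E Y)))

noncomputable instance (X Y : BigCat σ E) : Module E (X ⟶ Y) :=
  inferInstanceAs (Module E (THom σ E (fromBig σ E X) (fromBig σ E Y)))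

noncomputable instance : Preadditive (BigCat σ E) where
  homGroup X Y := inferInstance
  add_comp P Q R f f' g := by
    show tcomp (f + f') g = tcomp f g + tcomp f' g
    rw [map_add, LinearMap.add_apply]
  comp_add P Q R f g g' := by
    show tcomp f (g + g') = tcomp f g + tcomp f g'
    rw [map_add]

noncomputable instance : CategoryTheory.Linear E (BigCat σ E) where
  homModule X Y := inferInstance
  smul_comp P Q R e f g := by
    show tcomp (e • f) g = e • tcomp f g
    rw [map_smul, LinearMap.smul_apply]
  comp_smul P Q R f e g := by
    show tcomp f (e • g) = e • tcomp f g
    rw [map_smul]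

lemma tmk_eq_tmk {X Y : C} {f g : FHom σ E X Y} (h : f - g ∈ S σ E X Y) :
    (tmk f : THom σ E X Y) = tmk g :=
  (Submodule.Quotient.eq _).2 h

lemma tmk_BR {X Y : C} {f g : FHom σ E X Y} (h : BR (f - g)) :
    (tmk f : THom σ E X Y) = tmk g :=
  tmk_eq_tmk σ E (mem_S_of_BR h)

/-- The canonical functor `C ⥤ BigCat σ E`. -/
noncomputable def ofC : C ⥤ BigCat σ E where
  obj X := toBig σ E X
  map {X Y} f := tmk (gw (Gen.of f))
  map_id X := by
    show tmk (gw (Gen.of (𝟙 X))) = tmk (fid X)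
    exact tmk_BR σ E (BR.id X)
  map_comp {X Y Z} f g := by
    show tmk (gw (Gen.of (f ≫ g))) = tcomp (tmk (gw (Gen.of f))) (tmk (gw (Gen.of g)))
    rw [tcomp_mk]
    exact tmk_BR σ E (BR.comp f g)

lemma ofC_map {X Y : C} (f : X ⟶ Y) : (ofC σ E).map f = tmk (gw (Gen.of f)) := rfl

instance : (ofC σ E).Additive where
  map_add {X Y f g} := by
    show tmk (gw (Gen.of (f + g))) = tmk (gw (Gen.of f)) + tmk (gw (Gen.of g))
    erw [← Submodule.Quotient.mk_add]
    apply tmk_eq_tmk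
    have := mem_S_of_BR (BR.add f g (σ := σ) (E := E))
    rwa [sub_sub] at this

instance : (ofC σ E).Linear E where
  map_smul {X Y f e} := by
    show tmk (gw (Gen.of (e • f))) = e • tmk (gw (Gen.of f))
    exact (tmk_BR σ E (BR.smul e f)).trans (Submodule.Quotient.mk_smul _ _ _)

/-- The universal twisted trace functor to `BigCat`. -/
noncomputable def trBig : TwistedTraceFunctor σ (BigCat σ E) where
  F := ofC σ E
  α X Y :=
    { hom := tmk (gw (Gen.ar X Y))
      inv := tmk (gw (Gen.arinv X Y))
      hom_inv_id := by
        show tcomp (tmk (gw (Gen.ar X Y))) (tmk (gw (Gen.arinv X Y)))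
          = tmk (fid (tensorObj X Y))
        rw [tcomp_mk]
        exact tmk_BR σ E (BR.cancel X Y)
      inv_hom_id := by
        show tcomp (tmk (gw (Gen.arinv X Y))) (tmk (gw (Gen.ar X Y)))
          = tmk (fid (tensorObj Y (σ.obj X)))
        rw [tcomp_mk]
        exact tmk_BR σ E (BR.cancel' X Y) }
  naturality {X X' Y Y'} f g := by
    show tcomp (tmk (gw (Gen.of (tensorHom f g)))) (tmk (gw (Gen.ar X' Y')))
      = tcomp (tmk (gw (Gen.ar X Y))) (tmk (gw (Gen.of (tensorHom g (σ.map f)))))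
    rw [tcomp_mk, tcomp_mk]
    exact tmk_BR σ E (BR.nat f g)
  coherence X Y Z := by
    show tcomp (tmk (gw (Gen.ar (tensorObj X Y) Z))) (tcomp
        (tmk (gw (Gen.of (Z ◁ (Functor.Monoidal.μIso σ X Y).inv))))
        (tmk (gw (Gen.of (α_ Z (σ.obj X) (σ.obj Y)).inv))))
      = tcomp (tmk (gw (Gen.of (α_ X Y Z).hom))) (tcomp (tmk (gw (Gen.ar X (tensorObj Y Z))))
          (tcomp (tmk (gw (Gen.of (α_ Y Z (σ.obj X)).hom)))
            (tmk (gw (Gen.ar Y (tensorObj Z (σ.obj X)))))))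
    simp only [tcomp_mk]
    simp only [← fcomp_assoc]
    exact tmk_BR σ E (BR.coh X Y Z)

end Cat


section Lift

variable {C : Type u} [SmallCategory C] [MonoidalCategory C]
variable {σ : C ⥤ C} [σ.Monoidal] {E : Type w} [CommRing E]
variable [Preadditive C] [CategoryTheory.Linear E C]
variable {D : Type u₂} [Category.{v₂} D] [Preadditive D] [CategoryTheory.Linear E D]
variable (P : TwistedTraceFunctor σ D)

/-- Evaluation of a generator in a twisted trace functor. -/
noncomputable def evalG : ∀ {X Y : C}, Gen σ X Y → (P.F.obj X ⟶ P.F.obj Y)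
  | _, _, Gen.of f => P.F.map f
  | _, _, Gen.ar A B => (P.α A B).hom
  | _, _, Gen.arinv A B => (P.α A B).inv

/-- Evaluation of a word in a twisted trace functor. -/
noncomputable def evalW : ∀ {X Y : C}, Word σ X Y → (P.F.obj X ⟶ P.F.obj Y)
  | _, _, Word.nil => 𝟙 _
  | _, _, Word.cons g w => evalG P g ≫ evalW w

@[simp] lemma evalW_nil {X : C} : evalW P (Word.nil : Word σ X X) = 𝟙 _ := rfl

@[simp] lemma evalW_cons {X Y Z : C} (g : Gen σ X Y) (w : Word σ Y Z) :
    evalW P (Word.cons g w) = evalG P g ≫ evalW P w := rfl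

lemma evalW_comp : ∀ {X Y Z : C} (p : Word σ X Y) (q : Word σ Y Z),
    evalW P (p.comp q) = evalW P p ≫ evalW P q
  | _, _, _, Word.nil, q => by simp
  | _, _, _, Word.cons g w, q => by simp [evalW_comp w q]

/-- Evaluation of a formal linear combination of words, as a linear map. -/
noncomputable def evalF {X Y : C} : FHom σ E X Y →ₗ[E] (P.F.obj X ⟶ P.F.obj Y) :=
  Finsupp.lift _ E _ (evalW P)

lemma evalF_single {X Y : C} (p : Word σ X Y) (e : E) :
    evalF P (Finsupp.single p e) = e • evalW P p := lift_single _ _ _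

@[simp] lemma evalF_wd {X Y : C} (p : Word σ X Y) :
    evalF P (wd p : FHom σ E X Y) = evalW P p := by rw [wd, evalF_single, one_smul]

@[simp] lemma evalF_gw {X Y : C} (g : Gen σ X Y) :
    evalF P (gw g : FHom σ E X Y) = evalG P g := by
  rw [gw, evalF_wd, evalW_cons, evalW_nil, Category.comp_id]

@[simp] lemma evalF_fid (X : C) : evalF P (fid X : FHom σ E X X) = 𝟙 _ := by
  rw [fid, evalF_wd, evalW_nil]

lemma evalF_fcomp {X Y Z : C} (f : FHom σ E X Y) (g : FHom σ E Y Z) :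
    evalF P (fcomp f g) = evalF P f ≫ evalF P g := by
  induction f using Finsupp.induction_linear with
  | zero => simp [LinearMap.map_zero₂]
  | add f₁ f₂ h₁ h₂ =>
    rw [LinearMap.map_add₂, map_add, h₁, h₂, map_add, Preadditive.add_comp]
  | single p a =>
    induction g using Finsupp.induction_linear with
    | zero => simp
    | add g₁ g₂ h₁ h₂ => rw [map_add, map_add, h₁, h₂, map_add, Preadditive.comp_add]
    | single q b =>
      rw [fcomp_single, evalF_single, evalF_single, evalF_single, evalW_comp,
        mul_smul, Linear.smul_comp, Linear.comp_smul]

lemma evalF_BR (hP : ∀ {X Y : C} (f g : X ⟶ Y), P.F.map (f + g) = P.F.map f + P.F.map g)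
    (hPs : ∀ {X Y : C} (e : E) (f : X ⟶ Y), P.F.map (e • f) = e • P.F.map f)
    {X Y : C} {r : FHom σ E X Y} (h : BR r) : evalF P r = 0 := by
  induction h with
  | comp f g =>
    rw [map_sub, evalF_fcomp]
    simp only [evalF_gw, evalG]
    simp [sub_eq_zero]
  | id X =>
    rw [map_sub]
    simp only [evalF_gw, evalF_fid, evalG]
    simp [sub_eq_zero]
  | add f g =>
    rw [map_sub, map_sub]
    simp only [evalF_gw, evalG]
    rw [hP, sub_sub, sub_eq_zero]
  | smul e f =>
    rw [map_sub, map_smul]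
    simp only [evalF_gw, evalG]
    rw [hPs, sub_eq_zero]
  | cancel A B =>
    rw [map_sub, evalF_fcomp]
    simp only [evalF_gw, evalF_fid, evalG]
    simp [sub_eq_zero]
  | cancel' A B =>
    rw [map_sub, evalF_fcomp]
    simp only [evalF_gw, evalF_fid, evalG]
    simp [sub_eq_zero]
  | nat f g =>
    rw [map_sub, evalF_fcomp, evalF_fcomp]
    simp only [evalF_gw, evalG]
    rw [sub_eq_zero]
    exact P.naturality f g
  | coh X Y Z =>
    rw [map_sub]
    simp only [evalF_fcomp, evalF_gw, evalG]
    rw [sub_eq_zero, Category.assoc, Category.assoc, Category.assoc]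
    exact P.coherence X Y Z

lemma evalF_S (hP : ∀ {X Y : C} (f g : X ⟶ Y), P.F.map (f + g) = P.F.map f + P.F.map g)
    (hPs : ∀ {X Y : C} (e : E) (f : X ⟶ Y), P.F.map (e • f) = e • P.F.map f)
    {X Y : C} {x : FHom σ E X Y} (hx : x ∈ S σ E X Y) : evalF P x = 0 := by
  induction hx using Submodule.span_induction with
  | mem x hx =>
    obtain ⟨A, B, h, r, k, hr, rfl⟩ := hx
    rw [evalF_fcomp, evalF_fcomp, evalF_BR P hP hPs hr]
    simp
  | zero => simp
  | add x y _ _ hx hy => rw [map_add, hx, hy, add_zero]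
  | smul e x _ hx => rw [map_smul, hx, smul_zero]

variable (hP : ∀ {X Y : C} (f g : X ⟶ Y), P.F.map (f + g) = P.F.map f + P.F.map g)
variable (hPs : ∀ {X Y : C} (e : E) (f : X ⟶ Y), P.F.map (e • f) = e • P.F.map f)

/-- The linear map on hom modules induced by a twisted trace functor. -/
noncomputable def liftHom {X Y : C} :
    THom σ E X Y →ₗ[E] (P.F.obj X ⟶ P.F.obj Y) :=
  Submodule.liftQ _ (evalF P) (fun _ hx => evalF_S P hP hPs hx)

@[simp] lemma liftHom_mk {X Y : C} (f : FHom σ E X Y) :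
    liftHom P hP hPs (tmk f) = evalF P f := rfl

/-- The induced functor `BigCat σ E ⥤ D`. -/
noncomputable def liftBig : BigCat σ E ⥤ D where
  obj X := P.F.obj (fromBig σ E X)
  map {X Y} f := liftHom P hP hPs f
  map_id X := by
    show liftHom P hP hPs (𝟙 X) = 𝟙 (P.F.obj (fromBig σ E X))
    rw [show (𝟙 X : X ⟶ X) = tmk (fid (fromBig σ E X)) from rfl, liftHom_mk, evalF_fid]
  map_comp {X Y Z} f g := by
    obtain ⟨f, rfl⟩ := Submodule.Quotient.mk_surjective _ f
    obtain ⟨g, rfl⟩ := Submodule.Quotient.mk_surjective _ g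
    show liftHom P hP hPs (tcomp (tmk f) (tmk g))
      = liftHom P hP hPs (tmk f) ≫ liftHom P hP hPs (tmk g)
    rw [tcomp_mk, liftHom_mk, liftHom_mk, liftHom_mk, evalF_fcomp]

instance liftBig_additive : (liftBig P hP hPs).Additive where
  map_add {X Y f g} := by
    obtain ⟨f, rfl⟩ := Submodule.Quotient.mk_surjective _ f
    obtain ⟨g, rfl⟩ := Submodule.Quotient.mk_surjective _ g
    show liftHom P hP hPs (tmk f + tmk g) = liftHom P hP hPs (tmk f) + liftHom P hP hPs (tmk g)
    rw [map_add]

instance liftBig_linear : (liftBig P hP hPs).Linear E where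
  map_smul {X Y f e} := by
    obtain ⟨f, rfl⟩ := Submodule.Quotient.mk_surjective _ f
    show liftHom P hP hPs (e • tmk f) = e • liftHom P hP hPs (tmk f)
    rw [map_smul]

lemma liftBig_ofC_map {X Y : C} (f : X ⟶ Y) :
    (liftBig P hP hPs).map ((ofC σ E).map f) = P.F.map f := by
  erw [ofC_map, show (liftBig P hP hPs).map (tmk (gw (Gen.of f))) =
    liftHom P hP hPs (tmk (gw (Gen.of f))) from rfl, liftHom_mk, evalF_gw]
  rfl

end Lift


section Small

variable {C : Type u} [SmallCategory C] [MonoidalCategory C]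
variable (σ : C ⥤ C) [σ.Monoidal] (E : Type w) [CommRing E]
variable [Preadditive C] [CategoryTheory.Linear E C]

lemma tmk_single_absorb {X Y : C} (a : Word σ X Y) (b : E) :
    (tmk (Finsupp.single a b) : THom σ E X Y)
      = tmk (wd (Word.cons (Gen.of (b • 𝟙 X)) a)) := by
  have h1 : (fcomp (gw (Gen.of (b • 𝟙 X))) (wd a) : FHom σ E X Y)
      = wd (Word.cons (Gen.of (b • 𝟙 X)) a) := by
    rw [show (gw (Gen.of (b • 𝟙 X)) : FHom σ E X X)
      = wd (Word.cons (Gen.of (b • 𝟙 X)) Word.nil) from rfl, fcomp_wd]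
    rfl
  have h2 : (tmk (gw (Gen.of (b • 𝟙 X))) : THom σ E X X) = b • tmk (fid X) := by
    rw [tmk_BR σ E (BR.smul b (𝟙 X)),
      show (tmk (b • gw (Gen.of (𝟙 X))) : THom σ E X X) = b • tmk (gw (Gen.of (𝟙 X)))
        from map_smul ((S σ E X X).mkQ) b _,
      tmk_BR σ E (BR.id X)]
  rw [← h1, ← tcomp_mk, h2, LinearMap.map_smul₂, tcomp_mk, fid_comp,
    show b • (tmk (wd a) : THom σ E X Y) = tmk (b • wd a)
      from (map_smul ((S σ E X Y).mkQ) b _).symm]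
  congr 1
  rw [wd, Finsupp.smul_single, smul_eq_mul, mul_one]

lemma thom_surjective (X Y : C) :
    Function.Surjective (fun m : Multiset (Word σ X Y) =>
      (m.map (fun w => (tmk (wd w) : THom σ E X Y))).sum) := by
  intro t
  obtain ⟨f, rfl⟩ := Submodule.Quotient.mk_surjective _ t
  induction f using Finsupp.induction with
  | zero => exact ⟨0, by simp⟩
  | single_add a b g _ _ ih =>
    obtain ⟨m, hm⟩ := ih
    refine ⟨(Word.cons (Gen.of (b • 𝟙 X)) a) ::ₘ m, ?_⟩
    dsimp only at hm ⊢
    rw [Multiset.map_cons, Multiset.sum_cons, hm]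
    show tmk (wd (Word.cons (Gen.of (b • 𝟙 X)) a)) + tmk g = tmk (Finsupp.single a b + g)
    rw [show (tmk (Finsupp.single a b + g) : THom σ E X Y) = tmk (Finsupp.single a b) + tmk g
      from map_add ((S σ E X Y).mkQ) _ _, tmk_single_absorb]

instance : LocallySmall.{u} (BigCat σ E) where
  hom_small X Y := small_of_surjective (thom_surjective σ E (fromBig σ E X) (fromBig σ E Y))

/-- The small twisted trace category. -/
noncomputable abbrev TCat : Type u := ShrinkHoms.{u} (BigCat σ E)

lemma shrink_comp {X Y Z : TCat σ E} (f : X ⟶ Y) (g : Y ⟶ Z) :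
    f ≫ g = equivShrink _ ((equivShrink _).symm f ≫ (equivShrink _).symm g) := rfl

lemma shrink_id (X : TCat σ E) :
    (𝟙 X) = equivShrink _ (𝟙 (ShrinkHoms.fromShrinkHoms X)) := rfl

noncomputable instance (X Y : TCat σ E) : AddCommGroup (X ⟶ Y) :=
  inferInstanceAs (AddCommGroup (Shrink _))

noncomputable instance (X Y : TCat σ E) : Module E (X ⟶ Y) :=
  inferInstanceAs (Module E (Shrink _))

noncomputable instance : Preadditive (TCat σ E) where
  homGroup X Y := inferInstance
  add_comp X Y Z f f' g := by
    rw [shrink_comp, shrink_comp, shrink_comp, equivShrink_symm_add,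
      Preadditive.add_comp, equivShrink_add]
  comp_add X Y Z f g g' := by
    rw [shrink_comp, shrink_comp, shrink_comp, equivShrink_symm_add,
      Preadditive.comp_add, equivShrink_add]

noncomputable instance : CategoryTheory.Linear E (TCat σ E) where
  homModule X Y := inferInstance
  smul_comp X Y Z e f g := by
    rw [shrink_comp, shrink_comp, equivShrink_symm_smul, Linear.smul_comp, equivShrink_smul]
  comp_smul X Y Z f e g := by
    rw [shrink_comp, shrink_comp, equivShrink_symm_smul, Linear.comp_smul, equivShrink_smul]

instance : (ShrinkHoms.functor (BigCat σ E)).Additive where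
  map_add {X Y f g} := by
    show equivShrink _ (f + g) = equivShrink _ f + equivShrink _ g
    rw [equivShrink_add]

instance : (ShrinkHoms.functor (BigCat σ E)).Linear E where
  map_smul {X Y f e} := by
    show equivShrink _ (e • f) = e • equivShrink _ f
    rw [equivShrink_smul]

instance : (ShrinkHoms.inverse (BigCat σ E)).Additive where
  map_add {X Y f g} := by
    show (equivShrink _).symm (f + g) = (equivShrink _).symm f + (equivShrink _).symm g
    rw [equivShrink_symm_add]

instance : (ShrinkHoms.inverse (BigCat σ E)).Linear E where
  map_smul {X Y f e} := by
    show (equivShrink _).symm (e • f) = e • (equivShrink _).symm f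
    rw [equivShrink_symm_smul]

/-- The universal twisted trace functor into the small model. -/
noncomputable def trT : TwistedTraceFunctor σ (TCat σ E) :=
  (trBig σ E).comp (ShrinkHoms.functor (BigCat σ E))

instance : (trT σ E).F.Additive :=
  inferInstanceAs ((ofC σ E ⋙ ShrinkHoms.functor (BigCat σ E)).Additive)

instance : (trT σ E).F.Linear E :=
  inferInstanceAs ((ofC σ E ⋙ ShrinkHoms.functor (BigCat σ E)).Linear E)

end Small


section Equiv

variable {C : Type u} [SmallCategory C] [MonoidalCategory C]
variable (σ : C ⥤ C) [σ.Monoidal] (E : Type w) [CommRing E]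
variable [Preadditive C] [CategoryTheory.Linear E C]
variable (D : Type u₂) [Category.{v₂} D] [Preadditive D] [CategoryTheory.Linear E D]

/-- Shorthand for the shrink functor. -/
noncomputable abbrev UB : BigCat σ E ⥤ TCat σ E := ShrinkHoms.functor (BigCat σ E)

/-- The precomposition functor we are going to prove is an equivalence. -/
noncomputable abbrev PC :
    ObjectProperty.FullSubcategory (fun G : TCat σ E ⥤ D => IsLinearFunctor E G) ⥤
      ObjectProperty.FullSubcategory (fun Q : TwistedTraceFunctor σ D => IsLinearFunctor E Q.F) :=
  precompFunctor E σ D (trT σ E) inferInstance inferInstance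

instance PC_faithful : (PC σ E D).Faithful where
  map_injective {G G'} {η η'} h := by
    have h' := congrArg (fun f => f.hom.η) h
    apply ObjectProperty.hom_ext
    apply NatTrans.ext
    funext X
    exact congrArg (fun τ : (trT σ E).F ⋙ G.obj ⟶ (trT σ E).F ⋙ G'.obj =>
      τ.app (fromBig σ E (ShrinkHoms.fromShrinkHoms X))) h'

section Full

variable {σ E D}
variable {G G' : TCat σ E ⥤ D}
variable (hGa : G.Additive) (hG'a : G'.Additive) (hGl : G.Linear E) (hG'l : G'.Linear E)
variable (θ : TraceHom ((trT σ E).comp G) ((trT σ E).comp G'))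

lemma full_nat_gen {A B : C} (g : Gen σ A B) :
    G.map ((UB σ E).map (tmk (gw g))) ≫ θ.η.app B
      = θ.η.app A ≫ G'.map ((UB σ E).map (tmk (gw g))) := by
  cases g with
  | of f => exact θ.η.naturality f
  | ar A B => exact (θ.compat A B).symm
  | arinv A B =>
    have hAr : θ.η.app (tensorObj A B) ≫ (G'.mapIso ((trT σ E).α A B)).hom
        = (G.mapIso ((trT σ E).α A B)).hom ≫ θ.η.app (tensorObj B (σ.obj A)) :=
      θ.compat A B
    show (G.mapIso ((trT σ E).α A B)).inv ≫ θ.η.app (tensorObj A B)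
      = θ.η.app (tensorObj B (σ.obj A)) ≫ (G'.mapIso ((trT σ E).α A B)).inv
    exact (Iso.inv_comp_eq _).2 (((Iso.eq_comp_inv _).2 hAr).trans (Category.assoc _ _ _))

lemma full_nat_nil (X : C) (a : E) :
    G.map ((UB σ E).map (tmk (Finsupp.single (Word.nil : Word σ X X) a))) ≫ θ.η.app X
      = θ.η.app X ≫ G'.map ((UB σ E).map (tmk (Finsupp.single (Word.nil : Word σ X X) a))) := by
  erw [tmk_single_absorb σ E (Word.nil : Word σ X X) a]
  exact full_nat_gen θ (Gen.of (a • 𝟙 X))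

lemma full_nat_cons {A B Z : C} (g : Gen σ A B) (w : Word σ B Z) (a : E)
    (ih : G.map ((UB σ E).map (tmk (Finsupp.single w a))) ≫ θ.η.app Z
      = θ.η.app B ≫ G'.map ((UB σ E).map (tmk (Finsupp.single w a)))) :
    G.map ((UB σ E).map (tmk (Finsupp.single (Word.cons g w) a))) ≫ θ.η.app Z
      = θ.η.app A ≫ G'.map ((UB σ E).map (tmk (Finsupp.single (Word.cons g w) a))) := by
  erw [show (tmk (Finsupp.single (Word.cons g w) a) : toBig σ E A ⟶ toBig σ E Z)
      = CategoryStruct.comp (X := toBig σ E A) (Y := toBig σ E B) (Z := toBig σ E Z)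
          (tmk (gw g)) (tmk (Finsupp.single w a)) from ?_]
  · erw [Functor.map_comp, Functor.map_comp, Functor.map_comp, Category.assoc]
    erw [ih, ← Category.assoc, full_nat_gen θ g, Category.assoc]
    rfl
  · exact (congrArg tmk (show Finsupp.single (Word.cons g w) a = fcomp (gw g) (Finsupp.single w a) by
      rw [gw, wd, fcomp_single, one_mul]; rfl)).trans (big_comp σ E _ _).symm

lemma full_nat_word {X Y : C} (p : Word σ X Y) (a : E) :
    G.map ((UB σ E).map (tmk (Finsupp.single p a))) ≫ θ.η.app Y
      = θ.η.app X ≫ G'.map ((UB σ E).map (tmk (Finsupp.single p a))) := by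
  induction p with
  | nil => exact full_nat_nil θ _ a
  | cons g w ih => exact full_nat_cons θ g w a ih

include hGa hG'a hGl hG'l in
lemma full_nat {X Y : C} (m : FHom σ E X Y) :
    G.map ((UB σ E).map (tmk m)) ≫ θ.η.app Y
      = θ.η.app X ≫ G'.map ((UB σ E).map (tmk m)) := by
  haveI := hGa; haveI := hG'a
  induction m using Finsupp.induction_linear with
  | zero =>
    erw [show (tmk (0 : FHom σ E X Y)) = (0 : toBig σ E X ⟶ toBig σ E Y) from rfl]
    erw [Functor.map_zero, Functor.map_zero, Limits.zero_comp,
      Limits.comp_zero]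
    rfl
  | add f g hf hg =>
    erw [show (tmk (f + g)) = (tmk f + tmk g : toBig σ E X ⟶ toBig σ E Y)
        from map_add ((S σ E X Y).mkQ) _ _]
    erw [Functor.map_add, Functor.map_add, Functor.map_add, Preadditive.add_comp,
      Preadditive.comp_add, hf, hg]
    rfl
  | single p a => exact full_nat_word θ p a

end Full

instance PC_full : (PC σ E D).Full where
  map_surjective {GG GG'} θ := by
    obtain ⟨hGa, hGl⟩ := GG.property
    obtain ⟨hG'a, hG'l⟩ := GG'.property
    refine ⟨⟨{ app := fun X => θ.hom.η.app (fromBig σ E (ShrinkHoms.fromShrinkHoms X))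
               naturality := ?_ }⟩, ?_⟩
    · intro X Y m
      obtain ⟨f, hf⟩ := Submodule.Quotient.mk_surjective _
        ((equivShrink (ShrinkHoms.fromShrinkHoms X ⟶ ShrinkHoms.fromShrinkHoms Y)).symm m)
      have hm := ((Equiv.eq_symm_apply _).1 hf).symm
      rw [hm]
      exact full_nat hGa hG'a hGl hG'l θ.hom f
    · apply ObjectProperty.hom_ext
      apply TraceHom.ext
      ext X
      rfl

section EssSurj

variable {σ E D}
variable (Q : TwistedTraceFunctor σ D)
variable (hP : ∀ {X Y : C} (f g : X ⟶ Y), Q.F.map (f + g) = Q.F.map f + Q.F.map g)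
variable (hPs : ∀ {X Y : C} (e : E) (f : X ⟶ Y), Q.F.map (e • f) = e • Q.F.map f)

/-- The functor on the small model induced by a twisted trace functor. -/
noncomputable def liftT : TCat σ E ⥤ D :=
  ShrinkHoms.inverse (BigCat σ E) ⋙ liftBig Q hP hPs

instance liftT_additive : (liftT Q hP hPs).Additive :=
  inferInstanceAs ((ShrinkHoms.inverse (BigCat σ E) ⋙ liftBig Q hP hPs).Additive)

instance liftT_linear : (liftT Q hP hPs).Linear E :=
  inferInstanceAs ((ShrinkHoms.inverse (BigCat σ E) ⋙ liftBig Q hP hPs).Linear E)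

lemma liftT_UB_map {X Y : BigCat σ E} (m : X ⟶ Y) :
    (liftT Q hP hPs).map ((UB σ E).map m) = (liftBig Q hP hPs).map m := by
  show (liftBig Q hP hPs).map ((equivShrink _).symm (equivShrink _ m))
    = (liftBig Q hP hPs).map m
  rw [Equiv.symm_apply_apply]

/-- The comparison map from the composite with the lift back to `Q`. -/
noncomputable def essIsoHom : TraceHom ((trT σ E).comp (liftT Q hP hPs)) Q where
  η :=
    { app := fun X => 𝟙 (Q.F.obj X)
      naturality := fun X Y f => by
        show (liftT Q hP hPs).map ((UB σ E).map ((ofC σ E).map f)) ≫ 𝟙 _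
          = 𝟙 _ ≫ Q.F.map f
        rw [Category.comp_id, Category.id_comp, liftT_UB_map, liftBig_ofC_map] }
  compat := fun X Y => by
    show 𝟙 _ ≫ (Q.α X Y).hom
      = (liftT Q hP hPs).map ((UB σ E).map (tmk (gw (Gen.ar X Y)))) ≫ 𝟙 _
    erw [Category.comp_id, Category.id_comp, liftT_UB_map]
    show (Q.α X Y).hom = liftHom Q hP hPs (tmk (gw (Gen.ar X Y)))
    rw [liftHom_mk, evalF_gw]
    rfl

/-- The comparison map from `Q` to the composite with the lift. -/
noncomputable def essIsoInv : TraceHom Q ((trT σ E).comp (liftT Q hP hPs)) where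
  η :=
    { app := fun X => 𝟙 (Q.F.obj X)
      naturality := fun X Y f => by
        show Q.F.map f ≫ 𝟙 _
          = 𝟙 _ ≫ (liftT Q hP hPs).map ((UB σ E).map ((ofC σ E).map f))
        rw [Category.comp_id, Category.id_comp, liftT_UB_map, liftBig_ofC_map] }
  compat := fun X Y => by
    show 𝟙 _ ≫ (liftT Q hP hPs).map ((UB σ E).map (tmk (gw (Gen.ar X Y))))
      = (Q.α X Y).hom ≫ 𝟙 _
    erw [Category.comp_id, Category.id_comp, liftT_UB_map]
    show liftHom Q hP hPs (tmk (gw (Gen.ar X Y))) = (Q.α X Y).hom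
    rw [liftHom_mk, evalF_gw]
    rfl

end EssSurj

instance PC_essSurj : (PC σ E D).EssSurj where
  mem_essImage QQ := by
    obtain ⟨hQa, hQl⟩ := QQ.property
    have hP : ∀ {X Y : C} (f g : X ⟶ Y),
        QQ.obj.F.map (f + g) = QQ.obj.F.map f + QQ.obj.F.map g := by
      intro X Y f g
      haveI := hQa
      exact QQ.obj.F.map_add
    have hPs : ∀ {X Y : C} (e : E) (f : X ⟶ Y),
        QQ.obj.F.map (e • f) = e • QQ.obj.F.map f := by
      intro X Y e f
      haveI := hQa; haveI := hQl
      exact Functor.map_smul _ _ _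
    refine ⟨⟨liftT QQ.obj hP hPs, ⟨inferInstance, inferInstance⟩⟩, ⟨?_⟩⟩
    refine ⟨⟨essIsoHom QQ.obj hP hPs⟩, ⟨essIsoInv QQ.obj hP hPs⟩, ?_, ?_⟩
    · apply ObjectProperty.hom_ext
      apply TraceHom.ext
      apply NatTrans.ext
      funext X
      show (𝟙 (QQ.obj.F.obj X) ≫ 𝟙 (QQ.obj.F.obj X) : _) = 𝟙 _
      rw [Category.comp_id]
    · apply ObjectProperty.hom_ext
      apply TraceHom.ext
      apply NatTrans.ext
      funext X
      show (𝟙 (QQ.obj.F.obj X) ≫ 𝟙 (QQ.obj.F.obj X) : _) = 𝟙 _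
      rw [Category.comp_id]

/-- Biproducts descend to the small twisted trace category. -/
lemma tcat_hasFiniteBiproducts (h : HasFiniteBiproducts C) :
    HasFiniteBiproducts (TCat σ E) := by
  refine ⟨fun n => ⟨fun f => ?_⟩⟩
  let f' : Fin n → C := fun j => fromBig σ E (ShrinkHoms.fromShrinkHoms (f j))
  haveI : HasBiproduct f' := HasBiproductsOfShape.has_biproduct f'
  let b : Bicone f' := (biproduct.bicone f')
  have htot : ∑ j, ((trT σ E).F.mapBicone b).π j ≫ ((trT σ E).F.mapBicone b).ι j
      = 𝟙 ((trT σ E).F.mapBicone b).pt := by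
    have h2 := congrArg (trT σ E).F.map (biproduct.total (f := f'))
    rw [Functor.map_sum, CategoryTheory.Functor.map_id] at h2
    simp only [Functor.map_comp] at h2
    exact h2
  exact (hasBiproduct_of_total ((trT σ E).F.mapBicone b) htot :
    HasBiproduct ((trT σ E).F.obj ∘ f'))

end Equiv

end TwTrAux

/-- existence of the twisted categorical trace: let `E` be a
commutative ring, `C` a small `E`-linear monoidal category in which every object
admits a left dual, and `σ` an `E`-linear strong monoidal endofunctor of `C`.
Then there are an `E`-linear category `T` and an `E`-linear `σ`-twisted trace
functor `tr : C → T` such that for every `E`-linear category `D`, precomposition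
with `tr` is an equivalence from the category of `E`-linear functors `T ⥤ D`
onto the category of `E`-linear `σ`-twisted trace functors `C → D`.  Moreover,
if `C` is additive then `T` can be chosen to be additive. -/
theorem exists_twisted_categorical_trace
    (E : Type w) [CommRing E]
    (C : Type u) [SmallCategory C] [MonoidalCategory C]
    [Preadditive C] [CategoryTheory.Linear E C]
    [MonoidalPreadditive C] [MonoidalLinear E C]
    (σ : C ⥤ C) [σ.Monoidal] (hσadd : σ.Additive)
    (hσlin : @Functor.Linear E _ C C _ _ _ _ _ _ σ)
    (hdual : ∀ V : C, ∃ (Vd : C) (coev : 𝟙_ C ⟶ V ⊗ Vd) (ev : Vd ⊗ V ⟶ 𝟙_ C),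
      ((λ_ V).inv ≫ coev ▷ V ≫ (α_ V Vd V).hom ≫ V ◁ ev ≫ (ρ_ V).hom = 𝟙 V) ∧
      ((ρ_ Vd).inv ≫ Vd ◁ coev ≫ (α_ Vd V Vd).inv ≫ ev ▷ Vd ≫ (λ_ Vd).hom = 𝟙 Vd)) :
    ∃ (T : LinearCatBundle.{w, u} E) (tr : TwistedTraceFunctor σ T.carrier)
      (hadd : tr.F.Additive)
      (hlin : @Functor.Linear E _ C T.carrier _ _ _ _ _ _ tr.F),
      (∀ (D : Type u₂) [Category.{v₂} D] [Preadditive D] [CategoryTheory.Linear E D],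
        (precompFunctor E σ D tr hadd hlin).IsEquivalence) ∧
      (HasFiniteBiproducts C → HasFiniteBiproducts T.carrier) := by
  refine ⟨⟨TwTrAux.TCat σ E⟩, TwTrAux.trT σ E, inferInstance, inferInstance, ?_, ?_⟩
  · intro D _ _ _
    exact { }
  · intro h
    exact TwTrAux.tcat_hasFiniteBiproducts σ E h
end

section
/- Let (F, α) : C → D be a σ-twisted trace functor. Then for every object X of C, the composite F(X) ≅ F(1⊗X) (via the left unitor) → F(X⊗σ(1)) (via α_{1,X}) ≅ F(X⊗1) (via the structure isomorphism ε : σ(1) ≅ 1) ≅ F(X) (via the right unitor) is the identity of F(X). -/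
open CategoryTheory MonoidalCategory

section Aux

variable {C : Type*} [Category C] [MonoidalCategory C] (σ : C ⥤ C) [σ.Monoidal]

private lemma ttf_lemA (X : C) :
    (X ◁ σ.map (λ_ (𝟙_ C)).inv) ≫ (X ◁ (Functor.Monoidal.μIso σ (𝟙_ C) (𝟙_ C)).inv) ≫
        (α_ X (σ.obj (𝟙_ C)) (σ.obj (𝟙_ C))).inv
      = ((ρ_ X).inv ≫ (X ◁ Functor.LaxMonoidal.ε σ)) ▷ σ.obj (𝟙_ C) := by
  have h : (X ◁ ((Functor.OplaxMonoidal.η σ) ▷ σ.obj (𝟙_ C))) ≫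
      (X ◁ ((Functor.LaxMonoidal.ε σ) ▷ σ.obj (𝟙_ C))) = 𝟙 _ := by
    rw [← MonoidalCategory.whiskerLeft_comp, Functor.Monoidal.whiskerRight_η_ε,
      MonoidalCategory.whiskerLeft_id]
  have h2 : (X ◁ ((λ_ (σ.obj (𝟙_ C))).inv ≫ ((Functor.LaxMonoidal.ε σ) ▷ σ.obj (𝟙_ C)))) ≫
      (α_ X (σ.obj (𝟙_ C)) (σ.obj (𝟙_ C))).inv
      = ((ρ_ X).inv ≫ (X ◁ Functor.LaxMonoidal.ε σ)) ▷ σ.obj (𝟙_ C) := by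
    simp [MonoidalCategory.whiskerLeft_comp, reassoc_of% h]
  simpa [MonoidalCategory.whiskerLeft_comp] using h2

private lemma ttf_lemB (X : C) :
    ((λ_ X).inv ▷ σ.obj (𝟙_ C)) ≫ (α_ (𝟙_ C) X (σ.obj (𝟙_ C))).hom ≫
        ((𝟙_ C) ◁ ((X ◁ (Functor.OplaxMonoidal.η σ)) ≫ (ρ_ X).hom))
      = ((X ◁ (Functor.OplaxMonoidal.η σ)) ≫ (ρ_ X).hom) ≫ (λ_ X).inv := by
  simp only [Category.assoc]
  simp [MonoidalCategory.whiskerLeft_comp]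
  congr 1
  monoidal_coherence

end Aux

/-- For a `σ`-twisted trace functor `(F, α)`, the composite
`F X ≅ F (𝟙 ⊗ X) → F (X ⊗ σ 𝟙) ≅ F (X ⊗ 𝟙) ≅ F X`
(via the left unitor, `α_{𝟙,X}`, the structure isomorphism `ε : σ 𝟙 ≅ 𝟙` and
the right unitor) is the identity. -/
theorem TwistedTraceFunctor.unit_rotation_eq_id
    {C : Type*} [Category C] [MonoidalCategory C] (σ : C ⥤ C) [σ.Monoidal]
    {D : Type*} [Category D] (P : TwistedTraceFunctor σ D) (X : C) :
    P.F.map (λ_ X).inv ≫ (P.α (𝟙_ C) X).hom ≫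
        P.F.map (X ◁ (Functor.Monoidal.εIso σ).inv) ≫ P.F.map (ρ_ X).hom
      = 𝟙 (P.F.obj X) := by
  set a := (P.α (𝟙_ C) X).hom with ha
  set g : X ⟶ X ⊗ σ.obj (𝟙_ C) := (ρ_ X).inv ≫ (X ◁ Functor.LaxMonoidal.ε σ) with hg
  set g' : X ⊗ σ.obj (𝟙_ C) ⟶ X := (X ◁ Functor.OplaxMonoidal.η σ) ≫ (ρ_ X).hom with hg'
  haveI : IsIso g := by rw [hg]; infer_instance
  haveI : IsIso g' := by rw [hg']; infer_instance
  -- naturality consequences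
  have h2 : (P.α (𝟙_ C ⊗ 𝟙_ C) X).hom
      = P.F.map ((λ_ (𝟙_ C)).hom ▷ X) ≫ a ≫ P.F.map (X ◁ σ.map (λ_ (𝟙_ C)).inv) := by
    have n := P.naturality (λ_ (𝟙_ C)).hom (𝟙 X)
    simp only [MonoidalCategory.tensorHom_id, MonoidalCategory.id_tensorHom] at n
    rw [← cancel_mono (P.F.map (X ◁ σ.map (λ_ (𝟙_ C)).hom))]
    simp only [Category.assoc, ← P.F.map_comp, ← MonoidalCategory.whiskerLeft_comp,
      Iso.map_inv_hom_id, MonoidalCategory.whiskerLeft_id, P.F.map_id, Category.comp_id]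
    exact n.symm
  have h3 : (P.α (𝟙_ C) (𝟙_ C ⊗ X)).hom
      = P.F.map ((𝟙_ C) ◁ (λ_ X).hom) ≫ a ≫ P.F.map ((λ_ X).inv ▷ σ.obj (𝟙_ C)) := by
    have n := P.naturality (𝟙 (𝟙_ C)) (λ_ X).hom
    simp only [MonoidalCategory.tensorHom_id, MonoidalCategory.id_tensorHom,
      σ.map_id] at n
    rw [← cancel_mono (P.F.map ((λ_ X).hom ▷ σ.obj (𝟙_ C)))]
    simp only [Category.assoc, ← P.F.map_comp, ← MonoidalCategory.comp_whiskerRight,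
      Iso.inv_hom_id, MonoidalCategory.id_whiskerRight, P.F.map_id, Category.comp_id]
    exact n.symm
  have h4 : (P.α (𝟙_ C) (X ⊗ σ.obj (𝟙_ C))).hom
      = P.F.map ((𝟙_ C) ◁ g') ≫ a ≫ P.F.map (g ▷ σ.obj (𝟙_ C)) := by
    have n := P.naturality (𝟙 (𝟙_ C)) g
    simp only [MonoidalCategory.tensorHom_id, MonoidalCategory.id_tensorHom,
      σ.map_id] at n
    rw [← cancel_epi (P.F.map ((𝟙_ C) ◁ g))]
    rw [n]
    have hgg : g ≫ g' = 𝟙 X := by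
      simp [hg, hg', ← MonoidalCategory.whiskerLeft_comp]
    have hc : P.F.map ((𝟙_ C) ◁ g) ≫ P.F.map ((𝟙_ C) ◁ g') = 𝟙 _ := by
      rw [← P.F.map_comp, ← MonoidalCategory.whiskerLeft_comp, hgg,
        MonoidalCategory.whiskerLeft_id, P.F.map_id]
    rw [← Category.assoc, ← Category.assoc, hc]
    simp [ha]
  -- the coherence axiom at (𝟙, 𝟙, X)
  have h1 := P.coherence (𝟙_ C) (𝟙_ C) X
  rw [h2, h3, h4] at h1
  simp only [Category.assoc] at h1
  -- collapse the purely-monoidal pieces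
  have hA : P.F.map (X ◁ σ.map (λ_ (𝟙_ C)).inv) ≫
        P.F.map (X ◁ (Functor.Monoidal.μIso σ (𝟙_ C) (𝟙_ C)).inv) ≫
        P.F.map (α_ X (σ.obj (𝟙_ C)) (σ.obj (𝟙_ C))).inv
      = P.F.map (g ▷ σ.obj (𝟙_ C)) := by
    rw [← P.F.map_comp, ← P.F.map_comp, hg]
    congr 1
    exact ttf_lemA σ X
  have hB : P.F.map ((λ_ X).inv ▷ σ.obj (𝟙_ C)) ≫
        P.F.map (α_ (𝟙_ C) X (σ.obj (𝟙_ C))).hom ≫ P.F.map ((𝟙_ C) ◁ g')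
      = P.F.map (g' ≫ (λ_ X).inv) := by
    rw [← P.F.map_comp, ← P.F.map_comp, hg']
    congr 1
    exact ttf_lemB σ X
  have hC : P.F.map (α_ (𝟙_ C) (𝟙_ C) X).hom ≫ P.F.map ((𝟙_ C) ◁ (λ_ X).hom)
      = P.F.map ((λ_ (𝟙_ C)).hom ▷ X) := by
    rw [← P.F.map_comp]
    congr 1
    monoidal_coherence
  rw [reassoc_of% hC] at h1
  have h1' : P.F.map ((λ_ (𝟙_ C)).hom ▷ X) ≫ a ≫ P.F.map (g ▷ σ.obj (𝟙_ C))
      = P.F.map ((λ_ (𝟙_ C)).hom ▷ X) ≫ a ≫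
          P.F.map (g' ≫ (λ_ X).inv) ≫ a ≫ P.F.map (g ▷ σ.obj (𝟙_ C)) := by
    calc P.F.map ((λ_ (𝟙_ C)).hom ▷ X) ≫ a ≫ P.F.map (g ▷ σ.obj (𝟙_ C))
        = P.F.map ((λ_ (𝟙_ C)).hom ▷ X) ≫ a ≫ P.F.map (X ◁ σ.map (λ_ (𝟙_ C)).inv) ≫
            P.F.map (X ◁ (Functor.Monoidal.μIso σ (𝟙_ C) (𝟙_ C)).inv) ≫
            P.F.map (α_ X (σ.obj (𝟙_ C)) (σ.obj (𝟙_ C))).inv := by rw [hA]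
      _ = P.F.map ((λ_ (𝟙_ C)).hom ▷ X) ≫ a ≫
            P.F.map ((λ_ X).inv ▷ σ.obj (𝟙_ C)) ≫
            P.F.map (α_ (𝟙_ C) X (σ.obj (𝟙_ C))).hom ≫
            P.F.map ((𝟙_ C) ◁ g') ≫ a ≫ P.F.map (g ▷ σ.obj (𝟙_ C)) := by
          simpa only [Category.assoc] using h1
      _ = _ := by rw [reassoc_of% hB]
  rw [cancel_epi, cancel_epi] at h1'
  -- key cancellation
  have k1 : P.F.map (g' ≫ (λ_ X).inv) ≫ a = 𝟙 _ := by
    rw [← cancel_mono (P.F.map (g ▷ σ.obj (𝟙_ C))), Category.assoc, ← h1',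
      Category.id_comp]
  have key : a ≫ P.F.map (g' ≫ (λ_ X).inv) = 𝟙 _ := by
    rw [← cancel_epi (P.F.map (g' ≫ (λ_ X).inv)), ← Category.assoc, k1,
      Category.id_comp, Category.comp_id]
  -- conclude
  have hεinv : (Functor.Monoidal.εIso σ).inv = Functor.OplaxMonoidal.η σ := rfl
  calc P.F.map (λ_ X).inv ≫ a ≫ P.F.map (X ◁ (Functor.Monoidal.εIso σ).inv) ≫
          P.F.map (ρ_ X).hom
      = P.F.map (λ_ X).inv ≫ (a ≫ P.F.map (g' ≫ (λ_ X).inv)) ≫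
          P.F.map (λ_ X).hom := by
        rw [hεinv]
        simp only [← P.F.map_comp, Category.assoc, hg']
        simp
    _ = 𝟙 _ := by rw [key]; simp
end

section
/- Let (F, α) : C → D be a σ-twisted trace functor. Then for all objects X, Y of C, the composite α_{Y,σX} ∘ α_{X,Y} : F(X⊗Y) → F(σX⊗σY) equals the composite F(X⊗Y) ≅ F((X⊗Y)⊗1) (via the right unitor) → F(1⊗σ(X⊗Y)) (via α_{X⊗Y,1}) ≅ F(σ(X⊗Y)) (via the left unitor) ≅ F(σX⊗σY) (via the inverse of the monoidal structure isomorphism μ_{X,Y} : σX⊗σY ≅ σ(X⊗Y)). -/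
open CategoryTheory MonoidalCategory

theorem double_rotation'
    {C : Type*} [Category C] [MonoidalCategory C] (σ : C ⥤ C) [σ.Monoidal]
    {D : Type*} [Category D] (F : C ⥤ D)
    (α : ∀ X Y : C, F.obj (X ⊗ Y) ≅ F.obj (Y ⊗ σ.obj X))
    (naturality : ∀ {X X' Y Y' : C} (f : X ⟶ X') (g : Y ⟶ Y'),
      F.map (f ⊗ₘ g) ≫ (α X' Y').hom = (α X Y).hom ≫ F.map (g ⊗ₘ σ.map f))
    (coherence : ∀ X Y Z : C,
      (α (X ⊗ Y) Z).hom ≫ F.map (Z ◁ (Functor.Monoidal.μIso σ X Y).inv) ≫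
          F.map (α_ Z (σ.obj X) (σ.obj Y)).inv
        = F.map (α_ X Y Z).hom ≫ (α X (Y ⊗ Z)).hom ≫
            F.map (α_ Y Z (σ.obj X)).hom ≫ (α Y (Z ⊗ σ.obj X)).hom) (X Y : C) :
    (α X Y).hom ≫ (α Y (σ.obj X)).hom
      = F.map (ρ_ (X ⊗ Y)).inv ≫ (α (X ⊗ Y) (𝟙_ C)).hom ≫
          F.map (λ_ (σ.obj (X ⊗ Y))).hom ≫
          F.map (Functor.Monoidal.μIso σ X Y).inv := by
  have e1 : (ρ_ (X ⊗ Y)).inv ≫ (α_ X Y (𝟙_ C)).hom = X ◁ (ρ_ Y).inv := by coherence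
  have e2 : (ρ_ Y).inv ▷ σ.obj X ≫ (α_ Y (𝟙_ C) (σ.obj X)).hom
      = Y ◁ (λ_ (σ.obj X)).inv := by coherence
  have n1 := naturality (𝟙 X) (ρ_ Y).inv
  have n2 := naturality (𝟙 Y) (λ_ (σ.obj X)).inv
  simp only [id_tensorHom, tensorHom_id, σ.map_id] at n1 n2
  have co := coherence X Y (𝟙_ C)
  symm
  calc F.map (ρ_ (X ⊗ Y)).inv ≫ (α (X ⊗ Y) (𝟙_ C)).hom ≫
          F.map (λ_ (σ.obj (X ⊗ Y))).hom ≫ F.map (Functor.Monoidal.μIso σ X Y).inv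
      = F.map (ρ_ (X ⊗ Y)).inv ≫ (α (X ⊗ Y) (𝟙_ C)).hom ≫
          F.map (𝟙_ C ◁ (Functor.Monoidal.μIso σ X Y).inv) ≫
          F.map (α_ (𝟙_ C) (σ.obj X) (σ.obj Y)).inv ≫
          F.map ((λ_ (σ.obj X)).hom ▷ σ.obj Y) := by
        have e0 : (λ_ (σ.obj (X ⊗ Y))).hom ≫ (Functor.Monoidal.μIso σ X Y).inv
            = 𝟙_ C ◁ (Functor.Monoidal.μIso σ X Y).inv ≫
              (α_ (𝟙_ C) (σ.obj X) (σ.obj Y)).inv ≫ (λ_ (σ.obj X)).hom ▷ σ.obj Y := by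
          rw [← leftUnitor_naturality, leftUnitor_tensor_hom]
        rw [← F.map_comp, e0, F.map_comp, F.map_comp]
    _ = F.map (ρ_ (X ⊗ Y)).inv ≫ F.map (α_ X Y (𝟙_ C)).hom ≫ (α X (Y ⊗ 𝟙_ C)).hom ≫
          F.map (α_ Y (𝟙_ C) (σ.obj X)).hom ≫ (α Y (𝟙_ C ⊗ σ.obj X)).hom ≫
          F.map ((λ_ (σ.obj X)).hom ▷ σ.obj Y) := by
        rw [reassoc_of% co]
    _ = F.map (X ◁ (ρ_ Y).inv) ≫ (α X (Y ⊗ 𝟙_ C)).hom ≫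
          F.map (α_ Y (𝟙_ C) (σ.obj X)).hom ≫ (α Y (𝟙_ C ⊗ σ.obj X)).hom ≫
          F.map ((λ_ (σ.obj X)).hom ▷ σ.obj Y) := by
        rw [← Functor.map_comp_assoc, e1]
    _ = (α X Y).hom ≫ F.map (Y ◁ (λ_ (σ.obj X)).inv) ≫ (α Y (𝟙_ C ⊗ σ.obj X)).hom ≫
          F.map ((λ_ (σ.obj X)).hom ▷ σ.obj Y) := by
        rw [reassoc_of% n1, ← Functor.map_comp_assoc, e2]
    _ = (α X Y).hom ≫ (α Y (σ.obj X)).hom ≫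
          F.map ((λ_ (σ.obj X)).inv ▷ σ.obj Y) ≫
          F.map ((λ_ (σ.obj X)).hom ▷ σ.obj Y) := by
        rw [reassoc_of% n2]
    _ = (α X Y).hom ≫ (α Y (σ.obj X)).hom := by
        rw [← Functor.map_comp, ← comp_whiskerRight, Iso.inv_hom_id,
          id_whiskerRight, CategoryTheory.Functor.map_id, Category.comp_id]


/-- For a `σ`-twisted trace functor `(F, α)`, the composite
`α_{Y,σX} ∘ α_{X,Y} : F (X ⊗ Y) ⟶ F (σX ⊗ σY)` equals the composite
`F (X ⊗ Y) ≅ F ((X ⊗ Y) ⊗ 𝟙) → F (𝟙 ⊗ σ(X ⊗ Y)) ≅ F (σ(X ⊗ Y)) ≅ F (σX ⊗ σY)`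
(via the right unitor, `α_{X⊗Y,𝟙}`, the left unitor and the inverse of the
monoidal structure isomorphism `μ_{X,Y}`). -/
theorem TwistedTraceFunctor.double_rotation
    {C : Type*} [Category C] [MonoidalCategory C] (σ : C ⥤ C) [σ.Monoidal]
    {D : Type*} [Category D] (P : TwistedTraceFunctor σ D) (X Y : C) :
    (P.α X Y).hom ≫ (P.α Y (σ.obj X)).hom
      = P.F.map (ρ_ (X ⊗ Y)).inv ≫ (P.α (X ⊗ Y) (𝟙_ C)).hom ≫
          P.F.map (λ_ (σ.obj (X ⊗ Y))).hom ≫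
          P.F.map (Functor.Monoidal.μIso σ X Y).inv := by
  exact double_rotation' σ P.F P.α P.naturality P.coherence X Y
end

section
/- Let (F, α) : C → D be a σ-twisted trace functor, let u : X → V⊗W and v : W⊗σV → Y be morphisms in C, and suppose V has a left dual (V*, coev_V, ev_V). Then σV* is a left dual of σV with coevaluation coev_{σV} := μ_{V,V*}⁻¹ ∘ σ(coev_V) ∘ ε⁻¹ and evaluation ev_{σV} := ε ∘ σ(ev_V) ∘ μ_{V*,V}. Define (suppressing associators and unitors) the mate u* := (ev_V ⊗ id_W) ∘ (id_{V*} ⊗ u) : V*⊗X → W, the mate v* := (v ⊗ id_{σV*}) ∘ (id_W ⊗ coev_{σV}) : W → Y⊗σV*, and set v_u := v ∘ (u* ⊗ id_{σV}) : (V*⊗X)⊗σV → Y and u_v := (id_V ⊗ v*) ∘ u : X → V⊗(Y⊗σV*). Then as morphisms F(X) → F(Y) one has S^F_{(coev_V⊗id_X)∘λ_X⁻¹, v_u} = S^F_{u,v} = S^F_{u_v, w}, where λ_X is the left unitor and w : (Y⊗σV*)⊗σV ≅ Y⊗(σV*⊗σV) → Y⊗1 ≅ Y is induced by ev_{σV}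 and the right unitor. -/
open CategoryTheory MonoidalCategory

variable {C : Type*} [Category C] [MonoidalCategory C] (σ : C ⥤ C) [σ.Monoidal]
  {D : Type*} [Category D]

/-- The `S`-operator `S^F_{u,v} := F v ∘ α_{V,W} ∘ F u : F X ⟶ F Y` attached to
morphisms `u : X ⟶ V ⊗ W` and `v : W ⊗ σ V ⟶ Y`. -/
def TwistedTraceFunctor.S (P : TwistedTraceFunctor σ D) {X Y V W : C}
    (u : X ⟶ V ⊗ W) (v : W ⊗ σ.obj V ⟶ Y) : P.F.obj X ⟶ P.F.obj Y :=
  P.F.map u ≫ (P.α V W).hom ≫ P.F.map v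

/-- `(Vd, coev, ev)` is a left dual of `V`: the two triangle identities hold. -/
def IsLeftDualPair (V Vd : C) (coev : 𝟙_ C ⟶ V ⊗ Vd) (ev : Vd ⊗ V ⟶ 𝟙_ C) : Prop :=
  ((λ_ V).inv ≫ coev ▷ V ≫ (α_ V Vd V).hom ≫ V ◁ ev ≫ (ρ_ V).hom = 𝟙 V) ∧
  ((ρ_ Vd).inv ≫ Vd ◁ coev ≫ (α_ Vd V Vd).inv ≫ ev ▷ Vd ≫ (λ_ Vd).hom = 𝟙 Vd)


section Aux

open Functor.LaxMonoidal Functor.OplaxMonoidal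

private lemma sigma_tri1 {V Vd : C} (coev : 𝟙_ C ⟶ V ⊗ Vd) (ev : Vd ⊗ V ⟶ 𝟙_ C)
    (h1 : (λ_ V).inv ≫ coev ▷ V ≫ (α_ V Vd V).hom ≫ V ◁ ev ≫ (ρ_ V).hom = 𝟙 V) :
    (λ_ (σ.obj V)).inv ≫
      (ε σ ≫ σ.map coev ≫ (Functor.Monoidal.μIso σ V Vd).inv) ▷ σ.obj V ≫
      (α_ (σ.obj V) (σ.obj Vd) (σ.obj V)).hom ≫
      σ.obj V ◁ (μ σ Vd V ≫ σ.map ev ≫ (Functor.Monoidal.εIso σ).inv) ≫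
      (ρ_ (σ.obj V)).hom = 𝟙 (σ.obj V) := by
  have e1 : (λ_ (σ.obj V)).inv ≫ ε σ ▷ σ.obj V = σ.map (λ_ V).inv ≫ δ σ (𝟙_ C) V := by
    rw [Functor.Monoidal.map_leftUnitor_inv]; simp
  have e5 : δ σ V (𝟙_ C) ≫ σ.obj V ◁ η σ ≫ (ρ_ (σ.obj V)).hom = σ.map (ρ_ V).hom := by
    rw [Functor.Monoidal.map_rightUnitor]
  show (λ_ (σ.obj V)).inv ≫
      (ε σ ≫ σ.map coev ≫ δ σ V Vd) ▷ σ.obj V ≫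
      (α_ (σ.obj V) (σ.obj Vd) (σ.obj V)).hom ≫
      σ.obj V ◁ (μ σ Vd V ≫ σ.map ev ≫ η σ) ≫
      (ρ_ (σ.obj V)).hom = 𝟙 (σ.obj V)
  rw [comp_whiskerRight, comp_whiskerRight, MonoidalCategory.whiskerLeft_comp,
    MonoidalCategory.whiskerLeft_comp, Category.assoc, Category.assoc, Category.assoc,
    Category.assoc, ← Category.assoc (λ_ (σ.obj V)).inv, e1, Category.assoc,
    δ_natural_left_assoc]
  rw [Functor.OplaxMonoidal.associativity_assoc]
  rw [← MonoidalCategory.whiskerLeft_comp_assoc, Functor.Monoidal.δ_μ,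
    MonoidalCategory.whiskerLeft_id, Category.id_comp, δ_natural_right_assoc, e5,
    ← σ.map_comp, ← σ.map_comp, ← σ.map_comp, ← σ.map_comp, h1, σ.map_id]

private lemma sigma_tri2 {V Vd : C} (coev : 𝟙_ C ⟶ V ⊗ Vd) (ev : Vd ⊗ V ⟶ 𝟙_ C)
    (h2 : (ρ_ Vd).inv ≫ Vd ◁ coev ≫ (α_ Vd V Vd).inv ≫ ev ▷ Vd ≫ (λ_ Vd).hom = 𝟙 Vd) :
    (ρ_ (σ.obj Vd)).inv ≫
      σ.obj Vd ◁ (ε σ ≫ σ.map coev ≫ (Functor.Monoidal.μIso σ V Vd).inv) ≫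
      (α_ (σ.obj Vd) (σ.obj V) (σ.obj Vd)).inv ≫
      (μ σ Vd V ≫ σ.map ev ≫ (Functor.Monoidal.εIso σ).inv) ▷ σ.obj Vd ≫
      (λ_ (σ.obj Vd)).hom = 𝟙 (σ.obj Vd) := by
  have e1 : (ρ_ (σ.obj Vd)).inv ≫ σ.obj Vd ◁ ε σ = σ.map (ρ_ Vd).inv ≫ δ σ Vd (𝟙_ C) := by
    rw [Functor.Monoidal.map_rightUnitor_inv]; simp
  have e3 : δ σ Vd (V ⊗ Vd) ≫ σ.obj Vd ◁ δ σ V Vd ≫ (α_ (σ.obj Vd) (σ.obj V) (σ.obj Vd)).inv =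
      σ.map (α_ Vd V Vd).inv ≫ δ σ (Vd ⊗ V) Vd ≫ δ σ Vd V ▷ σ.obj Vd := by
    rw [Functor.Monoidal.map_associator_inv]; simp
  have e5 : δ σ (𝟙_ C) Vd ≫ η σ ▷ σ.obj Vd ≫ (λ_ (σ.obj Vd)).hom = σ.map (λ_ Vd).hom := by
    rw [Functor.Monoidal.map_leftUnitor]
  show (ρ_ (σ.obj Vd)).inv ≫
      σ.obj Vd ◁ (ε σ ≫ σ.map coev ≫ δ σ V Vd) ≫
      (α_ (σ.obj Vd) (σ.obj V) (σ.obj Vd)).inv ≫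
      (μ σ Vd V ≫ σ.map ev ≫ η σ) ▷ σ.obj Vd ≫
      (λ_ (σ.obj Vd)).hom = 𝟙 (σ.obj Vd)
  rw [MonoidalCategory.whiskerLeft_comp, MonoidalCategory.whiskerLeft_comp,
    comp_whiskerRight, comp_whiskerRight, Category.assoc, Category.assoc, Category.assoc,
    Category.assoc, ← Category.assoc (ρ_ (σ.obj Vd)).inv, e1, Category.assoc,
    δ_natural_right_assoc, reassoc_of% e3]
  rw [← comp_whiskerRight_assoc, Functor.Monoidal.δ_μ, id_whiskerRight, Category.id_comp,
    δ_natural_left_assoc, e5, ← σ.map_comp, ← σ.map_comp, ← σ.map_comp, ← σ.map_comp, h2,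
    σ.map_id]

private lemma zig_left {X V W Vd : C} (u : X ⟶ V ⊗ W)
    (coev : 𝟙_ C ⟶ V ⊗ Vd) (ev : Vd ⊗ V ⟶ 𝟙_ C)
    (h1 : (λ_ V).inv ≫ coev ▷ V ≫ (α_ V Vd V).hom ≫ V ◁ ev ≫ (ρ_ V).hom = 𝟙 V) :
    ((λ_ X).inv ≫ coev ▷ X ≫ (α_ V Vd X).hom) ≫
      V ◁ ((Vd ◁ u) ≫ (α_ Vd V W).inv ≫ (ev ▷ W) ≫ (λ_ W).hom) = u := by
  have hW : u = u ≫ (((λ_ V).inv ≫ coev ▷ V ≫ (α_ V Vd V).hom ≫ V ◁ ev ≫ (ρ_ V).hom) ▷ W) := by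
    rw [h1]; simp
  conv_rhs => rw [hW]
  rw [MonoidalCategory.whiskerLeft_comp, MonoidalCategory.whiskerLeft_comp,
    MonoidalCategory.whiskerLeft_comp, Category.assoc, Category.assoc,
    ← associator_naturality_right_assoc, ← whisker_exchange_assoc,
    ← leftUnitor_inv_naturality_assoc]
  congr 1
  monoidal

private lemma zig_right {W Y A Ad : C} (v : W ⊗ A ⟶ Y)
    (c : 𝟙_ C ⟶ A ⊗ Ad) (e : Ad ⊗ A ⟶ 𝟙_ C)
    (t1 : (λ_ A).inv ≫ c ▷ A ≫ (α_ A Ad A).hom ≫ A ◁ e ≫ (ρ_ A).hom = 𝟙 A) :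
    ((ρ_ W).inv ≫ W ◁ c ≫ (α_ W A Ad).inv ≫ v ▷ Ad) ▷ A ≫
      (α_ Y Ad A).hom ≫ Y ◁ e ≫ (ρ_ Y).hom = v := by
  have key : (ρ_ W).inv ▷ A ≫ (W ◁ c) ▷ A ≫ (α_ W A Ad).inv ▷ A ≫
      (α_ (W ⊗ A) Ad A).hom ≫ ((W ⊗ A) ◁ e) ≫ (ρ_ (W ⊗ A)).hom =
      W ◁ ((λ_ A).inv ≫ c ▷ A ≫ (α_ A Ad A).hom ≫ A ◁ e ≫ (ρ_ A).hom) := by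
    monoidal
  rw [comp_whiskerRight, comp_whiskerRight, comp_whiskerRight, Category.assoc, Category.assoc,
    Category.assoc, associator_naturality_left_assoc, ← whisker_exchange_assoc,
    rightUnitor_naturality]
  slice_lhs 1 6 => rw [key]
  rw [t1]; simp

end Aux

/-- given a `σ`-twisted trace functor `(F, α)`, morphisms
`u : X ⟶ V ⊗ W`, `v : W ⊗ σV ⟶ Y`, and a left dual `(V*, coev, ev)` of `V`:
`σV*` is a left dual of `σV` with the induced (co)evaluation maps, and, with
`u* : V*⊗X ⟶ W`, `v* : W ⟶ Y⊗σV*` the mates of `u` and `v` and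
`v_u := v ∘ (u* ⊗ id)`, `u_v := (id ⊗ v*) ∘ u`, one has
`S_{(coev⊗id_X)∘λ⁻¹, v_u} = S_{u,v} = S_{u_v, w}` where `w` is induced by
`ev_{σV}` and the right unitor. -/

theorem TwistedTraceFunctor.S_rotate
    (P : TwistedTraceFunctor σ D) {X Y V W Vd : C}
    (u : X ⟶ V ⊗ W) (v : W ⊗ σ.obj V ⟶ Y)
    (coev : 𝟙_ C ⟶ V ⊗ Vd) (ev : Vd ⊗ V ⟶ 𝟙_ C)
    (h : IsLeftDualPair V Vd coev ev) :
    IsLeftDualPair (σ.obj V) (σ.obj Vd)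
        (Functor.LaxMonoidal.ε σ ≫ σ.map coev ≫ (Functor.Monoidal.μIso σ V Vd).inv)
        (Functor.LaxMonoidal.μ σ Vd V ≫ σ.map ev ≫ (Functor.Monoidal.εIso σ).inv) ∧
    (P.S σ ((λ_ X).inv ≫ coev ▷ X ≫ (α_ V Vd X).hom)
        ((((Vd ◁ u) ≫ (α_ Vd V W).inv ≫ (ev ▷ W) ≫ (λ_ W).hom) ▷ σ.obj V) ≫ v)
      = P.S σ u v) ∧
    (P.S σ u v
      = P.S σ
          (u ≫ (V ◁ ((ρ_ W).inv ≫
            (W ◁ (Functor.LaxMonoidal.ε σ ≫ σ.map coev ≫ (Functor.Monoidal.μIso σ V Vd).inv)) ≫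
            (α_ W (σ.obj V) (σ.obj Vd)).inv ≫ (v ▷ σ.obj Vd))))
          ((α_ Y (σ.obj Vd) (σ.obj V)).hom ≫
            (Y ◁ (Functor.LaxMonoidal.μ σ Vd V ≫ σ.map ev ≫ (Functor.Monoidal.εIso σ).inv)) ≫
            (ρ_ Y).hom)) := by
  obtain ⟨h1, h2⟩ := h
  refine ⟨⟨sigma_tri1 σ coev ev h1, sigma_tri2 σ coev ev h2⟩, ?_, ?_⟩
  · set us : Vd ⊗ X ⟶ W := (Vd ◁ u) ≫ (α_ Vd V W).inv ≫ (ev ▷ W) ≫ (λ_ W).hom with hus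
    have nat : (P.α V (Vd ⊗ X)).hom ≫ P.F.map (us ▷ σ.obj V)
        = P.F.map (V ◁ us) ≫ (P.α V W).hom := by
      have := P.naturality (𝟙 V) us
      simp only [MonoidalCategory.id_tensorHom, MonoidalCategory.tensorHom_id,
        σ.map_id] at this
      exact this.symm
    show P.F.map ((λ_ X).inv ≫ coev ▷ X ≫ (α_ V Vd X).hom) ≫ (P.α V (Vd ⊗ X)).hom ≫
        P.F.map ((us ▷ σ.obj V) ≫ v) = P.F.map u ≫ (P.α V W).hom ≫ P.F.map v
    rw [P.F.map_comp (us ▷ σ.obj V) v, reassoc_of% nat, ← P.F.map_comp_assoc, zig_left u coev ev h1]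
  · set vs : W ⟶ Y ⊗ σ.obj Vd := (ρ_ W).inv ≫
      (W ◁ (Functor.LaxMonoidal.ε σ ≫ σ.map coev ≫ (Functor.Monoidal.μIso σ V Vd).inv)) ≫
      (α_ W (σ.obj V) (σ.obj Vd)).inv ≫ (v ▷ σ.obj Vd) with hvs
    set w : (Y ⊗ σ.obj Vd) ⊗ σ.obj V ⟶ Y := (α_ Y (σ.obj Vd) (σ.obj V)).hom ≫
      (Y ◁ (Functor.LaxMonoidal.μ σ Vd V ≫ σ.map ev ≫ (Functor.Monoidal.εIso σ).inv)) ≫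
      (ρ_ Y).hom with hw
    have nat : P.F.map (V ◁ vs) ≫ (P.α V (Y ⊗ σ.obj Vd)).hom
        = (P.α V W).hom ≫ P.F.map (vs ▷ σ.obj V) := by
      have := P.naturality (𝟙 V) vs
      simpa only [MonoidalCategory.id_tensorHom, MonoidalCategory.tensorHom_id,
        σ.map_id] using this
    show P.F.map u ≫ (P.α V W).hom ≫ P.F.map v
        = P.F.map (u ≫ (V ◁ vs)) ≫ (P.α V (Y ⊗ σ.obj Vd)).hom ≫ P.F.map w
    have zz : vs ▷ σ.obj V ≫ w = v := zig_right v _ _ (sigma_tri1 σ coev ev h1)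
    rw [P.F.map_comp, Category.assoc, ← Category.assoc (P.F.map (V ◁ vs)), nat,
      Category.assoc, ← P.F.map_comp, zz]
end

section
/- Let (F, α) : C → D be a σ-twisted trace functor. Let u₁ : X → V₁⊗W₁, v₁ : W₁⊗σV₁ → Y, u₂ : Y → V₂⊗W₂, v₂ : W₂⊗σV₂ → Z be morphisms in C, and suppose V₂ has a left dual (V₂*, coev_{V₂}, ev_{V₂}); let u₂* := (ev_{V₂} ⊗ id_{W₂}) ∘ (id_{V₂*} ⊗ u₂) : V₂*⊗Y → W₂ (suppressing associators) be the mate of u₂. Define u : X → (V₁⊗V₂)⊗(V₂*⊗W₁) as u := (id_{V₁} ⊗ coev_{V₂} ⊗ id_{W₁}) ∘ u₁ (up to coherence isomorphisms), and define v : (V₂*⊗W₁)⊗σ(V₁⊗V₂) → Z as the composite (V₂*⊗W₁)⊗σ(V₁⊗V₂) ≅ V₂*⊗(W₁⊗σV₁)⊗σV₂ (via μ_{V₁,V₂}⁻¹ and associators) → V₂*⊗Y⊗σV₂ (via id_{V₂*} ⊗ v₁ ⊗ id_{σV₂}) → Z (via v₂ ∘ (u₂* ⊗ id_{σV₂})).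 Then S^F_{u₂,v₂} ∘ S^F_{u₁,v₁} = S^F_{u,v} as morphisms F(X) → F(Z). -/
open CategoryTheory MonoidalCategory

variable {C : Type*} [Category C] [MonoidalCategory C] (σ : C ⥤ C) [σ.Monoidal]
  {D : Type*} [Category D]

section Aux

variable {Y V₁ W₁ V₂ W₂ V₂d : C}

/-- Zig-zag identity whiskered by `W₂`. -/
private lemma zig_lemma (coev₂ : 𝟙_ C ⟶ V₂ ⊗ V₂d) (ev₂ : V₂d ⊗ V₂ ⟶ 𝟙_ C)
    (h1 : (λ_ V₂).inv ≫ coev₂ ▷ V₂ ≫ (α_ V₂ V₂d V₂).hom ≫ V₂ ◁ ev₂ ≫ (ρ_ V₂).hom = 𝟙 V₂) :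
    (λ_ (V₂ ⊗ W₂)).inv ≫ (coev₂ ▷ (V₂ ⊗ W₂)) ≫ (α_ V₂ V₂d (V₂ ⊗ W₂)).hom ≫
      (V₂ ◁ ((α_ V₂d V₂ W₂).inv ≫ (ev₂ ▷ W₂) ≫ (λ_ W₂).hom)) = 𝟙 (V₂ ⊗ W₂) := by
  calc _ = (((λ_ V₂).inv ≫ coev₂ ▷ V₂ ≫ (α_ V₂ V₂d V₂).hom ≫ (V₂ ◁ ev₂) ≫ (ρ_ V₂).hom) ▷ W₂) := by
        monoidal
    _ = 𝟙 _ := by rw [h1]; simp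

/-- Lemma C: the key computation in `C`. -/
private lemma lemC (Q : C) (v₁ : W₁ ⊗ Q ⟶ Y) (u₂ : Y ⟶ V₂ ⊗ W₂)
    (coev₂ : 𝟙_ C ⟶ V₂ ⊗ V₂d) (ev₂ : V₂d ⊗ V₂ ⟶ 𝟙_ C)
    (h1 : (λ_ V₂).inv ≫ coev₂ ▷ V₂ ≫ (α_ V₂ V₂d V₂).hom ≫ V₂ ◁ ev₂ ≫ (ρ_ V₂).hom = 𝟙 V₂) :
    (((λ_ W₁).inv ≫ (coev₂ ▷ W₁) ≫ (α_ V₂ V₂d W₁).hom) ▷ Q) ≫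
      (α_ V₂ (V₂d ⊗ W₁) Q).hom ≫
      (V₂ ◁ ((α_ V₂d W₁ Q).hom ≫ (V₂d ◁ v₁) ≫
        ((V₂d ◁ u₂) ≫ (α_ V₂d V₂ W₂).inv ≫ (ev₂ ▷ W₂) ≫ (λ_ W₂).hom)))
      = v₁ ≫ u₂ := by
  calc _ = (λ_ (W₁ ⊗ Q)).inv ≫ (coev₂ ▷ (W₁ ⊗ Q)) ≫ ((V₂ ⊗ V₂d) ◁ (v₁ ≫ u₂)) ≫
          (α_ V₂ V₂d (V₂ ⊗ W₂)).hom ≫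
          (V₂ ◁ ((α_ V₂d V₂ W₂).inv ≫ (ev₂ ▷ W₂) ≫ (λ_ W₂).hom)) := by
        simp only [MonoidalCategory.whiskerLeft_comp]
        monoidal
    _ = (λ_ (W₁ ⊗ Q)).inv ≫ ((𝟙_ C) ◁ (v₁ ≫ u₂)) ≫ (coev₂ ▷ (V₂ ⊗ W₂)) ≫
          (α_ V₂ V₂d (V₂ ⊗ W₂)).hom ≫
          (V₂ ◁ ((α_ V₂d V₂ W₂).inv ≫ (ev₂ ▷ W₂) ≫ (λ_ W₂).hom)) := by
        rw [← whisker_exchange_assoc]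
    _ = (v₁ ≫ u₂) ≫ (λ_ (V₂ ⊗ W₂)).inv ≫ (coev₂ ▷ (V₂ ⊗ W₂)) ≫
          (α_ V₂ V₂d (V₂ ⊗ W₂)).hom ≫
          (V₂ ◁ ((α_ V₂d V₂ W₂).inv ≫ (ev₂ ▷ W₂) ≫ (λ_ W₂).hom)) := by
        rw [leftUnitor_inv_naturality_assoc]
    _ = v₁ ≫ u₂ := by rw [zig_lemma coev₂ ev₂ h1]; simp

/-- Lemma B: pure naturality/coherence rearrangement. -/
private lemma lemB (Q R : C) (v₁ : W₁ ⊗ Q ⟶ Y) (mate : V₂d ⊗ Y ⟶ W₂) :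
    (α_ (V₂d ⊗ W₁) Q R).hom ≫
      (α_ V₂d W₁ (Q ⊗ R)).hom ≫ (V₂d ◁ (α_ W₁ Q R).inv) ≫
      (V₂d ◁ (v₁ ▷ R)) ≫ (α_ V₂d Y R).inv ≫ (mate ▷ R)
      = (((α_ V₂d W₁ Q).hom ≫ (V₂d ◁ v₁) ≫ mate) ▷ R) := by
  monoidal

end Aux

/-- composition of `S`-operators. Given
`u₁ : X ⟶ V₁⊗W₁`, `v₁ : W₁⊗σV₁ ⟶ Y`, `u₂ : Y ⟶ V₂⊗W₂`, `v₂ : W₂⊗σV₂ ⟶ Z`,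
and a left dual `(V₂*, coev₂, ev₂)` of `V₂` with mate
`u₂* := (ev₂ ⊗ id) ∘ (id ⊗ u₂) : V₂*⊗Y ⟶ W₂`, set
`u : X ⟶ (V₁⊗V₂)⊗(V₂*⊗W₁)` to be `(id_{V₁} ⊗ coev₂ ⊗ id_{W₁}) ∘ u₁` (up to
coherence isomorphisms), and `v : (V₂*⊗W₁)⊗σ(V₁⊗V₂) ⟶ Z` to be the composite
`(V₂*⊗W₁)⊗σ(V₁⊗V₂) ≅ V₂*⊗((W₁⊗σV₁)⊗σV₂) → V₂*⊗(Y⊗σV₂) → Z` using `μ⁻¹`,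
associators, `v₁` and `v₂ ∘ (u₂* ⊗ id)`.  Then
`S_{u₂,v₂} ∘ S_{u₁,v₁} = S_{u,v}`. -/
theorem TwistedTraceFunctor.S_comp
    (P : TwistedTraceFunctor σ D) {X Y Z V₁ W₁ V₂ W₂ V₂d : C}
    (u₁ : X ⟶ V₁ ⊗ W₁) (v₁ : W₁ ⊗ σ.obj V₁ ⟶ Y)
    (u₂ : Y ⟶ V₂ ⊗ W₂) (v₂ : W₂ ⊗ σ.obj V₂ ⟶ Z)
    (coev₂ : 𝟙_ C ⟶ V₂ ⊗ V₂d) (ev₂ : V₂d ⊗ V₂ ⟶ 𝟙_ C)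
    (h : IsLeftDualPair V₂ V₂d coev₂ ev₂) :
    P.S σ u₁ v₁ ≫ P.S σ u₂ v₂
      = P.S σ
          (u₁ ≫ (V₁ ◁ ((λ_ W₁).inv ≫ (coev₂ ▷ W₁) ≫ (α_ V₂ V₂d W₁).hom)) ≫
            (α_ V₁ V₂ (V₂d ⊗ W₁)).inv)
          (((V₂d ⊗ W₁) ◁ (Functor.Monoidal.μIso σ V₁ V₂).inv) ≫
            ((α_ V₂d W₁ (σ.obj V₁ ⊗ σ.obj V₂)).hom ≫
              (V₂d ◁ (α_ W₁ (σ.obj V₁) (σ.obj V₂)).inv) ≫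
              (V₂d ◁ (v₁ ▷ σ.obj V₂)) ≫
              (α_ V₂d Y (σ.obj V₂)).inv ≫
              ((((V₂d ◁ u₂) ≫ (α_ V₂d V₂ W₂).inv ≫ (ev₂ ▷ W₂) ≫ (λ_ W₂).hom) ▷ σ.obj V₂) ≫ v₂))) := by
  obtain ⟨h1, -⟩ := h
  -- abbreviations
  set g : W₁ ⟶ V₂ ⊗ (V₂d ⊗ W₁) :=
    (λ_ W₁).inv ≫ (coev₂ ▷ W₁) ≫ (α_ V₂ V₂d W₁).hom with hg
  set mate : V₂d ⊗ Y ⟶ W₂ :=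
    (V₂d ◁ u₂) ≫ (α_ V₂d V₂ W₂).inv ≫ (ev₂ ▷ W₂) ≫ (λ_ W₂).hom with hmate
  set t : (V₂d ⊗ W₁) ⊗ σ.obj V₁ ⟶ W₂ :=
    (α_ V₂d W₁ (σ.obj V₁)).hom ≫ (V₂d ◁ v₁) ≫ mate with ht
  set w : (V₂d ⊗ W₁) ⊗ (σ.obj V₁ ⊗ σ.obj V₂) ⟶ Z :=
    (α_ V₂d W₁ (σ.obj V₁ ⊗ σ.obj V₂)).hom ≫
      (V₂d ◁ (α_ W₁ (σ.obj V₁) (σ.obj V₂)).inv) ≫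
      (V₂d ◁ (v₁ ▷ σ.obj V₂)) ≫
      (α_ V₂d Y (σ.obj V₂)).inv ≫ ((mate ▷ σ.obj V₂) ≫ v₂) with hw
  have nat₁ : P.F.map (V₁ ◁ g) ≫ (P.α V₁ (V₂ ⊗ (V₂d ⊗ W₁))).hom
      = (P.α V₁ W₁).hom ≫ P.F.map (g ▷ σ.obj V₁) := by
    simpa using P.naturality (𝟙 V₁) g
  have nat₂ : P.F.map (V₂ ◁ t) ≫ (P.α V₂ W₂).hom
      = (P.α V₂ ((V₂d ⊗ W₁) ⊗ σ.obj V₁)).hom ≫ P.F.map (t ▷ σ.obj V₂) := by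
    simpa using P.naturality (𝟙 V₂) t
  have coh := P.coherence V₁ V₂ (V₂d ⊗ W₁)
  have coh' : (P.α (V₁ ⊗ V₂) (V₂d ⊗ W₁)).hom ≫
        P.F.map ((V₂d ⊗ W₁) ◁ (Functor.Monoidal.μIso σ V₁ V₂).inv)
      = P.F.map (α_ V₁ V₂ (V₂d ⊗ W₁)).hom ≫ (P.α V₁ (V₂ ⊗ (V₂d ⊗ W₁))).hom ≫
          P.F.map (α_ V₂ (V₂d ⊗ W₁) (σ.obj V₁)).hom ≫
          (P.α V₂ ((V₂d ⊗ W₁) ⊗ σ.obj V₁)).hom ≫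
          P.F.map (α_ (V₂d ⊗ W₁) (σ.obj V₁) (σ.obj V₂)).hom := by
    rw [← cancel_mono (P.F.map (α_ (V₂d ⊗ W₁) (σ.obj V₁) (σ.obj V₂)).inv)]
    simp only [Category.assoc, ← P.F.map_comp, Iso.hom_inv_id, P.F.map_id, Category.comp_id]
    simpa using coh
  have hBC : (α_ (V₂d ⊗ W₁) (σ.obj V₁) (σ.obj V₂)).hom ≫ w = (t ▷ σ.obj V₂) ≫ v₂ := by
    rw [hw, ht]
    simpa [Category.assoc] using congrArg (· ≫ v₂) (lemB (σ.obj V₁) (σ.obj V₂) v₁ mate)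
  have hCc : (g ▷ σ.obj V₁) ≫ (α_ V₂ (V₂d ⊗ W₁) (σ.obj V₁)).hom ≫ (V₂ ◁ t) = v₁ ≫ u₂ := by
    rw [hg, ht, hmate]
    exact lemC (σ.obj V₁) v₁ u₂ coev₂ ev₂ h1
  -- main computation
  simp only [TwistedTraceFunctor.S, Functor.map_comp, Category.assoc]
  rw [reassoc_of% coh']
  simp only [← Functor.map_comp, ← Functor.map_comp_assoc, Iso.inv_hom_id_assoc, Iso.inv_hom_id, Category.comp_id, Category.assoc]
  rw [hBC, P.F.map_comp (t ▷ σ.obj V₂) v₂, P.F.map_comp u₁ (V₁ ◁ g),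
    ← reassoc_of% nat₂]
  simp only [Category.assoc]
  rw [reassoc_of% nat₁]
  simp only [← Functor.map_comp_assoc, Category.assoc]
  rw [hCc]
end

section
/- Let C be a monoidal category, take σ = id_C (with identity structure isomorphisms), and let (F, α) : C → D be an id-twisted trace functor. Then: (i) S^F_1 = id_{F(1)}, where the unit object 1 is given the left dual 1 with coevaluation and evaluation the unitor isomorphisms; (ii) if V ≅ V' are isomorphic objects with left duals, then S^F_V = S^F_{V'}; (iii) for any two objects V, V' with left duals, S^F_{V'} ∘ S^F_V = S^F_{V⊗V'}, where V⊗V' is given the left dual V'*⊗V* with the induced coevaluation and evaluation. -/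
open CategoryTheory MonoidalCategory

variable {C : Type*} [Category C] [MonoidalCategory C] {D : Type*} [Category D]

/-- For an `id`-twisted trace functor `(F, α)` (i.e. `σ = 𝟭 C` with identity
structure isomorphisms) and an object `V` with left dual `(Vd, coev, ev)`, the
endomorphism `S^F_V := F ev ∘ α_{V,Vd} ∘ F coev` of `F (𝟙_ C)`. -/
def TwistedTraceFunctor.Sdual (P : TwistedTraceFunctor (𝟭 C) D) {V Vd : C}
    (coev : 𝟙_ C ⟶ V ⊗ Vd) (ev : Vd ⊗ V ⟶ 𝟙_ C) :
    P.F.obj (𝟙_ C) ⟶ P.F.obj (𝟙_ C) :=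
  P.F.map coev ≫ (P.α V Vd).hom ≫ P.F.map ev


namespace TwistedTraceFunctor

variable (P : TwistedTraceFunctor (𝟭 C) D)

lemma natL {X X' : C} (f : X ⟶ X') (Y : C) :
    P.F.map (f ▷ Y) ≫ (P.α X' Y).hom = (P.α X Y).hom ≫ P.F.map (Y ◁ f) := by
  simpa [tensorHom_id, id_tensorHom] using P.naturality f (𝟙 Y)

lemma natR (X : C) {Y Y' : C} (g : Y ⟶ Y') :
    P.F.map (X ◁ g) ≫ (P.α X Y').hom = (P.α X Y).hom ≫ P.F.map (g ▷ X) := by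
  simpa [tensorHom_id, id_tensorHom] using P.naturality (𝟙 X) g

lemma coh (X Y Z : C) :
    (P.α (X ⊗ Y) Z).hom
      = P.F.map (α_ X Y Z).hom ≫ (P.α X (Y ⊗ Z)).hom ≫
          P.F.map (α_ Y Z X).hom ≫ (P.α Y (Z ⊗ X)).hom ≫ P.F.map (α_ Z X Y).hom := by
  have h := P.coherence X Y Z
  simp only [Functor.id_obj, Functor.Monoidal.μIso, Functor.LaxMonoidal.id_μ,
    Functor.OplaxMonoidal.id_δ, MonoidalCategory.whiskerLeft_id, P.F.map_id,
    Category.id_comp] at h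
  rw [← cancel_mono (P.F.map (α_ Z X Y).inv)]
  simpa using h

lemma a_one (Y Z : C) :
    P.F.map (α_ (𝟙_ C) Y Z).hom ≫ (P.α (𝟙_ C) (Y ⊗ Z)).hom ≫ P.F.map (ρ_ (Y ⊗ Z)).hom
      = P.F.map ((λ_ Y).hom ▷ Z) := by
  rw [← cancel_mono ((P.α Y Z).hom), ← cancel_mono (P.F.map ((ρ_ Z).inv ▷ Y)),
    ← cancel_mono (P.F.map (α_ Z (𝟙_ C) Y).hom)]
  have hρ : P.F.map (ρ_ (Y ⊗ Z)).hom
      = P.F.map (α_ Y Z (𝟙_ C)).hom ≫ P.F.map (Y ◁ (ρ_ Z).hom) := by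
    rw [← P.F.map_comp]; congr 1; monoidal
  simp only [Category.assoc]
  calc P.F.map (α_ (𝟙_ C) Y Z).hom ≫ (P.α (𝟙_ C) (Y ⊗ Z)).hom ≫ P.F.map (ρ_ (Y ⊗ Z)).hom ≫
        (P.α Y Z).hom ≫ P.F.map ((ρ_ Z).inv ▷ Y) ≫ P.F.map (α_ Z (𝟙_ C) Y).hom
      = P.F.map (α_ (𝟙_ C) Y Z).hom ≫ (P.α (𝟙_ C) (Y ⊗ Z)).hom ≫
          P.F.map (α_ Y Z (𝟙_ C)).hom ≫ (P.F.map (Y ◁ (ρ_ Z).hom) ≫ (P.α Y Z).hom) ≫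
          P.F.map ((ρ_ Z).inv ▷ Y) ≫ P.F.map (α_ Z (𝟙_ C) Y).hom := by
        rw [hρ]; simp only [Category.assoc]
    _ = P.F.map (α_ (𝟙_ C) Y Z).hom ≫ (P.α (𝟙_ C) (Y ⊗ Z)).hom ≫
          P.F.map (α_ Y Z (𝟙_ C)).hom ≫ (P.α Y (Z ⊗ 𝟙_ C)).hom ≫
          (P.F.map ((ρ_ Z).hom ▷ Y) ≫ P.F.map ((ρ_ Z).inv ▷ Y)) ≫
          P.F.map (α_ Z (𝟙_ C) Y).hom := by
        rw [P.natR Y (ρ_ Z).hom]; simp only [Category.assoc]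
    _ = (P.α (𝟙_ C ⊗ Y) Z).hom := by
        rw [show P.F.map ((ρ_ Z).hom ▷ Y) ≫ P.F.map ((ρ_ Z).inv ▷ Y) = 𝟙 _ from by
          rw [← P.F.map_comp]; simp]
        rw [P.coh (𝟙_ C) Y Z]
        simp
    _ = P.F.map ((λ_ Y).hom ▷ Z) ≫ (P.α Y Z).hom ≫ P.F.map ((ρ_ Z).inv ▷ Y) ≫
          P.F.map (α_ Z (𝟙_ C) Y).hom := by
        have h9 : P.F.map ((ρ_ Z).inv ▷ Y) ≫ P.F.map (α_ Z (𝟙_ C) Y).hom ≫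
            P.F.map (Z ◁ (λ_ Y).hom) = 𝟙 (P.F.obj (Z ⊗ Y)) := by
          rw [← P.F.map_comp, ← P.F.map_comp]
          convert P.F.map_id (Z ⊗ Y) using 2
          monoidal
        rw [← cancel_mono (P.F.map (Z ◁ (λ_ Y).hom))]
        simp only [Category.assoc]
        rw [← P.natL (λ_ Y).hom Z, h9]
        simp

lemma part_one : P.Sdual (λ_ (𝟙_ C)).inv (λ_ (𝟙_ C)).hom = 𝟙 (P.F.obj (𝟙_ C)) := by
  have h1 := P.natR (𝟙_ C) (λ_ (𝟙_ C)).hom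
  have h2 := P.a_one (𝟙_ C) (𝟙_ C)
  have ha : (P.α (𝟙_ C) (𝟙_ C ⊗ 𝟙_ C)).hom
      = P.F.map (α_ (𝟙_ C) (𝟙_ C) (𝟙_ C)).inv ≫ P.F.map ((λ_ (𝟙_ C)).hom ▷ (𝟙_ C)) ≫
        P.F.map (ρ_ (𝟙_ C ⊗ 𝟙_ C)).inv := by
    rw [← cancel_epi (P.F.map (α_ (𝟙_ C) (𝟙_ C) (𝟙_ C)).hom),
      ← cancel_mono (P.F.map (ρ_ (𝟙_ C ⊗ 𝟙_ C)).hom)]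
    simp only [Category.assoc] at h2 ⊢
    rw [h2]
    simp only [← P.F.map_comp, Category.assoc, Iso.hom_inv_id_assoc, Iso.inv_hom_id,
      Category.comp_id, Iso.inv_hom_id_assoc]
  have hb : (P.α (𝟙_ C) (𝟙_ C)).hom
      = P.F.map ((𝟙_ C) ◁ (λ_ (𝟙_ C)).inv) ≫ (P.α (𝟙_ C) (𝟙_ C ⊗ 𝟙_ C)).hom ≫
        P.F.map ((λ_ (𝟙_ C)).hom ▷ (𝟙_ C)) := by
    calc (P.α (𝟙_ C) (𝟙_ C)).hom
        = P.F.map ((𝟙_ C) ◁ (λ_ (𝟙_ C)).inv) ≫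
            (P.F.map ((𝟙_ C) ◁ (λ_ (𝟙_ C)).hom) ≫ (P.α (𝟙_ C) (𝟙_ C)).hom) := by
          rw [← P.F.map_comp_assoc]
          simp [← MonoidalCategory.whiskerLeft_comp]
      _ = P.F.map ((𝟙_ C) ◁ (λ_ (𝟙_ C)).inv) ≫ (P.α (𝟙_ C) (𝟙_ C ⊗ 𝟙_ C)).hom ≫
            P.F.map ((λ_ (𝟙_ C)).hom ▷ (𝟙_ C)) := by rw [h1]
  rw [Sdual, hb, ha]
  simp only [← P.F.map_comp, ← Category.assoc]
  simp only [← P.F.map_comp, Category.assoc]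
  rw [show (λ_ (𝟙_ C)).inv ≫ (𝟙_ C) ◁ (λ_ (𝟙_ C)).inv ≫ (α_ (𝟙_ C) (𝟙_ C) (𝟙_ C)).inv ≫
      (λ_ (𝟙_ C)).hom ▷ (𝟙_ C) ≫ (ρ_ (𝟙_ C ⊗ 𝟙_ C)).inv ≫ (λ_ (𝟙_ C)).hom ▷ (𝟙_ C) ≫
      (λ_ (𝟙_ C)).hom = 𝟙 (𝟙_ C) by monoidal]
  simp

end TwistedTraceFunctor

namespace TwistedTraceFunctor

/-- Convert a left dual pair into a Mathlib `ExactPairing`. -/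
def toExactPairing {V Vd : C} (coev : 𝟙_ C ⟶ V ⊗ Vd) (ev : Vd ⊗ V ⟶ 𝟙_ C)
    (h : IsLeftDualPair V Vd coev ev) : ExactPairing V Vd where
  coevaluation' := coev
  evaluation' := ev
  coevaluation_evaluation' := by
    rw [← cancel_epi (ρ_ Vd).inv, ← cancel_mono (λ_ Vd).hom]
    simpa using h.2
  evaluation_coevaluation' := by
    rw [← cancel_epi (λ_ V).inv, ← cancel_mono (ρ_ V).hom]
    simpa using h.1

variable (P : TwistedTraceFunctor (𝟭 C) D)

/-- The twisted dual-trace only depends on the object, not the duality data. -/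
lemma Sdual_congr {V A B : C} (p : ExactPairing V A) (q : ExactPairing V B) :
    P.Sdual (@ExactPairing.coevaluation C _ _ V A p) (@ExactPairing.evaluation C _ _ V A p)
      = P.Sdual (@ExactPairing.coevaluation C _ _ V B q) (@ExactPairing.evaluation C _ _ V B q) := by
  let ψ : A ⟶ B := @rightAdjointMate C _ _ V V ⟨B⟩ ⟨A⟩ (𝟙 V)
  have hA : @ExactPairing.coevaluation C _ _ V A p ≫ V ◁ ψ
      = @ExactPairing.coevaluation C _ _ V B q := by
    have := @coevaluation_comp_rightAdjointMate C _ _ V V ⟨B⟩ ⟨A⟩ (𝟙 V)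
    simpa using this
  have hB : ψ ▷ V ≫ @ExactPairing.evaluation C _ _ V B q
      = @ExactPairing.evaluation C _ _ V A p := by
    have := @rightAdjointMate_comp_evaluation C _ _ V V ⟨B⟩ ⟨A⟩ (𝟙 V)
    simpa using this
  rw [Sdual, Sdual, ← hA, ← hB]
  simp only [P.F.map_comp, Category.assoc]
  rw [reassoc_of% (P.natR V ψ)]

lemma part_two {V V' Vd V'd : C} (coev : 𝟙_ C ⟶ V ⊗ Vd) (ev : Vd ⊗ V ⟶ 𝟙_ C)
    (coev' : 𝟙_ C ⟶ V' ⊗ V'd) (ev' : V'd ⊗ V' ⟶ 𝟙_ C)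
    (h : IsLeftDualPair V Vd coev ev) (h' : IsLeftDualPair V' V'd coev' ev')
    (φ : V ≅ V') : P.Sdual coev ev = P.Sdual coev' ev' := by
  letI p : ExactPairing V Vd := toExactPairing coev ev h
  letI q : ExactPairing V' V'd := toExactPairing coev' ev' h'
  letI pt : ExactPairing V' Vd := exactPairingCongrLeft (φ.symm)
  have hcoev : @ExactPairing.coevaluation C _ _ V' Vd pt = coev ≫ φ.hom ▷ Vd := rfl
  have hev : @ExactPairing.evaluation C _ _ V' Vd pt = Vd ◁ φ.inv ≫ ev := rfl
  have hcoev' : @ExactPairing.coevaluation C _ _ V' V'd q = coev' := rfl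
  have hev' : @ExactPairing.evaluation C _ _ V' V'd q = ev' := rfl
  have step1 : P.Sdual coev ev
      = P.Sdual (@ExactPairing.coevaluation C _ _ V' Vd pt)
          (@ExactPairing.evaluation C _ _ V' Vd pt) := by
    rw [hcoev, hev, Sdual, Sdual, P.F.map_comp, P.F.map_comp, Category.assoc,
      reassoc_of% (P.natL φ.hom Vd), ← P.F.map_comp_assoc]
    simp [← MonoidalCategory.whiskerLeft_comp]
  rw [step1, P.Sdual_congr pt q, hcoev', hev']

lemma part_three {V V' Vd V'd : C} (coev : 𝟙_ C ⟶ V ⊗ Vd) (ev : Vd ⊗ V ⟶ 𝟙_ C)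
    (coev' : 𝟙_ C ⟶ V' ⊗ V'd) (ev' : V'd ⊗ V' ⟶ 𝟙_ C) :
    P.Sdual coev ev ≫ P.Sdual coev' ev'
      = P.Sdual
          (coev ≫ (V ◁ (λ_ Vd).inv) ≫ (V ◁ (coev' ▷ Vd)) ≫
            (V ◁ (α_ V' V'd Vd).hom) ≫ (α_ V V' (V'd ⊗ Vd)).inv)
          ((α_ V'd Vd (V ⊗ V')).hom ≫ (V'd ◁ (α_ Vd V V').inv) ≫
            (V'd ◁ (ev ▷ V')) ≫ (V'd ◁ (λ_ V').hom) ≫ ev') := by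
  have e1 : (coev ≫ (V ◁ (λ_ Vd).inv) ≫ (V ◁ (coev' ▷ Vd)) ≫
      (V ◁ (α_ V' V'd Vd).hom) ≫ (α_ V V' (V'd ⊗ Vd)).inv) ≫ (α_ V V' (V'd ⊗ Vd)).hom
      = coev ≫ V ◁ ((λ_ Vd).inv ≫ (coev' ▷ Vd) ≫ (α_ V' V'd Vd).hom) := by
    simp [MonoidalCategory.whiskerLeft_comp]
  have e2 : (α_ (V'd ⊗ Vd) V V').hom ≫ ((α_ V'd Vd (V ⊗ V')).hom ≫ (V'd ◁ (α_ Vd V V').inv) ≫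
      (V'd ◁ (ev ▷ V')) ≫ (V'd ◁ (λ_ V').hom) ≫ ev')
      = (((α_ V'd Vd V).hom ≫ (V'd ◁ ev) ≫ (ρ_ V'd).hom) ▷ V') ≫ ev' := by
    calc (α_ (V'd ⊗ Vd) V V').hom ≫ ((α_ V'd Vd (V ⊗ V')).hom ≫ (V'd ◁ (α_ Vd V V').inv) ≫
          (V'd ◁ (ev ▷ V')) ≫ (V'd ◁ (λ_ V').hom) ≫ ev')
        = 𝟙 _ ⊗≫ (V'd ◁ ev) ▷ V' ⊗≫ ev' := by monoidal
      _ = (((α_ V'd Vd V).hom ≫ (V'd ◁ ev) ≫ (ρ_ V'd).hom) ▷ V') ≫ ev' := by monoidal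
  have e3 : ((λ_ Vd).inv ≫ (coev' ▷ Vd) ≫ (α_ V' V'd Vd).hom) ▷ V ≫
      ((α_ V' (V'd ⊗ Vd) V).hom ≫
      V' ◁ ((α_ V'd Vd V).hom ≫ (V'd ◁ ev) ≫ (ρ_ V'd).hom)) = ev ≫ coev' := by
    calc ((λ_ Vd).inv ≫ (coev' ▷ Vd) ≫ (α_ V' V'd Vd).hom) ▷ V ≫
          ((α_ V' (V'd ⊗ Vd) V).hom ≫
          V' ◁ ((α_ V'd Vd V).hom ≫ (V'd ◁ ev) ≫ (ρ_ V'd).hom))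
        = 𝟙 _ ⊗≫ (coev' ▷ (Vd ⊗ V) ≫ (V' ⊗ V'd) ◁ ev) ⊗≫ 𝟙 _ := by monoidal
      _ = 𝟙 _ ⊗≫ (𝟙_ C ◁ ev ≫ coev' ▷ 𝟙_ C) ⊗≫ 𝟙 _ := by rw [← whisker_exchange]
      _ = ev ≫ coev' := by monoidal
  symm
  rw [Sdual, Sdual, Sdual, P.coh V V' (V'd ⊗ Vd)]
  simp only [Category.assoc]
  have E1 : P.F.map (coev ≫ (V ◁ (λ_ Vd).inv) ≫ (V ◁ (coev' ▷ Vd)) ≫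
      (V ◁ (α_ V' V'd Vd).hom) ≫ (α_ V V' (V'd ⊗ Vd)).inv) ≫
      P.F.map (α_ V V' (V'd ⊗ Vd)).hom
      = P.F.map coev ≫ P.F.map (V ◁ ((λ_ Vd).inv ≫ (coev' ▷ Vd) ≫ (α_ V' V'd Vd).hom)) := by
    rw [← P.F.map_comp, ← P.F.map_comp, e1]
  have E2 : P.F.map (α_ (V'd ⊗ Vd) V V').hom ≫ P.F.map ((α_ V'd Vd (V ⊗ V')).hom ≫
      (V'd ◁ (α_ Vd V V').inv) ≫ (V'd ◁ (ev ▷ V')) ≫ (V'd ◁ (λ_ V').hom) ≫ ev')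
      = P.F.map (((α_ V'd Vd V).hom ≫ (V'd ◁ ev) ≫ (ρ_ V'd).hom) ▷ V') ≫ P.F.map ev' := by
    rw [← P.F.map_comp, ← P.F.map_comp, e2]
  have E3 : P.F.map (((λ_ Vd).inv ≫ (coev' ▷ Vd) ≫ (α_ V' V'd Vd).hom) ▷ V) ≫
      P.F.map (α_ V' (V'd ⊗ Vd) V).hom ≫
      P.F.map (V' ◁ ((α_ V'd Vd V).hom ≫ (V'd ◁ ev) ≫ (ρ_ V'd).hom))
      = P.F.map ev ≫ P.F.map coev' := by
    rw [← P.F.map_comp, ← P.F.map_comp, e3, P.F.map_comp]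
  rw [reassoc_of% E1, E2,
    reassoc_of% (P.natR V ((λ_ Vd).inv ≫ (coev' ▷ Vd) ≫ (α_ V' V'd Vd).hom)),
    ← reassoc_of% (P.natR V' ((α_ V'd Vd V).hom ≫ (V'd ◁ ev) ≫ (ρ_ V'd).hom)),
    reassoc_of% E3]

end TwistedTraceFunctor

/-- for an `id`-twisted trace functor `(F, α)`:
(i) `S_𝟙 = id_{F 𝟙}` for the unit object with its unitor (co)evaluation;
(ii) `S_V` only depends on the isomorphism class of `V`;
(iii) `S_{V'} ∘ S_V = S_{V ⊗ V'}`, where `V ⊗ V'` carries the left dual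
`V'd ⊗ Vd` with the induced (co)evaluation maps. -/
theorem TwistedTraceFunctor.Sdual_props (P : TwistedTraceFunctor (𝟭 C) D) :
    (P.Sdual (λ_ (𝟙_ C)).inv (λ_ (𝟙_ C)).hom = 𝟙 (P.F.obj (𝟙_ C))) ∧
    (∀ (V V' Vd V'd : C) (coev : 𝟙_ C ⟶ V ⊗ Vd) (ev : Vd ⊗ V ⟶ 𝟙_ C)
        (coev' : 𝟙_ C ⟶ V' ⊗ V'd) (ev' : V'd ⊗ V' ⟶ 𝟙_ C),
        IsLeftDualPair V Vd coev ev → IsLeftDualPair V' V'd coev' ev' →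
        (V ≅ V') → P.Sdual coev ev = P.Sdual coev' ev') ∧
    (∀ (V V' Vd V'd : C) (coev : 𝟙_ C ⟶ V ⊗ Vd) (ev : Vd ⊗ V ⟶ 𝟙_ C)
        (coev' : 𝟙_ C ⟶ V' ⊗ V'd) (ev' : V'd ⊗ V' ⟶ 𝟙_ C),
        IsLeftDualPair V Vd coev ev → IsLeftDualPair V' V'd coev' ev' →
        P.Sdual coev ev ≫ P.Sdual coev' ev'
          = P.Sdual
              (coev ≫ (V ◁ (λ_ Vd).inv) ≫ (V ◁ (coev' ▷ Vd)) ≫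
                (V ◁ (α_ V' V'd Vd).hom) ≫ (α_ V V' (V'd ⊗ Vd)).inv)
              ((α_ V'd Vd (V ⊗ V')).hom ≫ (V'd ◁ (α_ Vd V V').inv) ≫
                (V'd ◁ (ev ▷ V')) ≫ (V'd ◁ (λ_ V').hom) ≫ ev')) := by
  exact ⟨P.part_one,
    fun V V' Vd V'd coev ev coev' ev' h h' φ => P.part_two coev ev coev' ev' h h' φ,
    fun V V' Vd V'd coev ev coev' ev' _ _ => P.part_three coev ev coev' ev'⟩
end

section
/- Let C be a preadditive monoidal category with binary biproducts in which the tensor product is additive in each variable, take σ = id_C (with identity structure isomorphisms), let D be a preadditive category, and let (F, α) : C → D be an id-twisted trace functor with F an additive functor. If V and V' are objects of C with left duals, then S^F_{V⊕V'} = S^F_V + S^F_{V'} in End(F(1)), where V⊕V' is given the left dual V*⊕V'* with the induced coevaluation and evaluation. -/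
open CategoryTheory MonoidalCategory CategoryTheory.Limits

variable {C : Type*} [Category C] [MonoidalCategory C] {D : Type*} [Category D]

/-- additivity of the `S`-operators.  Let `C` be a preadditive
monoidal category with binary biproducts in which the tensor product is
additive in each variable, `D` a preadditive category, and `(F, α)` an
`id`-twisted trace functor with `F` additive.  For objects `V`, `V'` with left
duals, `S_{V ⊞ V'} = S_V + S_{V'}` in `End (F (𝟙_ C))`, where `V ⊞ V'` carries
the left dual `Vd ⊞ V'd` with the induced (co)evaluation maps. -/
theorem TwistedTraceFunctor.Sdual_biprod
    [Preadditive C] [MonoidalPreadditive C] [HasBinaryBiproducts C] [Preadditive D]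
    (P : TwistedTraceFunctor (𝟭 C) D) (hF : P.F.Additive)
    (V V' Vd V'd : C) (coev : 𝟙_ C ⟶ V ⊗ Vd) (ev : Vd ⊗ V ⟶ 𝟙_ C)
    (coev' : 𝟙_ C ⟶ V' ⊗ V'd) (ev' : V'd ⊗ V' ⟶ 𝟙_ C)
    (h : IsLeftDualPair V Vd coev ev) (h' : IsLeftDualPair V' V'd coev' ev') :
    P.Sdual
        (coev ≫ ((biprod.inl : V ⟶ V ⊞ V') ⊗ₘ (biprod.inl : Vd ⟶ Vd ⊞ V'd)) +
          coev' ≫ ((biprod.inr : V' ⟶ V ⊞ V') ⊗ₘ (biprod.inr : V'd ⟶ Vd ⊞ V'd)))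
        (((biprod.fst : Vd ⊞ V'd ⟶ Vd) ⊗ₘ (biprod.fst : V ⊞ V' ⟶ V)) ≫ ev +
          ((biprod.snd : Vd ⊞ V'd ⟶ V'd) ⊗ₘ (biprod.snd : V ⊞ V' ⟶ V')) ≫ ev')
      = P.Sdual coev ev + P.Sdual coev' ev' := by
  haveI := hF
  have key : ∀ (A B A' B' : C) (c : 𝟙_ C ⟶ A ⊗ B) (e : B' ⊗ A' ⟶ 𝟙_ C)
      (i : A ⟶ V ⊞ V') (j : B ⟶ Vd ⊞ V'd) (p : Vd ⊞ V'd ⟶ B') (q : V ⊞ V' ⟶ A'),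
      P.F.map (c ≫ (i ⊗ₘ j)) ≫ (P.α (V ⊞ V') (Vd ⊞ V'd)).hom ≫ P.F.map ((p ⊗ₘ q) ≫ e)
        = P.F.map c ≫ (P.α A B).hom ≫ P.F.map ((j ≫ p) ⊗ₘ (i ≫ q)) ≫ P.F.map e := by
    intro A B A' B' c e i j p q
    have nat := P.naturality i j
    simp only [Functor.id_obj, Functor.id_map] at nat
    rw [P.F.map_comp, P.F.map_comp, Category.assoc, reassoc_of% nat,
      ← P.F.map_comp_assoc, ← tensorHom_comp_tensorHom]
  dsimp only [TwistedTraceFunctor.Sdual]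
  rw [P.F.map_add, P.F.map_add]
  simp only [Preadditive.add_comp, Preadditive.comp_add]
  rw [key, key, key, key]
  simp only [biprod.inl_fst, biprod.inl_snd, biprod.inr_fst, biprod.inr_snd,
    MonoidalPreadditive.zero_tensor, MonoidalPreadditive.tensor_zero,
    Functor.map_zero, Limits.comp_zero, Limits.zero_comp,
    id_tensorHom_id, P.F.map_id, Category.id_comp, add_zero, zero_add]
  simp [biprod.inl_fst, biprod.inr_snd, id_tensorHom_id]
end

section
/- Consider morphisms of schemes q : E → D, p : D → C, g : Z → Y, f : Y → X, c : E → Z, b : D → Y, a : C → X satisfying b ∘ q = g ∘ c and a ∘ p = f ∘ b (so that a ∘ (p ∘ q) = (f ∘ g) ∘ c). If the induced morphism E → D ×_Y Z (with respect to b and g) and the induced morphism D → C ×_X Y (with respect to a and f) are both proper, then the induced morphism E → C ×_X Z (with respect to a and f ∘ g) is proper. In other words, a vertical composition of base changeable squares is base changeable. -/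
open CategoryTheory AlgebraicGeometry CategoryTheory.Limits

/-- a vertical composition of base changeable squares of schemes is
base changeable.  Given `q : E ⟶ D`, `p : D ⟶ C`, `g : Z ⟶ Y`, `f : Y ⟶ X`,
`c : E ⟶ Z`, `b : D ⟶ Y`, `a : C ⟶ X` with `q ≫ b = c ≫ g` and `p ≫ a = b ≫ f`,
if the induced morphisms `E ⟶ D ×_Y Z` and `D ⟶ C ×_X Y` are proper, then so is
the induced morphism `E ⟶ C ×_X Z` (with respect to `a` and `g ≫ f`). -/
theorem proper_lift_comp
    {E D C Z Y X : Scheme}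
    (q : E ⟶ D) (p : D ⟶ C) (g : Z ⟶ Y) (f : Y ⟶ X)
    (c : E ⟶ Z) (b : D ⟶ Y) (a : C ⟶ X)
    (w₁ : q ≫ b = c ≫ g) (w₂ : p ≫ a = b ≫ f)
    (h₁ : IsProper (pullback.lift q c w₁))
    (h₂ : IsProper (pullback.lift p b w₂)) :
    IsProper (pullback.lift (q ≫ p) c
      (by rw [Category.assoc, w₂, ← Category.assoc, w₁, Category.assoc])) := by
  -- `W = C ×_X Z`, `Paf = C ×_X Y`, `Pbg = D ×_Y Z`
  -- Step 1: `W` is a pullback of `g` along `snd : Paf ⟶ Y`.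
  have t := IsPullback.of_hasPullback a f
  have sqW := IsPullback.of_right'
    (s := IsPullback.of_hasPullback a (g ≫ f)) (t := t)
  set k : pullback a (g ≫ f) ⟶ pullback a f :=
    t.lift (pullback.fst a (g ≫ f)) (pullback.snd a (g ≫ f) ≫ g)
      (by rw [pullback.condition, Category.assoc]) with hk
  -- Step 2: `Pbg` is a pullback of `lift p b` along `k`.
  have sBig : IsPullback (pullback.snd b g) (pullback.fst b g) g
      (pullback.lift p b w₂ ≫ pullback.snd a f) := by
    rw [pullback.lift_snd]
    exact (IsPullback.of_hasPullback b g).flip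
  have sqN := IsPullback.of_right' (s := sBig) (t := sqW.flip)
  set n : pullback b g ⟶ pullback a (g ≫ f) :=
    sqW.flip.lift (pullback.snd b g) (pullback.fst b g ≫ pullback.lift p b w₂)
      (by rw [sBig.w, Category.assoc]) with hn
  have hnk : n ≫ k = pullback.fst b g ≫ pullback.lift p b w₂ := sqN.w
  have hnsnd : n ≫ pullback.snd a (g ≫ f) = pullback.snd b g :=
    sqW.flip.lift_fst _ _ _
  have hnProper : IsProper n :=
    MorphismProperty.of_isPullback (P := @IsProper) sqN.flip h₂
  have key : pullback.lift (q ≫ p) c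
      (by rw [Category.assoc, w₂, ← Category.assoc, w₁, Category.assoc]) =
      pullback.lift q c w₁ ≫ n := by
    apply pullback.hom_ext
    · have : n ≫ pullback.fst a (g ≫ f) = pullback.fst b g ≫ p := by
        have := congrArg (· ≫ pullback.fst a f) hnk
        simpa [hk, Category.assoc, pullback.lift_fst] using this
      simp [Category.assoc, this, pullback.lift_fst, pullback.lift_fst_assoc]
    · simp [Category.assoc, hnsnd, pullback.lift_snd, pullback.lift_snd_assoc]
  rw [key]
  exact MorphismProperty.comp_mem _ _ _ h₁ hnProper
end

section
/- Let G be a locally compact Hausdorff topological group, μ a left-invariant Haar measure on G, and K a compact open subgroup of G with μ(K) = 1. Let f, g : G → ℝ be compactly supported functions which are bi-K-invariant (f(k₁·x·k₂) = f(x) for all k₁, k₂ ∈ K and x ∈ G, and likewise for g) and which take values in the image of ℤ in ℝ. Then for every x ∈ G the integral (f * g)(x) = ∫_G f(y)·g(y⁻¹·x) dμ(y) exists and lies in the image of ℤ in ℝ; that is, the convolution f * g is again ℤ-valued. -/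
open MeasureTheory Pointwise

/-- If `h` is integrable, right-`K`-invariant, `ℤ`-valued and supported on
finitely many left cosets of `K`, its integral is an integer. -/
lemma intValued_integral_aux
    {G : Type*} [Group G] [TopologicalSpace G] [IsTopologicalGroup G]
    [MeasurableSpace G] [BorelSpace G]
    (μ : Measure G) [μ.IsMulLeftInvariant]
    (K : Subgroup G) (hKopen : IsOpen (K : Set G)) (hK1 : μ (K : Set G) = 1)
    (t : Finset G) (h : G → ℝ) (hint : Integrable h μ)
    (hsupp : Function.support h ⊆ ⋃ y ∈ t, y • (K : Set G))
    (hinv : ∀ y : G, ∀ k ∈ K, h (y * k) = h y)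
    (hZ : ∀ y : G, ∃ n : ℤ, h y = (n : ℝ)) :
    ∃ n : ℤ, (∫ y, h y ∂μ) = (n : ℝ) := by
  classical
  induction t using Finset.induction_on generalizing h with
  | empty =>
    refine ⟨0, ?_⟩
    have hz : h = 0 := by
      funext y
      by_contra hy
      have := hsupp (by simpa [Function.mem_support] using hy)
      simpa using this
    simp [hz]
  | @insert a s ha IH =>
    have hmeas : MeasurableSet (a • (K : Set G)) := (hKopen.smul a).measurableSet
    have hμaK : μ (a • (K : Set G)) = 1 := by
      rw [MeasureTheory.measure_smul μ a (K : Set G), hK1]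
    -- new function vanishing on `a • K`
    set h' : G → ℝ := h - (a • (K : Set G)).indicator (fun _ => h a) with hh'
    have hmem : ∀ z : G, z ∈ a • (K : Set G) ↔ a⁻¹ * z ∈ K := by
      intro z
      rw [Set.mem_smul_set_iff_inv_smul_mem]; rfl
    have hconst : ∀ z ∈ a • (K : Set G), h z = h a := by
      intro z hz
      have hk : a⁻¹ * z ∈ K := (hmem z).1 hz
      have := hinv a (a⁻¹ * z) hk
      simpa [mul_assoc] using this
    have hval : ∀ z : G, h' z = if z ∈ a • (K : Set G) then 0 else h z := by
      intro z
      by_cases hz : z ∈ a • (K : Set G)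
      · simp [hh', Set.indicator_of_mem hz, hconst z hz, hz]
      · simp [hh', Set.indicator_of_notMem hz, hz]
    -- indicator is integrable
    have hindint : Integrable ((a • (K : Set G)).indicator (fun _ => h a)) μ := by
      rw [integrable_indicator_iff hmeas]
      apply (integrableOn_const_iff (by simp)).2
      right
      rw [hμaK]; exact ENNReal.one_lt_top
    have hint' : Integrable h' μ := hint.sub hindint
    have hsupp' : Function.support h' ⊆ ⋃ y ∈ s, y • (K : Set G) := by
      intro z hz
      rw [Function.mem_support] at hz
      rw [hval z] at hz
      by_cases hzK : z ∈ a • (K : Set G)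
      · simp [hzK] at hz
      · rw [if_neg hzK] at hz
        have := hsupp (Function.mem_support.2 hz)
        simp only [Set.mem_iUnion, Finset.mem_insert] at this ⊢
        obtain ⟨y, hy, hzy⟩ := this
        rcases hy with rfl | hy
        · exact absurd hzy hzK
        · exact ⟨y, hy, hzy⟩
    have hinv' : ∀ y : G, ∀ k ∈ K, h' (y * k) = h' y := by
      intro y k hk
      have hcos : y * k ∈ a • (K : Set G) ↔ y ∈ a • (K : Set G) := by
        rw [hmem, hmem]
        constructor
        · intro hmem1
          have : a⁻¹ * (y * k) * k⁻¹ ∈ K := K.mul_mem hmem1 (K.inv_mem hk)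
          simpa [mul_assoc] using this
        · intro hmem1
          have : a⁻¹ * y * k ∈ K := K.mul_mem hmem1 hk
          simpa [mul_assoc] using this
      rw [hval, hval, hinv y k hk]
      by_cases hy : y ∈ a • (K : Set G)
      · rw [if_pos (hcos.2 hy), if_pos hy]
      · rw [if_neg (fun hc => hy (hcos.1 hc)), if_neg hy]
    have hZ' : ∀ y : G, ∃ n : ℤ, h' y = (n : ℝ) := by
      intro y
      rw [hval]
      by_cases hy : y ∈ a • (K : Set G)
      · exact ⟨0, by simp [hy]⟩
      · rw [if_neg hy]; exact hZ y
    obtain ⟨m, hm⟩ := IH h' hint' hsupp' hinv' hZ'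
    obtain ⟨na, hna⟩ := hZ a
    refine ⟨m + na, ?_⟩
    have hsplit : (∫ y, h' y ∂μ)
        = (∫ y, h y ∂μ) - ∫ y, (a • (K : Set G)).indicator (fun _ => h a) y ∂μ :=
      integral_sub hint hindint
    rw [integral_indicator_const (h a) hmeas, measureReal_def, hμaK] at hsplit
    simp only [ENNReal.toReal_one, one_smul] at hsplit
    rw [hsplit, hna] at hm
    push_cast
    linarith

/-- let `G` be a locally compact Hausdorff topological group, `μ` a
left-invariant Haar measure on `G`, and `K` a compact open subgroup with
`μ K = 1`.  If `f, g : G → ℝ` are compactly supported, bi-`K`-invariant and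
`ℤ`-valued, then for every `x` the convolution integral
`(f * g) (x) = ∫ f y * g (y⁻¹ x) dμ y` exists and is `ℤ`-valued. -/
theorem convolution_intValued
    {G : Type*} [Group G] [TopologicalSpace G] [IsTopologicalGroup G]
    [LocallyCompactSpace G] [T2Space G] [MeasurableSpace G] [BorelSpace G]
    (μ : Measure G) [μ.IsHaarMeasure]
    (K : Subgroup G) (hKcpt : IsCompact (K : Set G)) (hKopen : IsOpen (K : Set G))
    (hK1 : μ (K : Set G) = 1)
    (f g : G → ℝ) (hf : HasCompactSupport f) (hg : HasCompactSupport g)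
    (hfK : ∀ k₁ ∈ K, ∀ k₂ ∈ K, ∀ x : G, f (k₁ * x * k₂) = f x)
    (hgK : ∀ k₁ ∈ K, ∀ k₂ ∈ K, ∀ x : G, g (k₁ * x * k₂) = g x)
    (hfZ : ∀ x : G, ∃ n : ℤ, f x = (n : ℝ))
    (hgZ : ∀ x : G, ∃ n : ℤ, g x = (n : ℝ))
    (x : G) :
    Integrable (fun y => f y * g (y⁻¹ * x)) μ ∧
      ∃ n : ℤ, (∫ y, f y * g (y⁻¹ * x) ∂μ) = (n : ℝ) := by
  set h : G → ℝ := fun y => f y * g (y⁻¹ * x) with hh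
  -- h is constant on left cosets y • K
  have hmem : ∀ a z : G, z ∈ a • (K : Set G) ↔ a⁻¹ * z ∈ K := by
    intro a z
    rw [Set.mem_smul_set_iff_inv_smul_mem]; rfl
  have hinv : ∀ y : G, ∀ k ∈ K, h (y * k) = h y := by
    intro y k hk
    have h1 : f (y * k) = f y := by
      have := hfK 1 K.one_mem k hk y
      simpa using this
    have h2 : g ((y * k)⁻¹ * x) = g (y⁻¹ * x) := by
      have := hgK k⁻¹ (K.inv_mem hk) 1 K.one_mem (y⁻¹ * x)
      simp only [mul_one] at this
      rw [mul_inv_rev]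
      rw [← this, mul_assoc]
    simp only [hh, h1, h2]
  -- h is locally constant, hence continuous
  have hlc : IsLocallyConstant h := by
    rw [IsLocallyConstant.iff_exists_open]
    intro y
    refine ⟨y • (K : Set G), hKopen.smul y, ?_, ?_⟩
    · rw [hmem]; simpa using K.one_mem
    · intro z hz
      have hk : y⁻¹ * z ∈ K := (hmem y z).1 hz
      have := hinv y (y⁻¹ * z) hk
      simpa [mul_assoc] using this
  have hcont : Continuous h := hlc.continuous
  -- compact support
  have hcs : HasCompactSupport h := by
    apply hf.mono
    intro z hz
    rw [Function.mem_support] at hz ⊢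
    intro hfz
    exact hz (by simp [hh, hfz])
  have hint : Integrable h μ := hcont.integrable_of_hasCompactSupport hcs
  refine ⟨hint, ?_⟩
  -- finite cover of the support by cosets
  obtain ⟨t, ht⟩ := hcs.elim_finite_subcover (fun y : G => y • (K : Set G))
    (fun y => hKopen.smul y)
    (fun z _ => Set.mem_iUnion.2 ⟨z, by rw [hmem]; simpa using K.one_mem⟩)
  have hsupp : Function.support h ⊆ ⋃ y ∈ t, y • (K : Set G) :=
    fun z hz => ht (subset_tsupport h hz)
  have hZ : ∀ y : G, ∃ n : ℤ, h y = (n : ℝ) := by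
    intro y
    obtain ⟨m, hm⟩ := hfZ y
    obtain ⟨n, hn⟩ := hgZ (y⁻¹ * x)
    exact ⟨m * n, by simp [hh, hm, hn]⟩
  exact intValued_integral_aux μ K hKopen hK1 t h hint hsupp hinv hZ
end

section
/- Let O be a discrete valuation ring with uniformizer π and fraction field F, and let Λ₁, Λ₂ be free O-modules of rank n. For every F-linear isomorphism β : F ⊗_O Λ₁ ≅ F ⊗_O Λ₂ there exist an O-basis (e₁, …, e_n) of Λ₁, an O-basis (f₁, …, f_n) of Λ₂, and integers m₁ ≥ m₂ ≥ ⋯ ≥ m_n such that β(1 ⊗ e_i) = π^{m_i}·(1 ⊗ f_i) for all i. Moreover, the sequence (m₁, …, m_n) is uniquely determined by β, independent of the choice of such bases. -/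
open scoped TensorProduct

set_option linter.unusedSectionVars false
set_option maxHeartbeats 800000

lemma aux_card_le_field {O K : Type*} [CommRing O] [Field K] (q : O →+* K) {n : ℕ}
    (A : Matrix (Fin n) (Fin n) O) (hA : IsUnit ((A.map q).det)) (S T : Finset (Fin n))
    (h : ∀ i j, i ∉ S → j ∈ T → q (A i j) = 0) : T.card ≤ S.card := by
  classical
  set Ab : Matrix (Fin n) (Fin n) K := A.map q with hAb
  have hinj : Function.Injective Ab.mulVec :=
    Matrix.mulVec_injective_iff_isUnit.mpr ((Matrix.isUnit_iff_isUnit_det Ab).mpr hA)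
  have hind : LinearIndependent K (fun j : T => fun i : S => Ab (i : Fin n) (j : Fin n)) := by
    rw [Fintype.linearIndependent_iff]
    intro c hc j
    set v : Fin n → K := fun j' => if hj : j' ∈ T then c ⟨j', hj⟩ else 0 with hv
    have hmv : Ab.mulVec v = 0 := by
      ext i
      have hsum : Ab.mulVec v i = ∑ j' ∈ T, Ab i j' * v j' := by
        rw [Matrix.mulVec, dotProduct]
        refine (Finset.sum_subset (Finset.subset_univ T) ?_).symm
        intro j' _ hj'
        simp [hv, hj']
      by_cases hi : i ∈ S
      · have := congrFun hc ⟨i, hi⟩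
        simp only [Finset.sum_apply, Pi.smul_apply, Pi.zero_apply, smul_eq_mul] at this
        rw [hsum]
        rw [← Finset.sum_attach T fun j' => Ab i j' * v j']
        rw [Pi.zero_apply, ← this]
        refine Finset.sum_congr rfl fun x _ => ?_
        simp [hv, x.2, mul_comm]
      · rw [hsum, Pi.zero_apply]
        refine Finset.sum_eq_zero fun j' hj' => ?_
        have : Ab i j' = 0 := h i j' hi hj'
        rw [this, zero_mul]
    have hv0 : v = 0 := hinj (by rw [hmv, Matrix.mulVec_zero])
    have := congrFun hv0 (j : Fin n)
    simpa [hv, j.2] using this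
  have := hind.fintype_card_le_finrank
  simpa [Module.finrank_pi] using this

lemma aux_antitone_le {n : ℕ} {m m' : Fin n → ℤ} (hm : Antitone m) (hm' : Antitone m')
    (h : ∀ t : ℤ, (Finset.univ.filter fun i => t ≤ m i).card ≤
        (Finset.univ.filter fun i => t ≤ m' i).card) :
    ∀ i, m i ≤ m' i := by
  classical
  intro i
  set t := m i with ht
  have h1 : Finset.Iic i ⊆ Finset.univ.filter fun j => t ≤ m j := by
    intro j hj
    simp only [Finset.mem_filter, Finset.mem_univ, true_and]
    exact hm (Finset.mem_Iic.mp hj)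
  have hcard1 : (i : ℕ) + 1 ≤ (Finset.univ.filter fun j => t ≤ m j).card := by
    calc (i : ℕ) + 1 = (Finset.Iic i).card := (Fin.card_Iic i).symm
    _ ≤ _ := Finset.card_le_card h1
  have hcard2 := le_trans hcard1 (h t)
  by_contra hlt
  push_neg at hlt
  have hsub : (Finset.univ.filter fun j => t ≤ m' j) ⊆ Finset.Iio i := by
    intro j hj
    simp only [Finset.mem_filter, Finset.mem_univ, true_and] at hj
    rw [Finset.mem_Iio]
    by_contra hji
    push_neg at hji
    exact absurd (le_trans hj (hm' hji)) (not_le.mpr hlt)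
  have := le_trans hcard2 (Finset.card_le_card hsub)
  rw [Fin.card_Iio] at this
  omega

lemma aux_antitone_eq {n : ℕ} {m m' : Fin n → ℤ} (hm : Antitone m) (hm' : Antitone m')
    (h : ∀ t : ℤ, (Finset.univ.filter fun i => t ≤ m i).card =
        (Finset.univ.filter fun i => t ≤ m' i).card) : m = m' := by
  funext i
  exact le_antisymm (aux_antitone_le hm hm' (fun t => (h t).le) i)
    (aux_antitone_le hm' hm (fun t => (h t).ge) i)

section
variable {O : Type*} [CommRing O] [IsDomain O] [IsDiscreteValuationRing O]
    {F : Type*} [Field F] [Algebra O F] [IsFractionRing O F]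
    {n : ℕ} {M : Type*} [AddCommGroup M] [Module O M]

lemma aux_one_tmul_repr (b : Module.Basis (Fin n) O M) (x : M) (i : Fin n) :
    (b.baseChange F).repr ((1:F) ⊗ₜ[O] x) i = algebraMap O F (b.repr x i) := by
  rw [Module.Basis.baseChange_repr_tmul, Algebra.algebraMap_eq_smul_one]

lemma aux_tmul_injective (b : Module.Basis (Fin n) O M) {x y : M}
    (h : (1:F) ⊗ₜ[O] x = (1:F) ⊗ₜ[O] y) : x = y := by
  apply b.repr.injective
  ext i
  have h2 := congrArg (fun z => (b.baseChange F).repr z i) h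
  simp only [aux_one_tmul_repr] at h2
  exact IsFractionRing.injective O F h2

lemma aux_one_tmul_sum (b : Module.Basis (Fin n) O M) (x : M) :
    (1:F) ⊗ₜ[O] x = ∑ i, algebraMap O F (b.repr x i) • ((1:F) ⊗ₜ[O] b i) := by
  conv_lhs => rw [← b.sum_repr x]
  rw [TensorProduct.tmul_sum]
  refine Finset.sum_congr rfl fun i _ => ?_
  rw [TensorProduct.tmul_smul, algebraMap_smul]

variable {π : O}

lemma aux_dvd (hπ : Irreducible π) {a b : O} {s t : ℤ} (hst : s < t)
    (h : algebraMap O F a * (algebraMap O F π) ^ s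
       = (algebraMap O F π) ^ t * algebraMap O F b) : π ∣ a := by
  have hπ0 : algebraMap O F π ≠ 0 :=
    (map_ne_zero_iff _ (IsFractionRing.injective O F)).mpr hπ.ne_zero
  have key : algebraMap O F a = (algebraMap O F π) ^ (t - s) * algebraMap O F b := by
    rw [zpow_sub₀ hπ0]
    rw [div_mul_eq_mul_div, eq_div_iff (zpow_ne_zero _ hπ0)]
    rw [h, mul_comm]
  set d := (t - s).toNat with hdd
  have hd : (d : ℤ) = t - s := Int.toNat_of_nonneg (by omega)
  have key2 : algebraMap O F a = algebraMap O F (π ^ d * b) := by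
    rw [map_mul, map_pow, ← zpow_natCast (algebraMap O F π) d, hd]
    exact key
  have := IsFractionRing.injective O F key2
  rw [this]
  exact dvd_mul_of_dvd_left (dvd_pow_self π (by omega)) b

lemma aux_exists_pow_mul (hπ : Irreducible π) (x : F) :
    ∃ (k : ℕ) (a : O), algebraMap O F a = (algebraMap O F π) ^ k * x := by
  obtain ⟨⟨a, s⟩, rfl⟩ := IsLocalization.mk'_surjective (nonZeroDivisors O) x
  have hs0 : (s : O) ≠ 0 := nonZeroDivisors.coe_ne_zero s
  obtain ⟨v, u, hu⟩ := IsDiscreteValuationRing.eq_unit_mul_pow_irreducible hs0 hπ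
  refine ⟨v, (↑u⁻¹ : O) * a, ?_⟩
  have hsF : algebraMap O F (s : O) ≠ 0 :=
    (map_ne_zero_iff _ (IsFractionRing.injective O F)).mpr hs0
  have hspec : IsLocalization.mk' F a s * algebraMap O F (s : O) = algebraMap O F a :=
    IsLocalization.mk'_spec F a s
  apply mul_right_cancel₀ hsF
  have hO : (↑u⁻¹ : O) * a * ↑s = π ^ v * a := by
    rw [hu, show (↑u⁻¹ : O) * a * (↑u * π ^ v) = ((↑u⁻¹ * ↑u : O)) * (a * π ^ v) by ring,
      Units.inv_mul, one_mul, mul_comm]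
  calc algebraMap O F ((↑u⁻¹ : O) * a) * algebraMap O F ↑s
      = algebraMap O F ((↑u⁻¹ : O) * a * ↑s) := (map_mul _ _ _).symm
    _ = algebraMap O F (π ^ v * a) := by rw [hO]
    _ = (algebraMap O F π) ^ v * algebraMap O F a := by rw [map_mul, map_pow]
    _ = (algebraMap O F π) ^ v * (IsLocalization.mk' F a s * algebraMap O F ↑s) := by rw [hspec]
    _ = (algebraMap O F π) ^ v * IsLocalization.mk' F a s * algebraMap O F ↑s := by ring

end

section
variable {O : Type*} [CommRing O] [IsDomain O] [IsDiscreteValuationRing O]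
    {F : Type*} [Field F] [Algebra O F] [IsFractionRing O F]
    {n : ℕ} {M₁ M₂ : Type*} [AddCommGroup M₁] [Module O M₁]
    [AddCommGroup M₂] [Module O M₂] {π : O}

lemma aux_matrix_rel (β : (F ⊗[O] M₁) ≃ₗ[F] (F ⊗[O] M₂))
    (e e' : Module.Basis (Fin n) O M₁) (f f' : Module.Basis (Fin n) O M₂) (m m' : Fin n → ℤ)
    (hrel : ∀ i, β ((1:F) ⊗ₜ[O] e i) = (algebraMap O F π) ^ (m i) • ((1:F) ⊗ₜ[O] f i))
    (hrel' : ∀ i, β ((1:F) ⊗ₜ[O] e' i) = (algebraMap O F π) ^ (m' i) • ((1:F) ⊗ₜ[O] f' i))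
    (i j : Fin n) :
    algebraMap O F (e.repr (e' j) i) * (algebraMap O F π) ^ (m i)
      = (algebraMap O F π) ^ (m' j) * algebraMap O F (f.repr (f' j) i) := by
  classical
  have h2 : β ((1:F) ⊗ₜ[O] e' j)
      = ∑ i', algebraMap O F (e.repr (e' j) i') •
          ((algebraMap O F π) ^ (m i') • ((1:F) ⊗ₜ[O] f i')) := by
    rw [aux_one_tmul_sum e (e' j), map_sum]
    refine Finset.sum_congr rfl fun i' _ => ?_
    rw [map_smul, hrel]
  have h3 : β ((1:F) ⊗ₜ[O] e' j)
      = (algebraMap O F π) ^ (m' j) • ∑ i', algebraMap O F (f.repr (f' j) i') •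
          ((1:F) ⊗ₜ[O] f i') := by
    rw [hrel' j, aux_one_tmul_sum f (f' j)]
  have h4 := congrArg (fun z => (f.baseChange F).repr z i) (h2.symm.trans h3)
  have hb : ∀ x : Fin n, (1:F) ⊗ₜ[O] f x = (f.baseChange F) x :=
    fun x => (Module.Basis.baseChange_apply F f x).symm
  simp only [hb, map_sum, map_smul, Module.Basis.repr_self, Finsupp.finset_sum_apply,
    Finsupp.smul_apply, smul_eq_mul, Finsupp.coe_smul, Finset.sum_apply, Pi.smul_apply,
    Finsupp.single_apply, mul_ite, mul_one, mul_zero, Finset.sum_ite_eq, Finset.sum_ite_eq',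
    Finset.mem_univ, if_true] at h4
  linear_combination h4

lemma aux_unique (hπ : Irreducible π) (β : (F ⊗[O] M₁) ≃ₗ[F] (F ⊗[O] M₂))
    (e e' : Module.Basis (Fin n) O M₁) (f f' : Module.Basis (Fin n) O M₂) (m m' : Fin n → ℤ)
    (hrel : ∀ i, β ((1:F) ⊗ₜ[O] e i) = (algebraMap O F π) ^ (m i) • ((1:F) ⊗ₜ[O] f i))
    (hrel' : ∀ i, β ((1:F) ⊗ₜ[O] e' i) = (algebraMap O F π) ^ (m' i) • ((1:F) ⊗ₜ[O] f' i))
    (hm : Antitone m) (hm' : Antitone m') : m = m' := by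
  classical
  haveI hmax : (Ideal.span {π} : Ideal O).IsMaximal :=
    hπ.maximalIdeal_eq ▸ (inferInstance : (IsLocalRing.maximalIdeal O).IsMaximal)
  letI : Field (O ⧸ Ideal.span {π}) := Ideal.Quotient.field _
  set q : O →+* O ⧸ Ideal.span {π} := Ideal.Quotient.mk _ with hqdef
  have hq0 : ∀ x : O, π ∣ x → q x = 0 := fun x hx => by
    rw [hqdef, Ideal.Quotient.eq_zero_iff_mem]
    exact Ideal.mem_span_singleton.mpr hx
  set A : Matrix (Fin n) (Fin n) O := e.toMatrix e' with hAdef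
  set B : Matrix (Fin n) (Fin n) O := f.toMatrix f' with hBdef
  have hAunit : IsUnit A.det := by
    apply IsUnit.of_mul_eq_one (e'.toMatrix e).det
    rw [← Matrix.det_mul, Module.Basis.toMatrix_mul_toMatrix_flip, Matrix.det_one]
  have hBunit : IsUnit B.det := by
    apply IsUnit.of_mul_eq_one (f'.toMatrix f).det
    rw [← Matrix.det_mul, Module.Basis.toMatrix_mul_toMatrix_flip, Matrix.det_one]
  have hAB : ∀ i j, algebraMap O F (A i j) * (algebraMap O F π) ^ (m i)
      = (algebraMap O F π) ^ (m' j) * algebraMap O F (B i j) := by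
    intro i j
    rw [hAdef, hBdef, Module.Basis.toMatrix_apply, Module.Basis.toMatrix_apply]
    exact aux_matrix_rel β e e' f f' m m' hrel hrel' i j
  apply aux_antitone_eq hm hm'
  intro t
  apply le_antisymm
  · -- card {t ≤ m} ≤ card {t ≤ m'} via Bᵀ
    refine aux_card_le_field q B.transpose ?_ _ _ ?_
    · have : (B.transpose.map q).det = q B.det := by
        rw [show B.transpose.map q = (q.mapMatrix B).transpose from rfl,
          Matrix.det_transpose, ← RingHom.map_det]
      rw [this]
      exact hBunit.map q
    · intro i j hi hj
      simp only [Finset.mem_filter, Finset.mem_univ, true_and, not_le] at hi hj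
      refine hq0 _ (aux_dvd (F := F) (b := A j i) hπ (lt_of_lt_of_le hi hj) ?_)
      rw [Matrix.transpose_apply]
      linear_combination (hAB j i).symm
  · -- card {t ≤ m'} ≤ card {t ≤ m} via A
    refine aux_card_le_field q A ?_ _ _ ?_
    · have : (A.map q).det = q A.det := by
        rw [show A.map q = q.mapMatrix A from rfl, ← RingHom.map_det]
      rw [this]
      exact hAunit.map q
    · intro i j hi hj
      simp only [Finset.mem_filter, Finset.mem_univ, true_and, not_le] at hi hj
      exact hq0 _ (aux_dvd (F := F) hπ (lt_of_lt_of_le hi hj) (hAB i j))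

end

/-- elementary divisors: let `O` be a discrete valuation ring with
uniformizer `π` and fraction field `F`, and let `M₁, M₂` be free `O`-modules of
rank `n` (witnessed by bases `b₁, b₂`).  For every `F`-linear isomorphism
`β : F ⊗_O M₁ ≃ F ⊗_O M₂` there exist bases `e` of `M₁`, `f` of `M₂` and a
weakly decreasing family of integers `m` with `β (1 ⊗ e i) = π^(m i) • (1 ⊗ f i)`
for all `i`; moreover `m` is uniquely determined by `β`. -/
theorem elementary_divisors
    (O : Type*) [CommRing O] [IsDomain O] [IsDiscreteValuationRing O]
    (π : O) (hπ : Irreducible π)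
    (F : Type*) [Field F] [Algebra O F] [IsFractionRing O F]
    (n : ℕ) (M₁ M₂ : Type*) [AddCommGroup M₁] [Module O M₁]
    [AddCommGroup M₂] [Module O M₂]
    (b₁ : Module.Basis (Fin n) O M₁) (b₂ : Module.Basis (Fin n) O M₂)
    (β : (F ⊗[O] M₁) ≃ₗ[F] (F ⊗[O] M₂)) :
    ∃! m : Fin n → ℤ, Antitone m ∧
      ∃ (e : Module.Basis (Fin n) O M₁) (f : Module.Basis (Fin n) O M₂),
        ∀ i : Fin n,
          β ((1 : F) ⊗ₜ[O] e i) = (algebraMap O F π) ^ (m i) • ((1 : F) ⊗ₜ[O] f i) := by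
  classical
  set πF : F := algebraMap O F π with hπFdef
  have hπF : πF ≠ 0 := (map_ne_zero_iff _ (IsFractionRing.injective O F)).mpr hπ.ne_zero
  -- Step 1: clear denominators
  set c : Fin n → Fin n → F := fun i j => (b₂.baseChange F).repr (β ((1:F) ⊗ₜ[O] b₁ i)) j
    with hcdef
  have hex : ∀ i j, ∃ (k : ℕ) (a : O), algebraMap O F a = πF ^ k * c i j :=
    fun i j => aux_exists_pow_mul hπ (c i j)
  choose k a ha using hex
  set K : ℕ := Finset.univ.sup fun p : Fin n × Fin n => k p.1 p.2 with hKdef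
  have hK : ∀ i j, ∃ a : O, algebraMap O F a = πF ^ K * c i j := by
    intro i j
    have hk : k i j ≤ K := Finset.le_sup (f := fun p : Fin n × Fin n => k p.1 p.2) (Finset.mem_univ (i, j))
    refine ⟨π ^ (K - k i j) * a i j, ?_⟩
    rw [map_mul, map_pow, ha, ← mul_assoc, ← hπFdef, ← pow_add]
    congr 2
    omega
  choose o ho using hK
  set y : Fin n → M₂ := fun i => ∑ j, o i j • b₂ j with hydef
  have hy : ∀ i, (1:F) ⊗ₜ[O] y i = (πF ^ K : F) • β ((1:F) ⊗ₜ[O] b₁ i) := by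
    intro i
    have h1 : (1:F) ⊗ₜ[O] y i = ∑ j, algebraMap O F (o i j) • ((1:F) ⊗ₜ[O] b₂ j) := by
      rw [hydef]
      simp only
      rw [TensorProduct.tmul_sum]
      exact Finset.sum_congr rfl fun j _ => by rw [TensorProduct.tmul_smul, algebraMap_smul]
    rw [h1]
    have hrepr : β ((1:F) ⊗ₜ[O] b₁ i) = ∑ j, c i j • ((1:F) ⊗ₜ[O] b₂ j) := by
      conv_lhs => rw [← (b₂.baseChange F).sum_repr (β ((1:F) ⊗ₜ[O] b₁ i))]
      exact Finset.sum_congr rfl fun j _ => by rw [Module.Basis.baseChange_apply]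
    rw [hrepr, Finset.smul_sum]
    exact Finset.sum_congr rfl fun j _ => by rw [ho, smul_smul]
  -- Step 2: the integral map ψ
  set ψ : M₁ →ₗ[O] M₂ := b₁.constr ℕ y with hψdef
  have hψb : ∀ i, ψ (b₁ i) = y i := fun i => b₁.constr_basis ℕ y i
  have key : ∀ x : M₁, (1:F) ⊗ₜ[O] (ψ x) = (πF ^ K : F) • β ((1:F) ⊗ₜ[O] x) := by
    set L₁ : M₁ →ₗ[O] F ⊗[O] M₂ := (TensorProduct.mk O F M₂ 1).comp ψ with hL₁
    set L₂ : M₁ →ₗ[O] F ⊗[O] M₂ :=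
      (((πF ^ K : F) • β.toLinearMap).restrictScalars O).comp
        ((TensorProduct.mk O F M₁) 1) with hL₂
    have hLL : L₁ = L₂ := by
      refine Module.Basis.ext b₁ fun i => ?_
      rw [hL₁, hL₂]
      simp only [LinearMap.comp_apply, TensorProduct.mk_apply,
        LinearMap.restrictScalars_apply, LinearMap.smul_apply, LinearEquiv.coe_toLinearMap]
      rw [hψb i]
      exact hy i
    intro x
    have := LinearMap.congr_fun hLL x
    simpa [hL₁, hL₂] using this
  have hψinj : Function.Injective ψ := by
    intro x x' hxx
    have h1 : (πF ^ K : F) • β ((1:F) ⊗ₜ[O] x) = (πF ^ K : F) • β ((1:F) ⊗ₜ[O] x') := by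
      rw [← key, ← key, hxx]
    have h2 := smul_right_injective (F ⊗[O] M₂) (pow_ne_zero K hπF) h1
    exact aux_tmul_injective b₁ (β.injective h2)
  -- Step 3: Smith normal form
  obtain ⟨n', snf⟩ := Submodule.smithNormalForm b₂ (LinearMap.range ψ)
  set equivN : M₁ ≃ₗ[O] LinearMap.range ψ := LinearEquiv.ofInjective ψ hψinj with heq
  have hn' : n' = n := by
    have := Module.Basis.indexEquiv (snf.bN.map equivN.symm) b₁
    simpa using Fintype.card_congr this
  subst n'
  set σ : Equiv.Perm (Fin n) :=
    Equiv.ofBijective snf.f (Finite.injective_iff_bijective.mp snf.f.injective) with hσ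
  have hσf : ∀ i, σ i = snf.f i := fun i => rfl
  set e0 : Module.Basis (Fin n) O M₁ := snf.bN.map equivN.symm with he0
  have hψe0 : ∀ i, ψ (e0 i) = (snf.bN i : M₂) := by
    intro i
    have h1 : (↑(equivN (equivN.symm (snf.bN i))) : M₂) = ψ (equivN.symm (snf.bN i)) := by
      rw [heq]
      exact LinearEquiv.ofInjective_apply ψ _
    rw [LinearEquiv.apply_symm_apply] at h1
    rw [he0]
    simp only [Module.Basis.map_apply]
    exact h1.symm
  have ha0 : ∀ i, snf.a i ≠ 0 := by
    intro i h0
    have hs := snf.snf i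
    rw [h0, zero_smul] at hs
    exact (snf.bN.ne_zero i) (ZeroMemClass.coe_eq_zero.mp hs)
  choose v u huv using fun i => IsDiscreteValuationRing.eq_unit_mul_pow_irreducible (ha0 i) hπ
  set f0 : Module.Basis (Fin n) O M₂ := (snf.bM.reindex σ.symm).unitsSMul u with hf0def
  have hf0 : ∀ i, f0 i = (u i : O) • snf.bM (snf.f i) := by
    intro i
    rw [hf0def, Module.Basis.unitsSMul_apply, Module.Basis.reindex_apply, Equiv.symm_symm, hσf, Units.smul_def]
  set m0 : Fin n → ℤ := fun i => (v i : ℤ) - K with hm0def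
  have claim : ∀ i, β ((1:F) ⊗ₜ[O] e0 i) = πF ^ (m0 i) • ((1:F) ⊗ₜ[O] f0 i) := by
    intro i
    have h1 := key (e0 i)
    rw [hψe0 i, snf.snf i, huv i] at h1
    have h2 : (1:F) ⊗ₜ[O] (((u i : O) * π ^ v i) • snf.bM (snf.f i))
        = (πF ^ (v i) : F) • ((1:F) ⊗ₜ[O] f0 i) := by
      rw [hf0 i, show ((u i : O) * π ^ v i) = π ^ v i * (u i : O) from mul_comm _ _,
        mul_smul, TensorProduct.tmul_smul,
        ← algebraMap_smul F (π ^ v i) ((1:F) ⊗ₜ[O] ((u i : O) • snf.bM (snf.f i))),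
        map_pow, hπFdef]
    have h3 := h1.symm.trans h2
    have hK0 : (πF ^ K : F) ≠ 0 := pow_ne_zero _ hπF
    apply smul_right_injective (F ⊗[O] M₂) hK0
    show πF ^ K • β ((1:F) ⊗ₜ[O] e0 i) = πF ^ K • (πF ^ (m0 i) • ((1:F) ⊗ₜ[O] f0 i))
    rw [h3, smul_smul]
    congr 1
    rw [← zpow_natCast πF (v i), ← zpow_natCast πF K, ← zpow_add₀ hπF]
    congr 1
    simp only [hm0def]
    omega
  set τ : Equiv.Perm (Fin n) := Tuple.sort (fun i => -(m0 i)) with hτdef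
  have hτ : Antitone (fun i => m0 (τ i)) := by
    intro p q hpq
    have h5 := Tuple.monotone_sort (fun i => -(m0 i)) hpq
    simp only [Function.comp_apply, ← hτdef, neg_le_neg_iff] at h5
    exact h5
  have hfin : ∀ i : Fin n, β ((1:F) ⊗ₜ[O] (e0.reindex τ.symm) i)
      = πF ^ (m0 (τ i)) • ((1:F) ⊗ₜ[O] (f0.reindex τ.symm) i) := by
    intro i
    simpa [Module.Basis.reindex_apply] using claim (τ i)
  refine ⟨fun i => m0 (τ i), ⟨hτ, e0.reindex τ.symm, f0.reindex τ.symm, hfin⟩, ?_⟩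
  rintro m' ⟨hm', e', f', hrel'⟩
  exact aux_unique hπ β e' (e0.reindex τ.symm) f' (f0.reindex τ.symm) m' (fun i => m0 (τ i))
    hrel' hfin hm' hτ
end

section
/- Let O be a discrete valuation ring with uniformizer π and fraction field F. Every g ∈ GL_n(F) can be written as g = k₁·diag(π^{m₁}, …, π^{m_n})·k₂ where k₁, k₂ ∈ GL_n(F) have all entries, as well as all entries of their inverses, in O, and m₁ ≥ m₂ ≥ ⋯ ≥ m_n are integers; moreover, the weakly decreasing tuple (m₁, …, m_n) is uniquely determined by g. Equivalently, the double coset space GL_n(O)\GL_n(F)/GL_n(O) is in bijection with the set of weakly decreasing n-tuples of integers. -/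
set_option linter.unusedSectionVars false


open Matrix

/-- All entries of `g` and of `g⁻¹` lie in (the image of) `O`;
this identifies `GL_n(O)` inside `GL_n(F)`. -/
def entriesInO (O : Type*) [CommRing O] (F : Type*) [Field F] [Algebra O F]
    (n : ℕ) (g : GL (Fin n) F) : Prop :=
  (∀ i j, (g : Matrix (Fin n) (Fin n) F) i j ∈ Set.range (algebraMap O F)) ∧
  (∀ i j, ((g⁻¹ : GL (Fin n) F) : Matrix (Fin n) (Fin n) F) i j ∈
    Set.range (algebraMap O F))

namespace CartanAux

variable {O : Type*} [CommRing O] [IsDomain O] [IsDiscreteValuationRing O]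
variable {F : Type*} [Field F] [Algebra O F] [IsFractionRing O F]
variable {n : ℕ}

lemma finj : Function.Injective (algebraMap O F) := IsFractionRing.injective O F

lemma exists_lift (A : Matrix (Fin n) (Fin n) F)
    (h : ∀ i j, A i j ∈ Set.range (algebraMap O F)) :
    ∃ B : Matrix (Fin n) (Fin n) O, B.map (algebraMap O F) = A := by
  choose B hB using h
  exact ⟨Matrix.of B, by ext i j; exact hB i j⟩

/-- Build an element of `GL_n(F)` from a matrix over `O` with explicit two-sided inverse. -/
def glO (B C : Matrix (Fin n) (Fin n) O) (h1 : B * C = 1) (h2 : C * B = 1) :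
    GL (Fin n) F :=
  ⟨B.map (algebraMap O F), C.map (algebraMap O F),
    by rw [← Matrix.map_mul, h1, Matrix.map_one _ (map_zero _) (map_one _)],
    by rw [← Matrix.map_mul, h2, Matrix.map_one _ (map_zero _) (map_one _)]⟩

@[simp] lemma glO_coe (B C : Matrix (Fin n) (Fin n) O) (h1 : B * C = 1) (h2 : C * B = 1) :
    ((glO (F := F) B C h1 h2 : GL (Fin n) F) : Matrix (Fin n) (Fin n) F)
      = B.map (algebraMap O F) := rfl

lemma glO_entries (B C : Matrix (Fin n) (Fin n) O) (h1 : B * C = 1) (h2 : C * B = 1) :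
    entriesInO O F n (glO (F := F) B C h1 h2) :=
  ⟨fun i j => ⟨B i j, rfl⟩, fun i j => ⟨C i j, rfl⟩⟩

lemma entriesInO_one : entriesInO O F n 1 := by
  constructor <;> intro i j <;>
    exact ⟨if i = j then 1 else 0, by simp [Matrix.one_apply, apply_ite]⟩

lemma entriesInO_mul {g h : GL (Fin n) F} (hg : entriesInO O F n g)
    (hh : entriesInO O F n h) : entriesInO O F n (g * h) := by
  have key : ∀ (a b : GL (Fin n) F), (∀ i j, (a : Matrix (Fin n) (Fin n) F) i j ∈
      Set.range (algebraMap O F)) → (∀ i j, (b : Matrix (Fin n) (Fin n) F) i j ∈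
      Set.range (algebraMap O F)) → ∀ i j,
      ((a * b : GL (Fin n) F) : Matrix (Fin n) (Fin n) F) i j ∈
        Set.range (algebraMap O F) := by
    intro a b ha hb i j
    rw [Units.val_mul, Matrix.mul_apply]
    rw [← RingHom.coe_range (algebraMap O F)]
    refine Subring.sum_mem _ fun k _ => Subring.mul_mem _ ?_ ?_
    · exact ha i k
    · exact hb k j
  refine ⟨key g h hg.1 hh.1, ?_⟩
  have : (g * h)⁻¹ = h⁻¹ * g⁻¹ := by rw [_root_.mul_inv_rev]
  rw [this]
  exact key h⁻¹ g⁻¹ hh.2 hg.2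

lemma entriesInO_inv {g : GL (Fin n) F} (hg : entriesInO O F n g) :
    entriesInO O F n g⁻¹ := ⟨hg.2, by rw [inv_inv]; exact hg.1⟩

section Count

variable {π : O}

lemma fpi_ne_zero (hπ : Irreducible π) : algebraMap O F π ≠ 0 := fun h =>
  hπ.ne_zero (finj (h.trans (map_zero (algebraMap O F)).symm))

/-- Key counting inequality for uniqueness:  if
`π^{m i} * U i j = W i j * π^{m' j}` with `U` invertible over `O`,
then for every `t` there are at least as many `i` with `t ≤ m i` as
`j` with `t ≤ m' j`. -/
lemma count_le (hπ : Irreducible π) (m m' : Fin n → ℤ)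
    (U W : Matrix (Fin n) (Fin n) O) (hU : IsUnit U.det)
    (hrel : ∀ i j, (algebraMap O F π) ^ (m i) * algebraMap O F (U i j)
      = algebraMap O F (W i j) * (algebraMap O F π) ^ (m' j)) (t : ℤ) :
    (Finset.univ.filter fun j => t ≤ m' j).card
      ≤ (Finset.univ.filter fun i => t ≤ m i).card := by
  classical
  by_contra hlt
  push_neg at hlt
  set S := Finset.univ.filter fun j => t ≤ m' j with hS
  set T := Finset.univ.filter fun i => t ≤ m i with hT
  -- divisibility of entries
  have hdvd : ∀ i j, t ≤ m' j → ¬ t ≤ m i → π ∣ U i j := by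
    intro i j hj hi
    have hfπ : algebraMap O F π ≠ 0 := fpi_ne_zero hπ
    have he : (1 : ℤ) ≤ m' j - m i := by omega
    set e : ℕ := (m' j - m i).toNat with hedef
    have hee : (e : ℤ) = m' j - m i := Int.toNat_of_nonneg (by omega)
    have : algebraMap O F (U i j) = algebraMap O F (W i j * π ^ e) := by
      have h0 := hrel i j
      have hz2 : (algebraMap O F π) ^ (m i) * (algebraMap O F π) ^ (m' j - m i)
          = (algebraMap O F π) ^ (m' j) := by
        rw [← zpow_add₀ hfπ]; congr 1; omega
      have : algebraMap O F (U i j)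
          = algebraMap O F (W i j) * (algebraMap O F π) ^ (m' j - m i) := by
        refine mul_left_cancel₀ (zpow_ne_zero (m i) hfπ) ?_
        rw [h0, ← hz2]; ring
      rw [this, _root_.map_mul, map_pow, ← hee, zpow_natCast]
    have hUW : U i j = W i j * π ^ e := finj this
    have hpe : π ∣ π ^ e := dvd_pow_self π (by omega)
    exact hUW ▸ Dvd.dvd.mul_left hpe (W i j)
  -- π divides det U
  have hdet : π ∣ U.det := by
    rw [Matrix.det_apply]
    refine Finset.dvd_sum fun σ _ => ?_
    have : ∃ j ∈ S, σ j ∉ T := by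
      by_contra hcon
      push_neg at hcon
      have : S.card ≤ T.card := by
        have himg : S.image σ ⊆ T := by
          intro x hx
          obtain ⟨j, hj, rfl⟩ := Finset.mem_image.mp hx
          exact hcon j hj
        calc S.card = (S.image σ).card := (Finset.card_image_of_injective S σ.injective).symm
        _ ≤ T.card := Finset.card_le_card himg
      omega
    obtain ⟨j, hjS, hjT⟩ := this
    have hj' : t ≤ m' j := by simpa [hS] using hjS
    have hi' : ¬ t ≤ m (σ j) := by simpa [hT] using hjT
    have h1 : π ∣ ∏ i, U (σ i) i :=
      dvd_trans (hdvd (σ j) j hj' hi') (Finset.dvd_prod_of_mem _ (Finset.mem_univ j))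
    have : (Equiv.Perm.sign σ : ℤ) • ∏ i, U (σ i) i
        = ((Equiv.Perm.sign σ : ℤ) : O) * ∏ i, U (σ i) i := zsmul_eq_mul _ _
    rw [Units.smul_def, this]
    exact Dvd.dvd.mul_left h1 _
  exact hπ.not_isUnit (isUnit_of_dvd_unit hdet hU)

/-- A weakly decreasing tuple is determined by its counting function. -/
lemma antitone_eq_of_counts (m m' : Fin n → ℤ) (hm : Antitone m) (hm' : Antitone m')
    (h : ∀ t : ℤ, (Finset.univ.filter fun i => t ≤ m i).card
      = (Finset.univ.filter fun i => t ≤ m' i).card) : m = m' := by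
  classical
  have key : ∀ (f : Fin n → ℤ), Antitone f → ∀ (t : ℤ) (j : Fin n),
      (t ≤ f j ↔ (j : ℕ) < (Finset.univ.filter fun i => t ≤ f i).card) := by
    intro f hf t j
    constructor
    · intro hj
      have hsub : Finset.Iic j ⊆ Finset.univ.filter fun i => t ≤ f i := by
        intro i hi
        simp only [Finset.mem_filter, Finset.mem_univ, true_and]
        exact le_trans hj (hf (Finset.mem_Iic.mp hi))
      calc (j : ℕ) < (j : ℕ) + 1 := Nat.lt_succ_self _
      _ = (Finset.Iic j).card := (Fin.card_Iic j).symm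
      _ ≤ _ := Finset.card_le_card hsub
    · intro hcard
      by_contra hj
      have hsub : (Finset.univ.filter fun i => t ≤ f i) ⊆ Finset.Iio j := by
        intro i hi
        simp only [Finset.mem_filter, Finset.mem_univ, true_and] at hi
        rw [Finset.mem_Iio]
        by_contra hij
        push_neg at hij
        exact hj (le_trans hi (hf hij))
      have : (Finset.univ.filter fun i => t ≤ f i).card ≤ (j : ℕ) := by
        calc _ ≤ (Finset.Iio j).card := Finset.card_le_card hsub
        _ = (j : ℕ) := by rw [Fin.card_Iio]
      omega
  funext j
  have h1 : m j ≤ m' j := by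
    have := (key m hm (m j) j).mp le_rfl
    rw [h (m j)] at this
    exact (key m' hm' (m j) j).mpr this
  have h2 : m' j ≤ m j := by
    have := (key m' hm' (m' j) j).mp le_rfl
    rw [← h (m' j)] at this
    exact (key m hm (m' j) j).mpr this
  omega

end Count


lemma snf_matrix (A : Matrix (Fin n) (Fin n) O) (hA : A.det ≠ 0) :
    ∃ P P' Q Q' : Matrix (Fin n) (Fin n) O, ∃ d : Fin n → O,
      P * P' = 1 ∧ P' * P = 1 ∧ Q * Q' = 1 ∧ Q' * Q = 1 ∧ A = P * diagonal d * Q := by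
  classical
  let b : Module.Basis (Fin n) O (Fin n → O) := Pi.basisFun O (Fin n)
  let ℓ : (Fin n → O) →ₗ[O] (Fin n → O) := A.mulVecLin
  have hker : ∀ v, A *ᵥ v = 0 → v = 0 := by
    intro v hv
    by_contra h
    exact hA (Matrix.exists_mulVec_eq_zero_iff.mp ⟨v, h, hv⟩)
  have hinj : Function.Injective ℓ := by
    rw [← LinearMap.ker_eq_bot]
    exact LinearMap.ker_eq_bot'.mpr fun v hv => hker v hv
  set N := LinearMap.range ℓ with hN
  obtain ⟨n', snf⟩ := N.smithNormalForm b
  obtain ⟨bM, bN, φ, a, hsnf⟩ := snf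
  let e : (Fin n → O) ≃ₗ[O] N := LinearEquiv.ofInjective ℓ hinj
  let bC : Module.Basis (Fin n) O N := b.map e
  have hcard : n' = n := by
    have := Fintype.card_congr (bC.indexEquiv bN)
    simpa using this.symm
  have hbijφ : Function.Bijective φ :=
    (Fintype.bijective_iff_injective_and_card φ).mpr ⟨φ.injective, by simp [hcard]⟩
  let ρ : Fin n' ≃ Fin n := Equiv.ofBijective φ hbijφ
  let c : Module.Basis (Fin n) O N := bN.reindex ρ
  let d : Fin n → O := fun j => a (ρ.symm j)
  have hρ : ∀ j, φ (ρ.symm j) = j := fun j => ρ.apply_symm_apply j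
  have hc : ∀ j, ((c j : Fin n → O)) = d j • (bM j : Fin n → O) := by
    intro j
    rw [Module.Basis.reindex_apply, hsnf (ρ.symm j), hρ j]
  let P : Matrix (Fin n) (Fin n) O := b.toMatrix bM
  let Q : Matrix (Fin n) (Fin n) O := c.toMatrix bC
  have hPinv : Invertible P := b.invertibleToMatrix bM
  have hQinv : Invertible Q := c.invertibleToMatrix bC
  refine ⟨P, ⅟P, Q, ⅟Q, d, mul_invOf_self P, invOf_mul_self P, mul_invOf_self Q,
    invOf_mul_self Q, ?_⟩
  ext k j
  have h2 := c.sum_toMatrix_smul_self (fun i => bC i) j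
  have h3 : ∑ i, Q i j * ((c i : Fin n → O) k) = ((bC j : Fin n → O)) k := by
    have h2' := congrArg (fun (x : N) => (x : Fin n → O) k) h2
    rw [← h2', AddSubmonoidClass.coe_finset_sum, Finset.sum_apply]
    refine Finset.sum_congr rfl fun i _ => ?_
    rw [SetLike.val_smul, Pi.smul_apply, smul_eq_mul]
  have hPk : ∀ k i, P k i = (bM i : Fin n → O) k := by
    intro k i
    simp [P, Module.Basis.toMatrix_apply, b, Pi.basisFun_repr]
  have hbCj : ((bC j : Fin n → O)) k = A k j := by
    simp only [bC, Module.Basis.map_apply]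
    rw [LinearEquiv.ofInjective_apply]
    simp [ℓ, b, Matrix.mulVecLin_apply, Pi.basisFun_apply, Matrix.mulVec_single]
  calc A k j = ∑ i, Q i j * ((c i : Fin n → O) k) := by rw [h3, hbCj]
  _ = ∑ i, (P * diagonal d) k i * Q i j := by
      refine Finset.sum_congr rfl fun i _ => ?_
      rw [Matrix.mul_diagonal, hc i, Pi.smul_apply, smul_eq_mul, hPk k i]
      ring
  _ = (P * diagonal d * Q) k j := (Matrix.mul_apply).symm


section Perm

lemma permMat_mul {α : Type*} [Semiring α] (σ : Equiv.Perm (Fin n)) :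
    (σ.toPEquiv.toMatrix : Matrix (Fin n) (Fin n) α) * (σ.symm.toPEquiv.toMatrix) = 1 := by
  rw [← PEquiv.toMatrix_trans, ← Equiv.toPEquiv_trans]
  simp

lemma permMat_map (σ : Equiv.Perm (Fin n)) :
    ((σ.toPEquiv.toMatrix : Matrix (Fin n) (Fin n) O)).map (algebraMap O F)
      = (σ.toPEquiv.toMatrix : Matrix (Fin n) (Fin n) F) := by
  ext i j
  rw [Matrix.map_apply, PEquiv.toMatrix_apply, PEquiv.toMatrix_apply]
  split <;> simp

lemma perm_diag (σ : Equiv.Perm (Fin n)) (dv : Fin n → F) :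
    (σ.toPEquiv.toMatrix : Matrix (Fin n) (Fin n) F) * diagonal dv * (σ.symm.toPEquiv.toMatrix)
      = diagonal (fun i => dv (σ i)) := by
  rw [PEquiv.toMatrix_toPEquiv_mul, PEquiv.mul_toMatrix_toPEquiv, Equiv.symm_symm]
  ext i j
  simp only [Matrix.submatrix_apply, id_eq, Matrix.diagonal_apply, σ.injective.eq_iff]

end Perm

section Decomp

variable {π : O}

lemma exists_decomp_raw (hπ : Irreducible π) (g : GL (Fin n) F) :
    ∃ m : Fin n → ℤ, ∃ k₁ k₂ : GL (Fin n) F, entriesInO O F n k₁ ∧ entriesInO O F n k₂ ∧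
      (g : Matrix (Fin n) (Fin n) F)
        = (k₁ : Matrix (Fin n) (Fin n) F) *
            diagonal (fun i => (algebraMap O F π) ^ (m i)) *
            (k₂ : Matrix (Fin n) (Fin n) F) := by
  classical
  have hfπ : algebraMap O F π ≠ 0 := fpi_ne_zero hπ
  obtain ⟨b0, hb0⟩ := IsLocalization.exist_integer_multiples_of_finset (nonZeroDivisors O)
    (Finset.univ.image fun p : Fin n × Fin n => (g : Matrix (Fin n) (Fin n) F) p.1 p.2)
  have hb0ne : (b0 : O) ≠ 0 := nonZeroDivisors.ne_zero b0.2
  obtain ⟨N, u, hu⟩ := IsDiscreteValuationRing.eq_unit_mul_pow_irreducible hb0ne hπ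
  have hent : ∀ i j, (algebraMap O F π) ^ N * (g : Matrix (Fin n) (Fin n) F) i j
      ∈ Set.range (algebraMap O F) := by
    intro i j
    obtain ⟨c, hc⟩ := hb0 _ (Finset.mem_image.mpr ⟨(i, j), Finset.mem_univ _, rfl⟩)
    refine ⟨((u⁻¹ : Oˣ) : O) * c, ?_⟩
    have huu : ((u⁻¹ : Oˣ) : O) * (b0 : O) = π ^ N := by
      rw [hu, ← mul_assoc, Units.inv_mul, one_mul]
    calc algebraMap O F (((u⁻¹ : Oˣ) : O) * c)
        = algebraMap O F ((u⁻¹ : Oˣ) : O) * algebraMap O F c := _root_.map_mul _ _ _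
      _ = algebraMap O F ((u⁻¹ : Oˣ) : O)
            * ((b0 : O) • (g : Matrix (Fin n) (Fin n) F) i j) := by rw [hc]
      _ = (algebraMap O F (((u⁻¹ : Oˣ) : O) * (b0 : O)))
            * (g : Matrix (Fin n) (Fin n) F) i j := by
          rw [Algebra.smul_def, _root_.map_mul]; ring
      _ = (algebraMap O F π) ^ N * (g : Matrix (Fin n) (Fin n) F) i j := by
          rw [huu, map_pow]
  obtain ⟨A, hA⟩ := exists_lift ((algebraMap O F π) ^ N • (g : Matrix (Fin n) (Fin n) F))
    (fun i j => by rw [Matrix.smul_apply, smul_eq_mul]; exact hent i j)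
  have hdetg : (g : Matrix (Fin n) (Fin n) F).det ≠ 0 :=
    ((Matrix.isUnit_iff_isUnit_det _).mp g.isUnit).ne_zero
  have hAdet : A.det ≠ 0 := by
    intro h0
    have h1 : (A.map (algebraMap O F)).det = 0 := by
      have h2 : ((algebraMap O F).mapMatrix A).det = algebraMap O F A.det :=
        (RingHom.map_det _ _).symm
      rw [RingHom.mapMatrix_apply] at h2
      rw [h2, h0, map_zero]
    rw [hA, Matrix.det_smul] at h1
    exact (mul_ne_zero (pow_ne_zero _ (pow_ne_zero _ hfπ)) hdetg) h1
  obtain ⟨P, P', Q, Q', d, hPP', hP'P, hQQ', hQ'Q, hAPQ⟩ := snf_matrix A hAdet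
  have hd : ∀ i, d i ≠ 0 := by
    intro i hdi
    apply hAdet
    rw [hAPQ, Matrix.det_mul, Matrix.det_mul, Matrix.det_diagonal]
    rw [Finset.prod_eq_zero (Finset.mem_univ i) hdi]
    ring
  choose e v hv using fun i => IsDiscreteValuationRing.eq_unit_mul_pow_irreducible (hd i) hπ
  set Dv : Matrix (Fin n) (Fin n) O := diagonal fun i => ((v i : Oˣ) : O) with hDvdef
  set Dv' : Matrix (Fin n) (Fin n) O := diagonal fun i => (((v i)⁻¹ : Oˣ) : O) with hDv'def
  have hDv1 : Dv * Dv' = 1 := by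
    rw [hDvdef, hDv'def, Matrix.diagonal_mul_diagonal]
    convert Matrix.diagonal_one
    rw [Units.mul_inv]
  have hDv2 : Dv' * Dv = 1 := by
    rw [hDvdef, hDv'def, Matrix.diagonal_mul_diagonal]
    convert Matrix.diagonal_one
    rw [Units.inv_mul]
  have h1 : (P * Dv) * (Dv' * P') = 1 := by
    rw [mul_assoc, ← mul_assoc Dv, hDv1, one_mul, hPP']
  have h2 : (Dv' * P') * (P * Dv) = 1 := by
    rw [mul_assoc, ← mul_assoc P', hP'P, one_mul, hDv2]
  refine ⟨fun i => (e i : ℤ) - N, glO (P * Dv) (Dv' * P') h1 h2, glO Q Q' hQQ' hQ'Q,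
    glO_entries _ _ _ _, glO_entries _ _ _ _, ?_⟩
  rw [glO_coe, glO_coe]
  have hg : (g : Matrix (Fin n) (Fin n) F)
      = ((algebraMap O F π) ^ N)⁻¹ • (A.map (algebraMap O F)) := by
    rw [hA, smul_smul, inv_mul_cancel₀ (pow_ne_zero _ hfπ), one_smul]
  have hdiagmap : (diagonal d).map (algebraMap O F)
      = (Dv.map (algebraMap O F)) * diagonal (fun i => (algebraMap O F π) ^ (e i)) := by
    have harg : (fun i => algebraMap O F (d i))
        = fun i => algebraMap O F ((v i : Oˣ) : O) * (algebraMap O F π) ^ (e i) := by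
      funext i
      rw [hv i, _root_.map_mul, map_pow]
    rw [hDvdef, Matrix.diagonal_map (map_zero _), Matrix.diagonal_map (map_zero _),
      Matrix.diagonal_mul_diagonal, harg]
  have hmid : ((algebraMap O F π) ^ N)⁻¹
        • (diagonal (fun i => (algebraMap O F π) ^ (e i)) : Matrix (Fin n) (Fin n) F)
      = diagonal fun i => (algebraMap O F π) ^ ((e i : ℤ) - N) := by
    ext i j
    rw [Matrix.smul_apply]
    by_cases hij : i = j
    · subst hij
      rw [Matrix.diagonal_apply_eq, Matrix.diagonal_apply_eq, smul_eq_mul,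
        zpow_sub₀ hfπ, zpow_natCast, zpow_natCast]
      field_simp
    · rw [Matrix.diagonal_apply_ne _ hij, Matrix.diagonal_apply_ne _ hij, smul_zero]
  rw [hg, hAPQ, Matrix.map_mul, Matrix.map_mul, hdiagmap, Matrix.map_mul, ← hmid]
  rw [Matrix.mul_smul, Matrix.smul_mul]
  congr 1
  rw [← mul_assoc]

lemma exists_decomp (hπ : Irreducible π) (g : GL (Fin n) F) :
    ∃ m : Fin n → ℤ, Antitone m ∧ ∃ k₁ k₂ : GL (Fin n) F,
      entriesInO O F n k₁ ∧ entriesInO O F n k₂ ∧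
      (g : Matrix (Fin n) (Fin n) F)
        = (k₁ : Matrix (Fin n) (Fin n) F) *
            diagonal (fun i => (algebraMap O F π) ^ (m i)) *
            (k₂ : Matrix (Fin n) (Fin n) F) := by
  classical
  obtain ⟨m₀, k₁, k₂, hk₁, hk₂, hg⟩ := exists_decomp_raw hπ g
  set σ : Equiv.Perm (Fin n) := Fin.revPerm.trans (Tuple.sort m₀) with hσdef
  have hanti : Antitone (fun i => m₀ (σ i)) := by
    intro i j hij
    have hmono := Tuple.monotone_sort m₀
    have hrev : Fin.rev j ≤ Fin.rev i := Fin.rev_le_rev.mpr hij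
    exact hmono hrev
  have hp1 : (σ.symm.toPEquiv.toMatrix : Matrix (Fin n) (Fin n) O)
      * (σ.toPEquiv.toMatrix) = 1 := by
    have := permMat_mul (α := O) (n := n) σ.symm
    rwa [Equiv.symm_symm] at this
  have hp2 : (σ.toPEquiv.toMatrix : Matrix (Fin n) (Fin n) O)
      * (σ.symm.toPEquiv.toMatrix) = 1 := permMat_mul σ
  have hdiag : (σ.symm.toPEquiv.toMatrix : Matrix (Fin n) (Fin n) F)
        * diagonal (fun i => (algebraMap O F π) ^ (m₀ (σ i)))
        * (σ.toPEquiv.toMatrix : Matrix (Fin n) (Fin n) F)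
      = diagonal (fun i => (algebraMap O F π) ^ (m₀ i)) := by
    have := perm_diag σ.symm (fun i => (algebraMap O F π) ^ (m₀ (σ i)))
    rw [Equiv.symm_symm] at this
    rw [this]
    exact congrArg Matrix.diagonal (funext fun i => by rw [Equiv.apply_symm_apply])
  refine ⟨fun i => m₀ (σ i), hanti,
    k₁ * glO σ.symm.toPEquiv.toMatrix σ.toPEquiv.toMatrix hp1 hp2,
    glO σ.toPEquiv.toMatrix σ.symm.toPEquiv.toMatrix hp2 hp1 * k₂,
    entriesInO_mul hk₁ (glO_entries _ _ _ _),
    entriesInO_mul (glO_entries _ _ _ _) hk₂, ?_⟩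
  rw [Units.val_mul, Units.val_mul, glO_coe, glO_coe, permMat_map, permMat_map]
  rw [hg]
  rw [← hdiag]
  rw [← mul_assoc, ← mul_assoc, ← mul_assoc]

lemma unique_m (hπ : Irreducible π) {m m' : Fin n → ℤ} (hm : Antitone m) (hm' : Antitone m')
    (a b : GL (Fin n) F) (ha : entriesInO O F n a) (hb : entriesInO O F n b)
    (h : diagonal (fun i => (algebraMap O F π) ^ (m' i))
      = (a : Matrix (Fin n) (Fin n) F) * diagonal (fun i => (algebraMap O F π) ^ (m i))
        * (b : Matrix (Fin n) (Fin n) F)) :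
    m' = m := by
  classical
  have main : ∀ (mm mm' : Fin n → ℤ) (a b : GL (Fin n) F),
      entriesInO O F n a → entriesInO O F n b →
      diagonal (fun i => (algebraMap O F π) ^ (mm' i))
        = (a : Matrix (Fin n) (Fin n) F) * diagonal (fun i => (algebraMap O F π) ^ (mm i))
          * (b : Matrix (Fin n) (Fin n) F) →
      ∀ t : ℤ, (Finset.univ.filter fun j => t ≤ mm' j).card
        ≤ (Finset.univ.filter fun i => t ≤ mm i).card := by
    intro mm mm' a b ha hb heq t
    obtain ⟨U, hU⟩ := exists_lift _ hb.1
    obtain ⟨U', hU'⟩ := exists_lift _ hb.2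
    obtain ⟨W, hW⟩ := exists_lift _ ha.2
    have hUdet : IsUnit U.det := by
      have hmap : (U * U').map (algebraMap O F)
          = (1 : Matrix (Fin n) (Fin n) O).map (algebraMap O F) := by
        rw [Matrix.map_mul, hU, hU', Matrix.map_one _ (map_zero _) (map_one _)]
        exact b.mul_inv
      have h1 : U * U' = 1 := by
        apply Matrix.ext
        intro i j
        have h2 := congrArg (fun M : Matrix (Fin n) (Fin n) F => M i j) hmap
        simp only [Matrix.map_apply] at h2
        exact finj h2
      have h3 : U.det * U'.det = 1 := by rw [← Matrix.det_mul, h1, Matrix.det_one]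
      exact IsUnit.of_mul_eq_one _ h3
    have hrel : ∀ i j, (algebraMap O F π) ^ (mm i) * algebraMap O F (U i j)
        = algebraMap O F (W i j) * (algebraMap O F π) ^ (mm' j) := by
      have h2 : ((a⁻¹ : GL (Fin n) F) : Matrix (Fin n) (Fin n) F)
            * diagonal (fun i => (algebraMap O F π) ^ (mm' i))
          = diagonal (fun i => (algebraMap O F π) ^ (mm i))
            * (b : Matrix (Fin n) (Fin n) F) := by
        rw [heq, ← mul_assoc, ← mul_assoc, a.inv_mul, one_mul]
      intro i j
      have h3 := congrArg (fun M : Matrix (Fin n) (Fin n) F => M i j) h2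
      simp only [Matrix.mul_diagonal, Matrix.diagonal_mul] at h3
      have hbU : (b : Matrix (Fin n) (Fin n) F) i j = algebraMap O F (U i j) := by
        rw [← hU]; rfl
      have haW : ((a⁻¹ : GL (Fin n) F) : Matrix (Fin n) (Fin n) F) i j
          = algebraMap O F (W i j) := by
        rw [← hW]; rfl
      rw [← hbU, ← haW]
      exact h3.symm
    exact count_le hπ mm mm' U W hUdet hrel t
  have h1 := main m m' a b ha hb h
  have h2 : ∀ t : ℤ, (Finset.univ.filter fun j => t ≤ m j).card
      ≤ (Finset.univ.filter fun i => t ≤ m' i).card := by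
    refine main m' m a⁻¹ b⁻¹ (entriesInO_inv ha) (entriesInO_inv hb) ?_
    rw [h, ← mul_assoc, ← mul_assoc, a.inv_mul, one_mul, mul_assoc, b.mul_inv, mul_one]
  exact antitone_eq_of_counts m' m hm' hm (fun t => le_antisymm (h1 t) (h2 t))

lemma diag_unit (hπ : Irreducible π) (m : Fin n → ℤ) :
    (diagonal fun i => (algebraMap O F π) ^ m i : Matrix (Fin n) (Fin n) F)
      * (diagonal fun i => (algebraMap O F π) ^ (-m i)) = 1 := by
  rw [Matrix.diagonal_mul_diagonal]
  convert Matrix.diagonal_one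
  rw [_root_.zpow_neg, mul_inv_cancel₀ (zpow_ne_zero _ (fpi_ne_zero hπ))]

/-- The diagonal matrix `diag(π^{m_1},…,π^{m_n})` as an element of `GL_n(F)`. -/
def diagGL (hπ : Irreducible π) (m : Fin n → ℤ) : GL (Fin n) F :=
  ⟨diagonal fun i => (algebraMap O F π) ^ m i,
   diagonal fun i => (algebraMap O F π) ^ (-m i),
   diag_unit hπ m, by
     have := diag_unit (F := F) hπ (fun i => -m i)
     simpa using this⟩

end Decomp

end CartanAux

/-- Cartan decomposition for `GL_n`: every `g ∈ GL_n(F)` can be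
written as `g = k₁ · diag(π^{m₁}, …, π^{m_n}) · k₂` with `k₁, k₂ ∈ GL_n(O)` and
`m₁ ≥ ⋯ ≥ m_n` integers, and the weakly decreasing tuple `m` is uniquely
determined by `g`; equivalently, the double coset space
`GL_n(O)\GL_n(F)/GL_n(O)` is in bijection with the weakly decreasing tuples. -/
theorem cartan_decomposition_GL
    (O : Type*) [CommRing O] [IsDomain O] [IsDiscreteValuationRing O]
    (π : O) (hπ : Irreducible π)
    (F : Type*) [Field F] [Algebra O F] [IsFractionRing O F]
    (n : ℕ) :
    (∀ g : GL (Fin n) F,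
      ∃! m : Fin n → ℤ, Antitone m ∧
        ∃ k₁ k₂ : GL (Fin n) F, entriesInO O F n k₁ ∧ entriesInO O F n k₂ ∧
          (g : Matrix (Fin n) (Fin n) F)
            = (k₁ : Matrix (Fin n) (Fin n) F) *
                Matrix.diagonal (fun i => (algebraMap O F π) ^ (m i)) *
                (k₂ : Matrix (Fin n) (Fin n) F)) ∧
    (∃ e : Quot (fun g g' : GL (Fin n) F =>
          ∃ k₁ k₂ : GL (Fin n) F, entriesInO O F n k₁ ∧ entriesInO O F n k₂ ∧
            g' = k₁ * g * k₂) ≃ {m : Fin n → ℤ // Antitone m},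
      ∀ (g : GL (Fin n) F) (m : Fin n → ℤ),
        (Antitone m ∧
          ∃ k₁ k₂ : GL (Fin n) F, entriesInO O F n k₁ ∧ entriesInO O F n k₂ ∧
            (g : Matrix (Fin n) (Fin n) F)
              = (k₁ : Matrix (Fin n) (Fin n) F) *
                  Matrix.diagonal (fun i => (algebraMap O F π) ^ (m i)) *
                  (k₂ : Matrix (Fin n) (Fin n) F)) →
        (e (Quot.mk _ g) : Fin n → ℤ) = m) := by
  classical
  have part1 : ∀ g : GL (Fin n) F,
      ∃! m : Fin n → ℤ, Antitone m ∧
        ∃ k₁ k₂ : GL (Fin n) F, entriesInO O F n k₁ ∧ entriesInO O F n k₂ ∧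
          (g : Matrix (Fin n) (Fin n) F)
            = (k₁ : Matrix (Fin n) (Fin n) F) *
                Matrix.diagonal (fun i => (algebraMap O F π) ^ (m i)) *
                (k₂ : Matrix (Fin n) (Fin n) F) := by
    intro g
    obtain ⟨m, hm, k₁, k₂, h1, h2, hg⟩ := CartanAux.exists_decomp hπ g
    refine ⟨m, ⟨hm, k₁, k₂, h1, h2, hg⟩, ?_⟩
    rintro m' ⟨hm', k₁', k₂', h1', h2', hg'⟩
    refine CartanAux.unique_m hπ hm hm' (k₁'⁻¹ * k₁) (k₂ * k₂'⁻¹)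
      (CartanAux.entriesInO_mul (CartanAux.entriesInO_inv h1') h1)
      (CartanAux.entriesInO_mul h2 (CartanAux.entriesInO_inv h2')) ?_
    have hR : ((k₁'⁻¹ : GL (Fin n) F) : Matrix (Fin n) (Fin n) F)
          * (g : Matrix (Fin n) (Fin n) F)
          * ((k₂'⁻¹ : GL (Fin n) F) : Matrix (Fin n) (Fin n) F)
        = Matrix.diagonal (fun i => (algebraMap O F π) ^ (m' i)) := by
      rw [hg', ← mul_assoc, ← mul_assoc, Units.inv_mul, one_mul, mul_assoc,
        Units.mul_inv, mul_one]
    rw [← hR, hg, Units.val_mul, Units.val_mul]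
    simp only [mul_assoc]
  refine ⟨part1, ?_⟩
  set P : GL (Fin n) F → (Fin n → ℤ) → Prop := fun g m => Antitone m ∧
        ∃ k₁ k₂ : GL (Fin n) F, entriesInO O F n k₁ ∧ entriesInO O F n k₂ ∧
          (g : Matrix (Fin n) (Fin n) F)
            = (k₁ : Matrix (Fin n) (Fin n) F) *
                Matrix.diagonal (fun i => (algebraMap O F π) ^ (m i)) *
                (k₂ : Matrix (Fin n) (Fin n) F) with hP
  have hmfun : ∀ g, P g ((part1 g).choose) := fun g => (part1 g).choose_spec.1
  have huniq : ∀ g m, P g m → m = (part1 g).choose := fun g m h => (part1 g).choose_spec.2 m h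
  set Φ : GL (Fin n) F → {m : Fin n → ℤ // Antitone m} :=
    fun g => ⟨(part1 g).choose, (hmfun g).1⟩ with hΦ
  have hsound : ∀ g g' : GL (Fin n) F,
      (∃ k₁ k₂ : GL (Fin n) F, entriesInO O F n k₁ ∧ entriesInO O F n k₂ ∧
        g' = k₁ * g * k₂) → Φ g = Φ g' := by
    rintro g g' ⟨k₁, k₂, h1, h2, rfl⟩
    obtain ⟨ha, a1, a2, hA1, hA2, hgeq⟩ := hmfun g
    have hnew : P (k₁ * g * k₂) ((part1 g).choose) := by
      refine ⟨ha, k₁ * a1, a2 * k₂, CartanAux.entriesInO_mul h1 hA1,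
        CartanAux.entriesInO_mul hA2 h2, ?_⟩
      simp only [Units.val_mul, hgeq, mul_assoc]
    have := huniq _ _ hnew
    exact Subtype.ext this
  refine ⟨Equiv.ofBijective (Quot.lift Φ hsound) ⟨?_, ?_⟩, ?_⟩
  · -- injective
    intro x y h
    obtain ⟨g, rfl⟩ := Quot.exists_rep x
    obtain ⟨g', rfl⟩ := Quot.exists_rep y
    have hmeq : (part1 g).choose = (part1 g').choose := congrArg Subtype.val h
    obtain ⟨ha, a1, a2, hA1, hA2, hg1⟩ := hmfun g
    obtain ⟨hb, b1, b2, hB1, hB2, hg2⟩ := hmfun g'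
    have key : g' = (b1 * a1⁻¹) * g * (a2⁻¹ * b2) := by
      apply Units.ext
      rw [Units.val_mul, Units.val_mul, Units.val_mul, hg2, hg1, ← hmeq]
      simp only [Units.val_mul, mul_assoc, Units.inv_mul_cancel_left, Units.mul_inv_cancel_left]
    exact Quot.sound ⟨b1 * a1⁻¹, a2⁻¹ * b2,
      CartanAux.entriesInO_mul hB1 (CartanAux.entriesInO_inv hA1),
      CartanAux.entriesInO_mul (CartanAux.entriesInO_inv hA2) hB2, key⟩
  · -- surjective
    rintro ⟨m, hm⟩
    refine ⟨Quot.mk _ (CartanAux.diagGL hπ m), ?_⟩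
    have hPd : P (CartanAux.diagGL hπ m) m := by
      refine ⟨hm, 1, 1, CartanAux.entriesInO_one, CartanAux.entriesInO_one, ?_⟩
      simp only [Units.val_one, one_mul, mul_one]
      rfl
    have := huniq _ _ hPd
    exact Subtype.ext this.symm
  · -- compatibility
    intro g m hPm
    show (Φ g : Fin n → ℤ) = m
    exact (huniq g m hPm).symm
end

section
/- Let G be a group, K ≤ G a subgroup, and σ : G → G a group endomorphism with σ(K) ⊆ K. Define two actions of K × K on G × G by (k₁,k₂)·(g₁,g₂) := (k₁g₁k₂⁻¹, σ(k₂)g₂k₂⁻¹) (the first action) and (k₁,k₂)·(h₁,h₂) := (σ(k₁)h₁k₂⁻¹, k₂h₂k₁⁻¹) (the second action). Then the map φ : G×G → G×G given by φ(g₁,g₂) := (g₂g₁⁻¹, g₁) is a bijection satisfying φ((k₁,k₂)·x) = (k₂,k₁)·φ(x) for all (k₁,k₂) ∈ K×K and x ∈ G×G (where the left-hand side uses the first action and the right-hand side the second); consequently φ induces a bijection between the orbit sets of the two actions. Moreover, writing φ(g₁,g₂) = (h₁,h₂), one has σ(h₂)h₁ = σ(g₁)g₂g₁⁻¹ and h₁h₂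 = g₂. -/
variable {G : Type*} [Group G] (K : Subgroup G) (σ : G →* G)

/-- The first action of `K × K` on `G × G`:
`(k₁,k₂)·(g₁,g₂) := (k₁ g₁ k₂⁻¹, σ(k₂) g₂ k₂⁻¹)`. -/
def act₁ (p : K × K) (x : G × G) : G × G :=
  ((p.1 : G) * x.1 * (p.2 : G)⁻¹, σ (p.2 : G) * x.2 * (p.2 : G)⁻¹)

/-- The second action of `K × K` on `G × G`:
`(k₁,k₂)·(h₁,h₂) := (σ(k₁) h₁ k₂⁻¹, k₂ h₂ k₁⁻¹)`. -/
def act₂ (p : K × K) (x : G × G) : G × G :=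
  (σ (p.1 : G) * x.1 * (p.2 : G)⁻¹, (p.2 : G) * x.2 * (p.1 : G)⁻¹)

/-- The twisting map `φ(g₁,g₂) := (g₂ g₁⁻¹, g₁)`. -/
def twistMap (x : G × G) : G × G := (x.2 * x.1⁻¹, x.1)

/-- The inverse of `twistMap`. -/
def untwistMap {G : Type*} [Group G] (x : G × G) : G × G := (x.2, x.1 * x.2)

lemma twist_untwist {G : Type*} [Group G] (x : G × G) :
    twistMap (untwistMap x) = x := by
  simp [twistMap, untwistMap, mul_assoc]

lemma untwist_twist {G : Type*} [Group G] (x : G × G) :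
    untwistMap (twistMap x) = x := by
  simp [twistMap, untwistMap]

lemma twist_equiv (p : K × K) (x : G × G) :
    twistMap (act₁ K σ p x) = act₂ K σ (p.2, p.1) (twistMap x) := by
  simp only [twistMap, act₁, act₂, Prod.mk.injEq, mul_inv_rev, inv_inv]
  constructor <;> group

lemma untwist_equiv (p : K × K) (x : G × G) :
    untwistMap (act₂ K σ p x) = act₁ K σ (p.2, p.1) (untwistMap x) := by
  simp only [untwistMap, act₁, act₂, Prod.mk.injEq]
  constructor <;> group

/-- `φ(g₁,g₂) = (g₂g₁⁻¹, g₁)` is a bijection intertwining the two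
twisted `K × K`-actions on `G × G` (up to swapping the factors of `K × K`);
consequently it induces a bijection between the two orbit sets.  Moreover,
writing `(h₁,h₂) = φ(g₁,g₂)`, one has `σ(h₂)h₁ = σ(g₁)g₂g₁⁻¹` and `h₁h₂ = g₂`. -/
theorem twistMap_equivariant_bijection (hσ : ∀ k ∈ K, σ k ∈ K) :
    Function.Bijective (twistMap (G := G)) ∧
    (∀ (p : K × K) (x : G × G),
      twistMap (act₁ K σ p x) = act₂ K σ (p.2, p.1) (twistMap x)) ∧
    (∃ e : Quot (fun x y : G × G => ∃ p : K × K, act₁ K σ p x = y) ≃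
        Quot (fun x y : G × G => ∃ p : K × K, act₂ K σ p x = y),
      ∀ x : G × G, e (Quot.mk _ x) = Quot.mk _ (twistMap x)) ∧
    (∀ g₁ g₂ : G,
      σ ((twistMap (g₁, g₂)).2) * (twistMap (g₁, g₂)).1 = σ g₁ * g₂ * g₁⁻¹ ∧
      (twistMap (g₁, g₂)).1 * (twistMap (g₁, g₂)).2 = g₂) := by
  refine ⟨⟨?_, ?_⟩, twist_equiv K σ, ?_, ?_⟩
  · intro x y h
    have := congrArg untwistMap h
    rwa [untwist_twist, untwist_twist] at this
  · intro y; exact ⟨untwistMap y, twist_untwist y⟩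
  · refine ⟨{
      toFun := Quot.lift (fun x => Quot.mk _ (twistMap x)) ?_
      invFun := Quot.lift (fun x => Quot.mk _ (untwistMap x)) ?_
      left_inv := ?_
      right_inv := ?_ }, fun x => rfl⟩
    · rintro x y ⟨p, rfl⟩
      exact Quot.sound ⟨(p.2, p.1), (twist_equiv K σ p x).symm⟩
    · rintro x y ⟨p, rfl⟩
      exact Quot.sound ⟨(p.2, p.1), (untwist_equiv K σ p x).symm⟩
    · intro q; induction q using Quot.ind with
      | _ x => simp [untwist_twist]
    · intro q; induction q using Quot.ind with
      | _ x => simp [twist_untwist]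
  · intro g₁ g₂
    simp [twistMap, mul_assoc]
end
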